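/- arXiv:2012.15235 — 7 statements merged into one kernel-verified Lean document; each statement's English description precedes it below -/
import Mathlib

section
/- Let p: G̃ → G be a free double cover of finite graphs determined by a spanning tree T and subset S of complementary edges, and let G' ⊆ G be a connected subgraph. Then the preimage p^{-1}(G') is connected if and only if there exists a cycle in G' containing an odd number of edges from S. -/
set_option maxHeartbeats 1000000

attribute [local instance 10] Classical.propDecidable

/-- A finite multigraph: finite sets of vertices and (oriented) edges with
source and target maps. Loops and multiple edges are allowed. -/
structure Multigraph where
  V : Type
  E : Type
  [fintV : Fintype V]
  [fintE : Fintype E]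
  [decV : DecidableEq V]
  [decE : DecidableEq E]
  s : E → V
  t : E → V

attribute [instance] Multigraph.fintV Multigraph.fintE Multigraph.decV Multigraph.decE

namespace Multigraph

/-- Two vertices are adjacent through an edge belonging to the set `E'`. -/
def adjOn (G : Multigraph) (E' : Set G.E) (v w : G.V) : Prop :=
  ∃ e ∈ E', (G.s e = v ∧ G.t e = w)

/-- A multigraph is connected if it has a vertex and any two vertices are joined
by a chain of edges. -/
def Connected (G : Multigraph) : Prop :=
  Nonempty G.V ∧ ∀ v w : G.V, Relation.EqvGen (G.adjOn Set.univ) v w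

/-- The genus (first Betti number) `|E| - |V| + 1` of a graph. -/
def genus (G : Multigraph) : ℤ :=
  (Fintype.card G.E : ℤ) - (Fintype.card G.V : ℤ) + 1

/-- The boundary of an integral 1-chain. -/
def bdry (G : Multigraph) (γ : G.E → ℤ) (v : G.V) : ℤ :=
  ∑ e : G.E, γ e * ((if G.t e = v then 1 else 0) - (if G.s e = v then 1 else 0))

/-- The setoid on vertices whose classes are the connected components of the
graph obtained by deleting the edges in `F` (keeping all vertices). -/
def compSetoid (G : Multigraph) (F : Set G.E) : Setoid G.V :=
  Relation.EqvGen.setoid (G.adjOn {e | e ∉ F})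

end Multigraph

/-- A free double cover of multigraphs: a degree two covering space, encoded
together with its deck involution `ι`; fibers of `p` are exactly the pairs
`{x, ι x}`. -/
structure FreeDoubleCover (H G : Multigraph) where
  pV : H.V → G.V
  pE : H.E → G.E
  ιV : H.V → H.V
  ιE : H.E → H.E
  s_comm : ∀ f, G.s (pE f) = pV (H.s f)
  t_comm : ∀ f, G.t (pE f) = pV (H.t f)
  ιV_s : ∀ f, H.s (ιE f) = ιV (H.s f)
  ιV_t : ∀ f, H.t (ιE f) = ιV (H.t f)
  pV_ι : ∀ x, pV (ιV x) = pV x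
  pE_ι : ∀ f, pE (ιE f) = pE f
  ιV_ne : ∀ x, ιV x ≠ x
  ιE_ne : ∀ f, ιE f ≠ f
  ιV_inv : ∀ x, ιV (ιV x) = x
  ιE_inv : ∀ f, ιE (ιE f) = f
  pV_surj : Function.Surjective pV
  pE_surj : Function.Surjective pE
  fiberV : ∀ x y, pV x = pV y → y = x ∨ y = ιV x
  fiberE : ∀ f g', pE f = pE g' → g' = f ∨ g' = ιE f

namespace FreeDoubleCover

variable {H G : Multigraph}

/-- The norm (pushforward) of a divisor on the source of a double cover. -/
def nmDiv (c : FreeDoubleCover H G) (D : H.V → ℤ) : G.V → ℤ :=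
  fun v => ∑ w ∈ Finset.univ.filter (fun w => c.pV w = v), D w

/-- Pushforward of 1-chains. -/
def pushCh (c : FreeDoubleCover H G) (γ : H.E → ℤ) : G.E → ℤ :=
  fun e => ∑ f ∈ Finset.univ.filter (fun f => c.pE f = e), γ f

end FreeDoubleCover

/-- The free double cover `c` is the one determined (via the standard
construction) by the edge subset `S`: there is a two-valued sheet labeling `σ`
of the vertices of the source which is opposite on the two points of each
vertex fiber, and an edge of the source crosses between the sheets exactly
when its image lies in `S`. -/
def IsCoverWithSign {H G : Multigraph} (c : FreeDoubleCover H G)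
    (σ : H.V → Bool) (S : Finset G.E) : Prop :=
  (∀ x : H.V, σ (c.ιV x) = !σ x) ∧
  (∀ f : H.E, c.pE f ∈ S ↔ σ (H.s f) ≠ σ (H.t f))

/-- `(V', E')` is a connected subgraph of `G`. -/
def Multigraph.IsConnSubgraph (G : Multigraph) (V' : Set G.V) (E' : Set G.E) : Prop :=
  (∀ e ∈ E', G.s e ∈ V' ∧ G.t e ∈ V') ∧ V'.Nonempty ∧
    ∀ v ∈ V', ∀ w ∈ V', Relation.EqvGen (G.adjOn E') v w

section Aux

open Multigraph Relation Finset

variable {H G : Multigraph} (c : FreeDoubleCover H G)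

/-- Lift an edge at a prescribed source vertex. -/
lemma lift_edge_s (e : G.E) (x : H.V) (hx : c.pV x = G.s e) :
    ∃ f, c.pE f = e ∧ H.s f = x := by
  obtain ⟨f, hf⟩ := c.pE_surj e
  have h1 : c.pV (H.s f) = c.pV x := by rw [hx, ← hf, c.s_comm]
  rcases c.fiberV (H.s f) x h1 with h | h
  · exact ⟨f, hf, h.symm⟩
  · exact ⟨c.ιE f, by rw [c.pE_ι, hf], by rw [c.ιV_s, ← h]⟩

/-- Lift an edge at a prescribed target vertex. -/
lemma lift_edge_t (e : G.E) (y : H.V) (hy : c.pV y = G.t e) :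
    ∃ f, c.pE f = e ∧ H.t f = y := by
  obtain ⟨f, hf⟩ := c.pE_surj e
  have h1 : c.pV (H.t f) = c.pV y := by rw [hy, ← hf, c.t_comm]
  rcases c.fiberV (H.t f) y h1 with h | h
  · exact ⟨f, hf, h.symm⟩
  · exact ⟨c.ιE f, by rw [c.pE_ι, hf], by rw [c.ιV_t, ← h]⟩

/-- Walks in the base lift to walks in the cover, starting at any prescribed
point of the fiber (in both directions). -/
lemma lift_walk (E' : Set G.E) {v w : G.V}
    (h : Relation.EqvGen (G.adjOn E') v w) :
    (∀ x, c.pV x = v → ∃ y, c.pV y = w ∧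
        Relation.EqvGen (H.adjOn (c.pE ⁻¹' E')) x y) ∧
    (∀ y, c.pV y = w → ∃ x, c.pV x = v ∧
        Relation.EqvGen (H.adjOn (c.pE ⁻¹' E')) x y) := by
  induction h with
  | rel a b hab =>
    obtain ⟨e, he, hs, ht⟩ := hab
    constructor
    · intro x hx
      obtain ⟨f, hf, hsf⟩ := lift_edge_s c e x (by rw [hx, hs])
      refine ⟨H.t f, by rw [← c.t_comm, hf, ht], EqvGen.rel _ _ ⟨f, ?_, hsf, rfl⟩⟩
      simpa [Set.mem_preimage, hf] using he
    · intro y hy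
      obtain ⟨f, hf, htf⟩ := lift_edge_t c e y (by rw [hy, ht])
      refine ⟨H.s f, by rw [← c.s_comm, hf, hs], EqvGen.rel _ _ ⟨f, ?_, rfl, htf⟩⟩
      simpa [Set.mem_preimage, hf] using he
  | refl a => exact ⟨fun x hx => ⟨x, hx, EqvGen.refl x⟩, fun x hx => ⟨x, hx, EqvGen.refl x⟩⟩
  | symm a b _ ih =>
    refine ⟨fun x hx => ?_, fun y hy => ?_⟩
    · obtain ⟨x', hx', hR⟩ := ih.2 x hx
      exact ⟨x', hx', EqvGen.symm _ _ hR⟩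
    · obtain ⟨z, hz, hR⟩ := ih.1 y hy
      exact ⟨z, hz, EqvGen.symm _ _ hR⟩
  | trans a b d _ _ ih1 ih2 =>
    refine ⟨fun x hx => ?_, fun z hz => ?_⟩
    · obtain ⟨y, hy, h1⟩ := ih1.1 x hx
      obtain ⟨z, hz, h2⟩ := ih2.1 y hy
      exact ⟨z, hz, EqvGen.trans _ _ _ h1 h2⟩
    · obtain ⟨y, hy, h2⟩ := ih2.2 z hz
      obtain ⟨x, hx, h1⟩ := ih1.2 y hy
      exact ⟨x, hx, EqvGen.trans _ _ _ h1 h2⟩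

/-- The deck transformation maps walks to walks. -/
lemma walk_iota (E' : Set G.E) {a b : H.V}
    (h : Relation.EqvGen (H.adjOn (c.pE ⁻¹' E')) a b) :
    Relation.EqvGen (H.adjOn (c.pE ⁻¹' E')) (c.ιV a) (c.ιV b) := by
  induction h with
  | rel a b hab =>
    obtain ⟨f, hf, hs, ht⟩ := hab
    refine EqvGen.rel _ _ ⟨c.ιE f, ?_, by rw [c.ιV_s, hs], by rw [c.ιV_t, ht]⟩
    simpa [Set.mem_preimage, c.pE_ι] using hf
  | refl a => exact EqvGen.refl _
  | symm a b _ ih => exact EqvGen.symm _ _ ih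
  | trans a b d _ _ ih1 ih2 => exact EqvGen.trans _ _ _ ih1 ih2

private lemma zmod_symm_helper (a b : Bool) :
    -(if a = b then (0 : ZMod 2) else 1) = if b = a then 0 else 1 := by
  cases a <;> cases b <;> decide

private lemma zmod_trans_helper (a b d : Bool) :
    ((if a = b then (0 : ZMod 2) else 1) + if b = d then 0 else 1) =
      if a = d then 0 else 1 := by
  cases a <;> cases b <;> cases d <;> decide

/-- From a walk in a graph, produce a 1-chain with boundary the difference of
the endpoints, supported on the used edges, and with the parity of its total
weight on the "sign-flipping" edges recording whether the signs of the
endpoints agree. -/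
lemma chain_of_walk {K : Multigraph} (E'' : Set K.E) (Q : K.E → Prop)
    (σ : K.V → Bool) (hQ : ∀ f, Q f ↔ σ (K.s f) ≠ σ (K.t f))
    {x y : K.V} (h : Relation.EqvGen (K.adjOn E'') x y) :
    ∃ δ : K.E → ℤ, (∀ f, f ∉ E'' → δ f = 0) ∧
      (∀ z, K.bdry δ z = (if z = y then 1 else 0) - (if z = x then 1 else 0)) ∧
      ((∑ f ∈ Finset.univ.filter Q, δ f : ℤ) : ZMod 2) =
        (if σ x = σ y then 0 else 1) := by
  induction h with
  | rel a b hab =>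
    obtain ⟨f, hf, hs, ht⟩ := hab
    refine ⟨fun g => if g = f then 1 else 0, ?_, ?_, ?_⟩
    · intro g hg
      by_cases hgf : g = f
      · exact absurd (hgf ▸ hf) hg
      · simp [hgf]
    · intro z
      unfold Multigraph.bdry
      rw [Finset.sum_eq_single f]
      · simp [← hs, ← ht, eq_comm]
      · intro g _ hgf; simp [hgf]
      · intro hfu; exact absurd (Finset.mem_univ f) hfu
    · rw [Finset.sum_ite_eq' (Finset.univ.filter Q) f (fun _ => (1 : ℤ))]
      by_cases hq : Q f
      · have : σ a ≠ σ b := by rw [← hs, ← ht]; exact (hQ f).1 hq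
        simp [hq, this]
      · have : σ a = σ b := by
          rw [← hs, ← ht]; by_contra hne; exact hq ((hQ f).2 hne)
        simp [hq, this]
  | refl a =>
    exact ⟨0, fun _ _ => rfl, fun z => by simp [Multigraph.bdry], by simp⟩
  | symm a b _ ih =>
    obtain ⟨δ, hsupp, hbd, hpar⟩ := ih
    refine ⟨fun f => -δ f, fun f hf => by simp [hsupp f hf], ?_, ?_⟩
    · intro z
      have : K.bdry (fun f => -δ f) z = -K.bdry δ z := by
        unfold Multigraph.bdry; rw [← Finset.sum_neg_distrib]
        exact Finset.sum_congr rfl fun g _ => by ring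
      rw [this, hbd z]; ring
    · have hns : (∑ f ∈ Finset.univ.filter Q, (fun f => -δ f) f : ℤ) =
          -(∑ f ∈ Finset.univ.filter Q, δ f) := by
        simp
      rw [hns, Int.cast_neg, hpar, zmod_symm_helper]
  | trans a b d _ _ ih1 ih2 =>
    obtain ⟨δ1, hsupp1, hbd1, hpar1⟩ := ih1
    obtain ⟨δ2, hsupp2, hbd2, hpar2⟩ := ih2
    refine ⟨fun f => δ1 f + δ2 f, fun f hf => by simp [hsupp1 f hf, hsupp2 f hf], ?_, ?_⟩
    · intro z
      have : K.bdry (fun f => δ1 f + δ2 f) z = K.bdry δ1 z + K.bdry δ2 z := by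
        unfold Multigraph.bdry; rw [← Finset.sum_add_distrib]
        exact Finset.sum_congr rfl fun g _ => by ring
      rw [this, hbd1 z, hbd2 z]; ring
    · have hns : (∑ f ∈ Finset.univ.filter Q, (fun f => δ1 f + δ2 f) f : ℤ) =
          (∑ f ∈ Finset.univ.filter Q, δ1 f) + ∑ f ∈ Finset.univ.filter Q, δ2 f :=
        Finset.sum_add_distrib
      rw [hns, Int.cast_add, hpar1, hpar2, zmod_trans_helper]

end Aux


lemma bdry_push {H G : Multigraph} (c : FreeDoubleCover H G) (δ : H.E → ℤ) (v : G.V) :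
    G.bdry (c.pushCh δ) v =
      ∑ z ∈ Finset.univ.filter (fun z => c.pV z = v), H.bdry δ z := by
  have L : G.bdry (c.pushCh δ) v =
      ∑ f : H.E, δ f * ((if c.pV (H.t f) = v then 1 else 0) -
        (if c.pV (H.s f) = v then 1 else 0)) := by
    unfold Multigraph.bdry FreeDoubleCover.pushCh
    rw [← Finset.sum_fiberwise Finset.univ c.pE
      (fun f => δ f * ((if c.pV (H.t f) = v then (1:ℤ) else 0) -
        (if c.pV (H.s f) = v then 1 else 0)))]
    refine Finset.sum_congr rfl fun e _ => ?_
    rw [Finset.sum_mul]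
    refine Finset.sum_congr rfl fun f hf => ?_
    have hfe : c.pE f = e := (Finset.mem_filter.mp hf).2
    rw [← hfe, c.s_comm, c.t_comm]
  rw [L]
  unfold Multigraph.bdry
  rw [Finset.sum_comm]
  refine Finset.sum_congr rfl fun f _ => ?_
  have : ∀ z, δ f * ((if H.t f = z then (1:ℤ) else 0) - (if H.s f = z then 1 else 0))
      = (if H.t f = z then δ f else 0) - (if H.s f = z then δ f else 0) := by
    intro z; split_ifs <;> ring
  rw [Finset.sum_congr rfl fun z _ => this z, Finset.sum_sub_distrib,
    Finset.sum_ite_eq, Finset.sum_ite_eq]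
  simp [Finset.mem_filter, mul_sub, mul_ite]


/-- Let `p : G̃ → G` be the free double cover determined by a
spanning tree `T` and a subset `S` of the complementary edges, and let
`G' ⊆ G` be a connected subgraph.  Then the preimage `p⁻¹(G')` is connected if
and only if there is a cycle on `G'` containing an odd number of edges from
`S`. -/
theorem preimage_connected_iff_odd_cycle
    (G H : Multigraph) (c : FreeDoubleCover H G)
    (T : Finset G.E)
    (hT : (∀ v w : G.V, Relation.EqvGen (G.adjOn ↑T) v w) ∧ T.card + 1 = Fintype.card G.V)
    (S : Finset G.E) (hS : Disjoint S T)
    (σ : H.V → Bool) (hσ : IsCoverWithSign c σ S)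
    (V' : Set G.V) (E' : Set G.E) (hsub : G.IsConnSubgraph V' E') :
    (∀ x ∈ c.pV ⁻¹' V', ∀ y ∈ c.pV ⁻¹' V',
        Relation.EqvGen (H.adjOn (c.pE ⁻¹' E')) x y) ↔
      ∃ γ : G.E → ℤ, (∀ e, e ∉ E' → γ e = 0) ∧ (∀ v, G.bdry γ v = 0) ∧
        Odd (∑ e ∈ S, γ e) := by
  obtain ⟨hinc, ⟨v₀, hv₀⟩, hconn⟩ := hsub
  constructor
  · intro hpre
    obtain ⟨x₀, hx₀⟩ := c.pV_surj v₀
    have hx₀' : x₀ ∈ c.pV ⁻¹' V' := by simp [Set.mem_preimage, hx₀, hv₀]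
    have hιx₀' : c.ιV x₀ ∈ c.pV ⁻¹' V' := by
      simp [Set.mem_preimage, c.pV_ι, hx₀, hv₀]
    have hR := hpre x₀ hx₀' (c.ιV x₀) hιx₀'
    obtain ⟨δ, hsupp, hbd, hpar⟩ :=
      chain_of_walk (c.pE ⁻¹' E') (fun f => c.pE f ∈ S) σ (fun f => hσ.2 f) hR
    refine ⟨c.pushCh δ, ?_, ?_, ?_⟩
    · intro e he
      unfold FreeDoubleCover.pushCh
      refine Finset.sum_eq_zero fun f hf => hsupp f ?_
      have hfe : c.pE f = e := (Finset.mem_filter.mp hf).2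
      simp [Set.mem_preimage, hfe, he]
    · intro v
      rw [bdry_push]
      have h1 : ∑ z ∈ Finset.univ.filter (fun z => c.pV z = v), H.bdry δ z =
          ∑ z ∈ Finset.univ.filter (fun z => c.pV z = v),
            ((if z = c.ιV x₀ then (1:ℤ) else 0) - (if z = x₀ then 1 else 0)) :=
        Finset.sum_congr rfl fun z _ => hbd z
      rw [h1, Finset.sum_sub_distrib, Finset.sum_ite_eq', Finset.sum_ite_eq']
      simp [Finset.mem_filter, c.pV_ι, hx₀]
    · have hpush : ∑ e ∈ S, c.pushCh δ e =
          ∑ f ∈ Finset.univ.filter (fun f => c.pE f ∈ S), δ f := by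
        unfold FreeDoubleCover.pushCh
        exact Finset.sum_fiberwise_eq_sum_filter Finset.univ S c.pE δ
      rw [hpush]
      have h1 : ((∑ f ∈ Finset.univ.filter (fun f => c.pE f ∈ S), δ f : ℤ) : ZMod 2)
          = 1 := by
        have h2 : (if σ x₀ = σ (c.ιV x₀) then (0:ZMod 2) else 1) = 1 := by
          rw [hσ.1 x₀]; cases σ x₀ <;> simp
        rw [← h2, ← hpar]
        congr 1
        refine Finset.sum_congr ?_ fun _ _ => rfl
        ext f
        simp [Finset.mem_filter]
      set n := ∑ f ∈ Finset.univ.filter (fun f => c.pE f ∈ S), δ f with hn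
      rcases Int.even_or_odd n with he | ho
      · exfalso
        have h2 : ((n : ℤ) : ZMod 2) = 0 :=
          (ZMod.intCast_zmod_eq_zero_iff_dvd n 2).mpr (even_iff_two_dvd.mp he)
        rw [h1] at h2
        exact one_ne_zero h2
      · exact ho
  · rintro ⟨γ, hsuppγ, hbdγ, hodd⟩ x hx y hy
    have key : ∀ z, c.pV z ∈ V' →
        Relation.EqvGen (H.adjOn (c.pE ⁻¹' E')) z (c.ιV z) := by
      by_contra hkey
      push_neg at hkey
      obtain ⟨z₀, hz₀, hnR⟩ := hkey
      have noR : ∀ z, c.pV z ∈ V' →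
          ¬ Relation.EqvGen (H.adjOn (c.pE ⁻¹' E')) z (c.ιV z) := by
        intro z hz hRz
        apply hnR
        obtain ⟨u, hu, hRu⟩ := (lift_walk c E' (hconn _ hz₀ _ hz)).1 z₀ rfl
        have hRuι : Relation.EqvGen (H.adjOn (c.pE ⁻¹' E')) u (c.ιV u) := by
          rcases c.fiberV z u hu.symm with h | h
          · rw [h]; exact hRz
          · rw [h]
            exact walk_iota c E' hRz
        have h2 : Relation.EqvGen (H.adjOn (c.pE ⁻¹' E')) (c.ιV u) (c.ιV z₀) :=
          Relation.EqvGen.symm _ _ (walk_iota c E' hRu)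
        exact Relation.EqvGen.trans _ _ _ hRu (Relation.EqvGen.trans _ _ _ hRuι h2)
      -- build the two-coloring of the base
      let τ : G.V → Bool := fun v =>
        if h : ∃ u, c.pV u = v ∧ Relation.EqvGen (H.adjOn (c.pE ⁻¹' E')) z₀ u
        then σ h.choose else true
      have hτ : ∀ e ∈ E', (e ∈ S ↔ τ (G.s e) ≠ τ (G.t e)) := by
        intro e he
        have hse : G.s e ∈ V' := (hinc e he).1
        have hte : G.t e ∈ V' := (hinc e he).2
        have hex_s : ∃ u, c.pV u = G.s e ∧
            Relation.EqvGen (H.adjOn (c.pE ⁻¹' E')) z₀ u :=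
          (lift_walk c E' (hconn _ hz₀ _ hse)).1 z₀ rfl
        obtain ⟨huv, huR⟩ := hex_s.choose_spec
        obtain ⟨f, hfE, hfs⟩ := lift_edge_s c e hex_s.choose huv
        have hfy : c.pV (H.t f) = G.t e := by rw [← c.t_comm, hfE]
        have hRy : Relation.EqvGen (H.adjOn (c.pE ⁻¹' E')) z₀ (H.t f) :=
          Relation.EqvGen.trans _ _ _ huR
            (Relation.EqvGen.rel _ _ ⟨f, by simp [Set.mem_preimage, hfE, he], hfs, rfl⟩)
        have hex_t : ∃ u', c.pV u' = G.t e ∧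
            Relation.EqvGen (H.adjOn (c.pE ⁻¹' E')) z₀ u' := ⟨H.t f, hfy, hRy⟩
        obtain ⟨hu'v, hu'R⟩ := hex_t.choose_spec
        have hσu' : σ hex_t.choose = σ (H.t f) := by
          rcases c.fiberV (H.t f) hex_t.choose (by rw [hfy, hu'v]) with h | h
          · rw [h]
          · exfalso
            apply noR (H.t f) (by rw [hfy]; exact hte)
            refine Relation.EqvGen.trans _ _ _
              (Relation.EqvGen.symm _ _ hRy) ?_
            rw [← h]; exact hu'R
        have hτs : τ (G.s e) = σ hex_s.choose := dif_pos hex_s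
        have hτt : τ (G.t e) = σ (H.t f) := by
          rw [show τ (G.t e) = σ hex_t.choose from dif_pos hex_t, hσu']
        rw [hτs, hτt, ← hfs, ← hfE]
        exact hσ.2 f
      -- parity computation
      let θ : G.V → ℤ := fun v => if τ v then 1 else 0
      have θdef : ∀ v, θ v = if τ v then 1 else 0 := fun _ => rfl
      have swap : ∑ v : G.V, θ v * G.bdry γ v =
          ∑ e : G.E, γ e * (θ (G.t e) - θ (G.s e)) := by
        unfold Multigraph.bdry
        have step1 : ∀ v : G.V, θ v * ∑ e : G.E, γ e *
            ((if G.t e = v then (1:ℤ) else 0) - (if G.s e = v then 1 else 0)) =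
            ∑ e : G.E, θ v * (γ e *
            ((if G.t e = v then (1:ℤ) else 0) - (if G.s e = v then 1 else 0))) :=
          fun v => Finset.mul_sum _ _ _
        rw [Finset.sum_congr rfl fun v _ => step1 v, Finset.sum_comm]
        refine Finset.sum_congr rfl fun e _ => ?_
        have step2 : ∀ v : G.V, θ v * (γ e *
            ((if G.t e = v then (1:ℤ) else 0) - (if G.s e = v then 1 else 0))) =
            (if G.t e = v then γ e * θ v else 0) - (if G.s e = v then γ e * θ v else 0) := by
          intro v; split_ifs <;> ring
        rw [Finset.sum_congr rfl fun v _ => step2 v, Finset.sum_sub_distrib,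
          Finset.sum_ite_eq, Finset.sum_ite_eq]
        simp [mul_sub]
      have h0 : ∑ e : G.E, γ e * (θ (G.t e) - θ (G.s e)) = 0 := by
        rw [← swap]
        simp [hbdγ]
      have negone : (-1 : ZMod 2) = 1 := by decide
      have hcast : ∀ e : G.E, ((γ e * (θ (G.t e) - θ (G.s e)) : ℤ) : ZMod 2) =
          if e ∈ S then ((γ e : ℤ) : ZMod 2) else 0 := by
        intro e
        by_cases he : e ∈ E'
        · by_cases hes : e ∈ S
          · have hne : τ (G.s e) ≠ τ (G.t e) := (hτ e he).1 hes
            have hd : θ (G.t e) - θ (G.s e) = 1 ∨ θ (G.t e) - θ (G.s e) = -1 := by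
              rw [θdef, θdef]
              cases hs2 : τ (G.s e) <;> cases ht2 : τ (G.t e) <;> simp [hs2, ht2] at hne ⊢
            rw [if_pos hes]
            have negself : ∀ a : ZMod 2, -a = a := by decide
            rcases hd with hd | hd <;> rw [hd]
            · push_cast; ring
            · push_cast
              rw [mul_neg_one, negself]
          · have heq : τ (G.s e) = τ (G.t e) := by
              by_contra hne
              exact hes ((hτ e he).2 hne)
            have hd : θ (G.t e) - θ (G.s e) = 0 := by
              rw [θdef, θdef, heq]; ring
            rw [hd, if_neg hes]
            simp
        · rw [hsuppγ e he]
          simp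
      have hmain : ((∑ e ∈ S, γ e : ℤ) : ZMod 2) = 0 := by
        have e1 : ((∑ e : G.E, γ e * (θ (G.t e) - θ (G.s e)) : ℤ) : ZMod 2) = 0 := by
          rw [h0]; simp
        rw [Int.cast_sum] at e1
        calc ((∑ e ∈ S, γ e : ℤ) : ZMod 2)
            = ∑ e ∈ S, ((γ e : ℤ) : ZMod 2) := Int.cast_sum _ _
          _ = ∑ e : G.E, (if e ∈ S then ((γ e : ℤ) : ZMod 2) else 0) := by
              rw [Finset.sum_ite_mem, Finset.univ_inter]
          _ = ∑ e : G.E, ((γ e * (θ (G.t e) - θ (G.s e)) : ℤ) : ZMod 2) :=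
              Finset.sum_congr rfl fun e _ => (hcast e).symm
          _ = 0 := e1
      have : ¬ Odd (∑ e ∈ S, γ e) := by
        intro h
        have h2 : (2:ℤ) ∣ ∑ e ∈ S, γ e :=
          (ZMod.intCast_zmod_eq_zero_iff_dvd _ 2).mp hmain
        exact (Int.not_odd_iff_even.mpr (even_iff_two_dvd.mpr h2)) h
      exact this hodd
    obtain ⟨u, hu, hRu⟩ := (lift_walk c E' (hconn _ hx _ hy)).1 x rfl
    rcases c.fiberV y u hu.symm with h | h
    · rw [h] at hRu; exact hRu
    · refine Relation.EqvGen.trans _ _ _ hRu ?_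
      rw [h]
      exact Relation.EqvGen.symm _ _ (key y hy)
end

section
/- Let p: G̃ → G be a free double cover of connected finite graphs with involution ι. Define the parity ε(D) ∈ Z/2Z of a divisor D ∈ Ker(Nm) ⊆ Div^0(G̃) as deg(E) mod 2, where D = E - ι(E) is the unique representation with E effective and Supp(E) ∩ Supp(ι(E)) = ∅. Then ε is additive: ε(D_1 + D_2) = ε(D_1) + ε(D_2) for all D_1, D_2 ∈ Ker(Nm). -/
set_option maxHeartbeats 1000000

attribute [local instance 10] Classical.propDecidable

/-- `E` is the canonical effective representative of the norm-zero divisor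
`D = E - ι(E)`: `E` is effective and the supports of `E` and `ι E` are
disjoint. -/
def IsEffRep {H G : Multigraph} (c : FreeDoubleCover H G) (D E : H.V → ℤ) : Prop :=
  (∀ w, 0 ≤ E w) ∧ (∀ w, E w ≠ 0 → E (c.ιV w) = 0) ∧ (∀ w, D w = E w - E (c.ιV w))

/-- The parity `ε(D) = deg E mod 2` of a divisor in the kernel
of the norm map (where `D = E - ι(E)` is the canonical representation with `E`
effective of support disjoint from that of `ι(E)`) is additive:
`ε(D₁ + D₂) = ε(D₁) + ε(D₂)`. -/
theorem parity_additive
    (G H : Multigraph) (hG : G.Connected) (hH : H.Connected)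
    (c : FreeDoubleCover H G)
    (D₁ D₂ : H.V → ℤ) (hD₁ : c.nmDiv D₁ = 0) (hD₂ : c.nmDiv D₂ = 0)
    (E₁ E₂ E₁₂ : H.V → ℤ)
    (hE₁ : IsEffRep c D₁ E₁) (hE₂ : IsEffRep c D₂ E₂)
    (hE₁₂ : IsEffRep c (D₁ + D₂) E₁₂) :
    ((∑ w, E₁₂ w : ℤ) : ZMod 2) = ((∑ w, E₁ w : ℤ) : ZMod 2) + ((∑ w, E₂ w : ℤ) : ZMod 2) := by
  obtain ⟨_, _, h1⟩ := hE₁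
  obtain ⟨_, _, h2⟩ := hE₂
  obtain ⟨_, _, h12⟩ := hE₁₂
  have key : ∀ w, E₁₂ (c.ιV w) - E₁ (c.ιV w) - E₂ (c.ιV w)
      = E₁₂ w - E₁ w - E₂ w := by
    intro w
    have a1 := h1 w; have a2 := h2 w; have a12 := h12 w
    simp only [Pi.add_apply] at a12
    linarith
  have hz : ∑ w, ((E₁₂ w - E₁ w - E₂ w : ℤ) : ZMod 2) = 0 := by
    apply Finset.sum_involution (fun w _ => c.ιV w)
    · intro w _
      show ((E₁₂ w - E₁ w - E₂ w : ℤ) : ZMod 2)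
        + ((E₁₂ (c.ιV w) - E₁ (c.ιV w) - E₂ (c.ιV w) : ℤ) : ZMod 2) = 0
      rw [key w, ← two_mul]
      push_cast
      rw [show (2 : ZMod 2) = 0 by decide, zero_mul]
    · intro w _ _; exact c.ιV_ne w
    · intro w _; exact Finset.mem_univ _
    · intro w _; exact c.ιV_inv w
  push_cast at hz ⊢
  rw [Finset.sum_sub_distrib, Finset.sum_sub_distrib, sub_sub, sub_eq_zero] at hz
  rw [hz]
end

section
/- Let p: G̃ → G be a connected free double cover of connected finite graphs. Every principal divisor on G̃ whose norm is the zero divisor on G has even parity. Consequently, parity descends to a surjective group homomorphism ε: Ker(Nm: Jac(G̃) → Jac(G)) → Z/2Z, and the Prym group Prym(G̃/G) := ker(ε) is an index-2 subgroup of Ker(Nm). -/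
set_option maxHeartbeats 1000000

attribute [local instance 10] Classical.propDecidable

namespace Multigraph

/-- The principal divisor obtained by chip-firing the function `a`
(the negated Laplacian applied to `a`). -/
def lapDiv (G : Multigraph) (a : G.V → ℤ) : G.V → ℤ :=
  fun v => -∑ e : G.E,
    ((if G.s e = v then a v - a (G.t e) else 0) + (if G.t e = v then a v - a (G.s e) else 0))

/-- The group of principal divisors of a graph. -/
def Prin (G : Multigraph) : AddSubgroup (G.V → ℤ) :=
  AddSubgroup.closure {D | ∃ a : G.V → ℤ, D = G.lapDiv a}

/-- The degree homomorphism on divisors. -/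
def degHom (G : Multigraph) : (G.V → ℤ) →+ ℤ :=
  AddMonoidHom.mk' (fun D => ∑ v, D v) (by
    intro a b; simp [Finset.sum_add_distrib])

/-- Degree-zero divisors. -/
def Div0 (G : Multigraph) : AddSubgroup (G.V → ℤ) := (degHom G).ker

/-- The Jacobian group `Div⁰/Prin` of a finite graph. -/
def Jac (G : Multigraph) :=
  ↥(Div0 G) ⧸ ((Prin G).addSubgroupOf (Div0 G))

end Multigraph

namespace FreeDoubleCover

variable {H G : Multigraph}

/-- The norm map on divisors, as a group homomorphism. -/
def nmHom (c : FreeDoubleCover H G) : (H.V → ℤ) →+ (G.V → ℤ) :=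
  AddMonoidHom.mk' c.nmDiv (by
    intro a b; funext v; simp [nmDiv, Finset.sum_add_distrib])

/-- Divisors on the source whose norm is a principal divisor on the base. -/
def KDiv (c : FreeDoubleCover H G) : AddSubgroup (H.V → ℤ) :=
  (Multigraph.Prin G).comap c.nmHom

/-- The kernel of the norm map `Nm : Jac(G̃) → Jac(G)`, presented as the
quotient of the divisors with principal norm by the principal divisors. -/
abbrev KerNm (c : FreeDoubleCover H G) :=
  ↥(c.KDiv) ⧸ ((Multigraph.Prin H).addSubgroupOf c.KDiv)

lemma mem_KDiv (c : FreeDoubleCover H G) {D : H.V → ℤ} (hD : c.nmDiv D = 0) :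
    D ∈ c.KDiv := by
  have : c.nmHom D ∈ Multigraph.Prin G := by
    show c.nmDiv D ∈ Multigraph.Prin G
    rw [hD]; exact (Multigraph.Prin G).zero_mem
  exact this

end FreeDoubleCover

section AuxLemmas

open Finset

namespace Multigraph

variable (G : Multigraph)

lemma lapDiv_eq_bdry (a : G.V → ℤ) :
    G.lapDiv a = G.bdry (fun f => a (G.s f) - a (G.t f)) := by
  funext v
  simp only [lapDiv, bdry, ← Finset.sum_neg_distrib]
  apply Finset.sum_congr rfl
  intro f _
  by_cases h1 : G.s f = v <;> by_cases h2 : G.t f = v <;> simp [h1, h2] <;> ring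

lemma lapDiv_add (a b : G.V → ℤ) :
    G.lapDiv (a + b) = G.lapDiv a + G.lapDiv b := by
  funext v
  simp only [lapDiv, Pi.add_apply, ← neg_add, ← Finset.sum_add_distrib]
  congr 1
  apply Finset.sum_congr rfl
  intro f _
  by_cases h1 : G.s f = v <;> by_cases h2 : G.t f = v <;> simp [h1, h2] <;> ring

/-- The Laplacian chip-firing map as a group homomorphism. -/
def lapHom : (G.V → ℤ) →+ (G.V → ℤ) :=
  AddMonoidHom.mk' G.lapDiv (G.lapDiv_add)

lemma mem_Prin_iff {D : G.V → ℤ} : D ∈ G.Prin ↔ ∃ a, D = G.lapDiv a := by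
  have hset : {D | ∃ a : G.V → ℤ, D = G.lapDiv a} = ↑(G.lapHom.range) := by
    ext D
    simp only [Set.mem_setOf_eq, SetLike.mem_coe, AddMonoidHom.mem_range, lapHom,
      AddMonoidHom.mk'_apply]
    exact exists_congr fun a => eq_comm
  rw [Prin, hset, AddSubgroup.closure_eq]
  simp only [AddMonoidHom.mem_range, lapHom, AddMonoidHom.mk'_apply]
  exact exists_congr fun a => eq_comm

/-- Energy argument: a function with vanishing Laplacian is constant on edges. -/
lemma lapDiv_zero_edge {b : G.V → ℤ} (hb : G.lapDiv b = 0) (e : G.E) :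
    b (G.s e) = b (G.t e) := by
  have key : ∑ f : G.E, (b (G.s f) - b (G.t f)) ^ 2 = 0 := by
    have h1 : ∀ f : G.E, (b (G.s f) - b (G.t f)) ^ 2
        = ∑ v : G.V, b v * ((b (G.s f) - b (G.t f)) *
            ((if G.s f = v then 1 else 0) - (if G.t f = v then 1 else 0))) := by
      intro f
      have hsp : (∑ v : G.V, if G.s f = v then b v else 0) = b (G.s f) := by
        rw [Finset.sum_ite_eq]; simp
      have htp : (∑ v : G.V, if G.t f = v then b v else 0) = b (G.t f) := by
        rw [Finset.sum_ite_eq]; simp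
      calc (b (G.s f) - b (G.t f)) ^ 2
          = ((∑ v : G.V, if G.s f = v then b v else 0)
            - (∑ v : G.V, if G.t f = v then b v else 0)) * (b (G.s f) - b (G.t f)) := by
            rw [hsp, htp]; ring
        _ = ∑ v : G.V, b v * ((b (G.s f) - b (G.t f)) *
            ((if G.s f = v then 1 else 0) - (if G.t f = v then 1 else 0))) := by
            rw [← Finset.sum_sub_distrib, Finset.sum_mul]
            apply Finset.sum_congr rfl
            intro v _
            split_ifs <;> ring
    calc ∑ f : G.E, (b (G.s f) - b (G.t f)) ^ 2
        = ∑ v : G.V, b v * (∑ f : G.E, (b (G.s f) - b (G.t f)) *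
            ((if G.s f = v then 1 else 0) - (if G.t f = v then 1 else 0))) := by
          simp only [h1]
          rw [Finset.sum_comm]
          apply Finset.sum_congr rfl
          intro v _
          rw [Finset.mul_sum]
      _ = ∑ v : G.V, b v * (- G.lapDiv b v) := by
          apply Finset.sum_congr rfl
          intro v _
          congr 1
          rw [G.lapDiv_eq_bdry, bdry, ← Finset.sum_neg_distrib]
          apply Finset.sum_congr rfl
          intro f _
          ring
      _ = 0 := by
          rw [hb]; simp
  have h2 := (Finset.sum_eq_zero_iff_of_nonneg (fun f _ => sq_nonneg _)).mp key e (mem_univ e)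
  have h3 := sq_eq_zero_iff.mp h2
  linarith

end Multigraph

namespace FreeDoubleCover

variable {H G : Multigraph} (c : FreeDoubleCover H G)

lemma fiberV_finset (w : H.V) :
    Finset.univ.filter (fun w' => c.pV w' = c.pV w) = {w, c.ιV w} := by
  ext w'
  simp only [Finset.mem_filter, Finset.mem_univ, true_and, Finset.mem_insert,
    Finset.mem_singleton]
  constructor
  · intro h; exact c.fiberV w w' h.symm
  · rintro (rfl | rfl)
    · rfl
    · exact c.pV_ι w

lemma nmDiv_apply (D : H.V → ℤ) (w : H.V) :
    c.nmDiv D (c.pV w) = D w + D (c.ιV w) := by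
  rw [nmDiv, fiberV_finset, Finset.sum_pair (Ne.symm (c.ιV_ne w))]

lemma fiberE_finset (f : H.E) :
    Finset.univ.filter (fun f' => c.pE f' = c.pE f) = {f, c.ιE f} := by
  ext f'
  simp only [Finset.mem_filter, Finset.mem_univ, true_and, Finset.mem_insert,
    Finset.mem_singleton]
  constructor
  · intro h; exact c.fiberE f f' h.symm
  · rintro (rfl | rfl)
    · rfl
    · exact c.pE_ι f

lemma pushCh_apply (γ : H.E → ℤ) (f : H.E) :
    c.pushCh γ (c.pE f) = γ f + γ (c.ιE f) := by
  rw [pushCh, fiberE_finset, Finset.sum_pair (Ne.symm (c.ιE_ne f))]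

lemma sum_pairs_V {M : Type*} [AddCommMonoid M] (s : G.V → H.V)
    (hs : ∀ v, c.pV (s v) = v) (F : H.V → M) :
    ∑ w, F w = ∑ v, (F (s v) + F (c.ιV (s v))) := by
  rw [← Finset.sum_fiberwise_of_maps_to (fun (w : H.V) _ => Finset.mem_univ (c.pV w)) F]
  apply Finset.sum_congr rfl
  intro v _
  have h : Finset.univ.filter (fun w => c.pV w = v)
      = Finset.univ.filter (fun w => c.pV w = c.pV (s v)) := by rw [hs]
  rw [h, c.fiberV_finset, Finset.sum_pair (Ne.symm (c.ιV_ne (s v)))]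

lemma sum_pairs_E {M : Type*} [AddCommMonoid M] (sE : G.E → H.E)
    (hsE : ∀ e, c.pE (sE e) = e) (F : H.E → M) :
    ∑ f, F f = ∑ e, (F (sE e) + F (c.ιE (sE e))) := by
  rw [← Finset.sum_fiberwise_of_maps_to (fun (f : H.E) _ => Finset.mem_univ (c.pE f)) F]
  apply Finset.sum_congr rfl
  intro e _
  have h : Finset.univ.filter (fun f => c.pE f = e)
      = Finset.univ.filter (fun f => c.pE f = c.pE (sE e)) := by rw [hsE]
  rw [h, c.fiberE_finset, Finset.sum_pair (Ne.symm (c.ιE_ne (sE e)))]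

/-- Indicator (in `ZMod 2`) of the image of the section `s`. -/
def inS2 (s : G.V → H.V) (w : H.V) : ZMod 2 := if s (c.pV w) = w then 1 else 0

lemma mem_section_or (s : G.V → H.V) (hs : ∀ v, c.pV (s v) = v) (w : H.V) :
    s (c.pV w) = w ∨ s (c.pV w) = c.ιV w :=
  c.fiberV w (s (c.pV w)) (hs (c.pV w)).symm

lemma inS2_iota (s : G.V → H.V) (hs : ∀ v, c.pV (s v) = v) (w : H.V) :
    c.inS2 s (c.ιV w) = 1 + c.inS2 s w := by
  unfold inS2
  rw [c.pV_ι]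
  rcases c.mem_section_or s hs w with h | h
  · have h1 : ¬ (s (c.pV w) = c.ιV w) := by
      rw [h]; exact fun hh => c.ιV_ne w hh.symm
    rw [if_neg h1, if_pos h]
    decide
  · have h1 : ¬ (s (c.pV w) = w) := by rw [h]; exact c.ιV_ne w
    rw [if_pos h, if_neg h1]
    decide

lemma sum_indicator (s : G.V → H.V) (hs : ∀ v, c.pV (s v) = v) (w : H.V) :
    (∑ v : G.V, if w = s v then (1 : ZMod 2) else 0) = c.inS2 s w := by
  have h : ∀ v : G.V, (if w = s v then (1 : ZMod 2) else 0)
      = if v = c.pV w then (if s (c.pV w) = w then (1 : ZMod 2) else 0) else 0 := by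
    intro v
    by_cases hv : w = s v
    · have hpv : c.pV w = v := by rw [hv, hs]
      rw [if_pos hv, if_pos hpv.symm, if_pos (by rw [hpv, ← hv])]
    · rw [if_neg hv]
      by_cases hv2 : v = c.pV w
      · rw [if_pos hv2, if_neg (fun hh : s (c.pV w) = w => hv (by rw [← hv2] at hh; exact hh.symm))]
      · rw [if_neg hv2]
  simp only [h]
  rw [Finset.sum_ite_eq' Finset.univ (c.pV w)]
  simp [inS2]

/-- Parity of (the pushdown of) an edge of the base relative to the section. -/
def chi (s : G.V → H.V) (sE : G.E → H.E) (e : G.E) : ZMod 2 :=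
  c.inS2 s (H.s (sE e)) + c.inS2 s (H.t (sE e))

end FreeDoubleCover

/-- Parity of a divisor relative to the section, as a function. -/
def phiFn {H G : Multigraph} (s : G.V → H.V) (D : H.V → ℤ) : ZMod 2 :=
  ∑ v : G.V, ((D (s v) : ℤ) : ZMod 2)

namespace FreeDoubleCover

variable {H G : Multigraph} (c : FreeDoubleCover H G)

/-- The parity correction term. -/
def psi (s : G.V → H.V) (sE : G.E → H.E) (b : G.V → ℤ) : ZMod 2 :=
  ∑ e : G.E, (((b (G.s e) : ℤ) : ZMod 2) + ((b (G.t e) : ℤ) : ZMod 2)) * c.chi s sE e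

lemma phiFn_add (s : G.V → H.V) (D D' : H.V → ℤ) :
    phiFn s (D + D') = phiFn s D + phiFn s D' := by
  unfold phiFn
  rw [← Finset.sum_add_distrib]
  apply Finset.sum_congr rfl
  intro v _
  push_cast [Pi.add_apply]
  ring

lemma psi_add (s : G.V → H.V) (sE : G.E → H.E) (b b' : G.V → ℤ) :
    c.psi s sE (b + b') = c.psi s sE b + c.psi s sE b' := by
  unfold psi
  rw [← Finset.sum_add_distrib]
  apply Finset.sum_congr rfl
  intro e _
  push_cast [Pi.add_apply]
  ring

lemma psi_of_edge_const (s : G.V → H.V) (sE : G.E → H.E) {b : G.V → ℤ}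
    (hb : ∀ e, b (G.s e) = b (G.t e)) :
    c.psi s sE b = 0 := by
  unfold psi
  apply Finset.sum_eq_zero
  intro e _
  rw [hb e, CharTwo.add_self_eq_zero, zero_mul]

lemma phiFn_bdry (s : G.V → H.V) (hs : ∀ v, c.pV (s v) = v) (γ : H.E → ℤ) :
    phiFn s (H.bdry γ) = ∑ f : H.E, ((γ f : ℤ) : ZMod 2)
      * (c.inS2 s (H.s f) + c.inS2 s (H.t f)) := by
  unfold phiFn Multigraph.bdry
  push_cast
  rw [Finset.sum_comm]
  apply Finset.sum_congr rfl
  intro f _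
  rw [← Finset.mul_sum]
  congr 1
  rw [Finset.sum_sub_distrib, c.sum_indicator s hs, c.sum_indicator s hs,
    CharTwo.sub_eq_add, add_comm]

lemma pushCh_gamma (sE : G.E → H.E) (hsE : ∀ e, c.pE (sE e) = e) (a : H.V → ℤ) (e : G.E) :
    c.pushCh (fun f => a (H.s f) - a (H.t f)) e
      = c.nmDiv a (G.s e) - c.nmDiv a (G.t e) := by
  have hp : c.pushCh (fun f => a (H.s f) - a (H.t f)) e
      = (a (H.s (sE e)) - a (H.t (sE e)))
        + (a (H.s (c.ιE (sE e))) - a (H.t (c.ιE (sE e)))) := by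
    conv_lhs => rw [← hsE e]
    exact c.pushCh_apply _ _
  rw [hp, c.ιV_s, c.ιV_t]
  conv_rhs => rw [← hsE e, c.s_comm, c.t_comm, c.nmDiv_apply, c.nmDiv_apply]
  ring

lemma phiFn_lapDiv (s : G.V → H.V) (hs : ∀ v, c.pV (s v) = v)
    (sE : G.E → H.E) (hsE : ∀ e, c.pE (sE e) = e) (a : H.V → ℤ) :
    phiFn s (H.lapDiv a) = c.psi s sE (c.nmDiv a) := by
  rw [H.lapDiv_eq_bdry, c.phiFn_bdry s hs]
  rw [c.sum_pairs_E sE hsE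
    (fun f => ((a (H.s f) - a (H.t f) : ℤ) : ZMod 2) * (c.inS2 s (H.s f) + c.inS2 s (H.t f)))]
  unfold psi
  apply Finset.sum_congr rfl
  intro e _
  beta_reduce
  rw [c.ιV_s, c.ιV_t, c.inS2_iota s hs, c.inS2_iota s hs]
  have hsum : (a (H.s (sE e)) - a (H.t (sE e)))
      + (a (H.s (c.ιE (sE e))) - a (H.t (c.ιE (sE e))))
      = c.nmDiv a (G.s e) - c.nmDiv a (G.t e) := by
    have hp : c.pushCh (fun f => a (H.s f) - a (H.t f)) e
        = (a (H.s (sE e)) - a (H.t (sE e)))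
          + (a (H.s (c.ιE (sE e))) - a (H.t (c.ιE (sE e)))) := by
      conv_lhs => rw [← hsE e]
      exact c.pushCh_apply _ _
    rw [← hp]
    exact c.pushCh_gamma sE hsE a e
  rw [c.ιV_s, c.ιV_t] at hsum
  have h2 : (1 + c.inS2 s (H.s (sE e))) + (1 + c.inS2 s (H.t (sE e)))
      = c.inS2 s (H.s (sE e)) + c.inS2 s (H.t (sE e)) := by
    have h11 : (1 + 1 : ZMod 2) = 0 := by decide
    linear_combination h11
  rw [h2, ← add_mul, ← Int.cast_add, hsum]
  congr 1
  push_cast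
  rw [CharTwo.sub_eq_add]

lemma indicator_fiber (s : G.V → H.V) (hs : ∀ v, c.pV (s v) = v) (v : G.V) (w : H.V) :
    ((if w = s v then (1 : ℤ) else 0) + (if w = c.ιV (s v) then 1 else 0))
      = if c.pV w = v then 1 else 0 := by
  have hne : (s v : H.V) ≠ c.ιV (s v) := fun h => c.ιV_ne (s v) h.symm
  by_cases h1 : w = s v
  · subst h1
    simp [hne, hs v]
  · by_cases h2 : w = c.ιV (s v)
    · subst h2
      simp [h1, c.pV_ι, hs v]
    · have hp : ¬ (c.pV w = v) := by
        intro hpv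
        rcases c.fiberV (s v) w (by rw [hs v, hpv]) with h | h
        · exact h1 h
        · exact h2 h
      simp [h1, h2, hp]

lemma nmDiv_bdry (s : G.V → H.V) (hs : ∀ v, c.pV (s v) = v) (γ : H.E → ℤ) :
    c.nmDiv (H.bdry γ) = G.bdry (c.pushCh γ) := by
  funext v
  have h0 : c.nmDiv (H.bdry γ) v = H.bdry γ (s v) + H.bdry γ (c.ιV (s v)) := by
    conv_lhs => rw [← hs v]
    rw [c.nmDiv_apply]
  rw [h0]
  unfold Multigraph.bdry
  rw [← Finset.sum_add_distrib]
  have lhs_eq : ∀ f : H.E,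
      γ f * ((if H.t f = s v then (1:ℤ) else 0) - (if H.s f = s v then 1 else 0))
      + γ f * ((if H.t f = c.ιV (s v) then 1 else 0) - (if H.s f = c.ιV (s v) then 1 else 0))
      = γ f * ((if c.pV (H.t f) = v then 1 else 0) - (if c.pV (H.s f) = v then 1 else 0)) := by
    intro f
    rw [← c.indicator_fiber s hs v (H.t f), ← c.indicator_fiber s hs v (H.s f)]
    ring
  rw [Finset.sum_congr rfl (fun f _ => lhs_eq f)]
  rw [← Finset.sum_fiberwise_of_maps_to (fun (f : H.E) _ => Finset.mem_univ (c.pE f))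
    (fun f => γ f * ((if c.pV (H.t f) = v then (1:ℤ) else 0)
      - (if c.pV (H.s f) = v then 1 else 0)))]
  apply Finset.sum_congr rfl
  intro e _
  simp only [pushCh]
  rw [Finset.sum_mul]
  apply Finset.sum_congr rfl
  intro f hf
  rw [Finset.mem_filter] at hf
  rw [← hf.2, c.s_comm, c.t_comm]

lemma nmDiv_lapDiv (s : G.V → H.V) (hs : ∀ v, c.pV (s v) = v)
    (sE : G.E → H.E) (hsE : ∀ e, c.pE (sE e) = e) (a : H.V → ℤ) :
    c.nmDiv (H.lapDiv a) = G.lapDiv (c.nmDiv a) := by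
  rw [H.lapDiv_eq_bdry, c.nmDiv_bdry s hs, G.lapDiv_eq_bdry]
  have hp : c.pushCh (fun f => a (H.s f) - a (H.t f))
      = fun e => c.nmDiv a (G.s e) - c.nmDiv a (G.t e) :=
    funext (c.pushCh_gamma sE hsE a)
  rw [hp]

lemma parity_formula (s : G.V → H.V) (hs : ∀ v, c.pV (s v) = v)
    (D E : H.V → ℤ) (hrep : ∀ w, D w = E w - E (c.ιV w)) :
    ((∑ w, E w : ℤ) : ZMod 2) = phiFn s D := by
  rw [c.sum_pairs_V s hs E]
  unfold phiFn
  push_cast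
  apply Finset.sum_congr rfl
  intro v _
  rw [hrep (s v)]
  push_cast
  rw [CharTwo.sub_eq_add]

end FreeDoubleCover

end AuxLemmas

/-- For a connected free double cover `p : G̃ → G`, every
principal divisor on `G̃` whose norm is the zero divisor has even parity;
consequently parity descends to a surjective group homomorphism
`ε : Ker(Nm : Jac(G̃) → Jac(G)) → ℤ/2ℤ`, whose kernel (the Prym group) is an
index two subgroup of `Ker Nm`. -/
theorem parity_descends_to_kernel_of_norm
    (G H : Multigraph) (hG : G.Connected) (hH : H.Connected)
    (c : FreeDoubleCover H G) :
    (∀ D ∈ Multigraph.Prin H, c.nmDiv D = 0 →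
        ∀ E : H.V → ℤ, IsEffRep c D E → Even (∑ w, E w)) ∧
    ∃ ε : c.KerNm →+ ZMod 2,
      Function.Surjective ε ∧
      (∀ (D : H.V → ℤ) (hD : c.nmDiv D = 0) (E : H.V → ℤ), IsEffRep c D E →
        ε (QuotientAddGroup.mk (⟨D, c.mem_KDiv hD⟩ : c.KDiv)) = ((∑ w, E w : ℤ) : ZMod 2)) ∧
      ε.ker.index = 2 := by
  classical
  choose s hs using c.pV_surj
  choose sE hsE using c.pE_surj
  -- Part 1: principal divisors with zero norm have even parity
  have part1 : ∀ D ∈ Multigraph.Prin H, c.nmDiv D = 0 →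
      ∀ E : H.V → ℤ, IsEffRep c D E → Even (∑ w, E w) := by
    intro D hD hnm E hE
    obtain ⟨a, rfl⟩ := (Multigraph.mem_Prin_iff H).mp hD
    have h1 : ((∑ w, E w : ℤ) : ZMod 2) = phiFn s (H.lapDiv a) :=
      c.parity_formula s hs _ E hE.2.2
    rw [c.phiFn_lapDiv s hs sE hsE] at h1
    have h0 : G.lapDiv (c.nmDiv a) = 0 := by rw [← c.nmDiv_lapDiv s hs sE hsE, hnm]
    rw [c.psi_of_edge_const s sE (fun e => G.lapDiv_zero_edge h0 e)] at h1
    obtain ⟨k, hk⟩ := (ZMod.intCast_zmod_eq_zero_iff_dvd (∑ w, E w) 2).mp h1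
    exact ⟨k, by push_cast at hk; omega⟩
  -- choice of a potential for the norm of each element of KDiv
  have hKD : ∀ D : c.KDiv, ∃ b, c.nmDiv D.1 = G.lapDiv b :=
    fun D => (Multigraph.mem_Prin_iff G).mp D.2
  choose B hB using hKD
  -- psi only depends on the Laplacian
  have psi_congr : ∀ b b' : G.V → ℤ, G.lapDiv b = G.lapDiv b' →
      c.psi s sE b = c.psi s sE b' := by
    intro b b' h
    have h0 : G.lapDiv (b - b') = 0 := by
      have hms : G.lapHom (b - b') = G.lapHom b - G.lapHom b' := map_sub _ _ _
      simp only [Multigraph.lapHom, AddMonoidHom.mk'_apply] at hms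
      rw [hms, h, sub_self]
    have e1 : (b - b') + b' = b := by abel
    calc c.psi s sE b = c.psi s sE ((b - b') + b') := by rw [e1]
      _ = c.psi s sE (b - b') + c.psi s sE b' := c.psi_add s sE _ _
      _ = 0 + c.psi s sE b' := by
          rw [c.psi_of_edge_const s sE (fun e => G.lapDiv_zero_edge h0 e)]
      _ = c.psi s sE b' := zero_add _
  -- the parity homomorphism on KDiv
  let eps0 : c.KDiv →+ ZMod 2 := AddMonoidHom.mk'
    (fun D => phiFn s D.1 - c.psi s sE (B D)) (by
      intro D D'
      beta_reduce
      have hBB : G.lapDiv (B (D + D')) = G.lapDiv (B D + B D') := by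
        rw [← hB (D + D'), G.lapDiv_add, ← hB D, ← hB D']
        have hco : ((D + D' : c.KDiv) : H.V → ℤ) = (D : H.V → ℤ) + (D' : H.V → ℤ) := rfl
        rw [hco]
        exact map_add c.nmHom _ _
      have hco : ((D + D' : c.KDiv) : H.V → ℤ) = (D : H.V → ℤ) + (D' : H.V → ℤ) := rfl
      rw [hco, FreeDoubleCover.phiFn_add s, psi_congr _ _ hBB, c.psi_add]
      ring)
  set N := (Multigraph.Prin H).addSubgroupOf c.KDiv with hNdef
  have hN : N ≤ eps0.ker := by
    intro x hx
    rw [AddMonoidHom.mem_ker]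
    obtain ⟨a, ha⟩ := (Multigraph.mem_Prin_iff H).mp ((AddSubgroup.mem_addSubgroupOf).mp hx)
    show phiFn s x.1 - c.psi s sE (B x) = 0
    have hlap : G.lapDiv (B x) = G.lapDiv (c.nmDiv a) := by
      rw [← hB x, ha, c.nmDiv_lapDiv s hs sE hsE]
    rw [ha, c.phiFn_lapDiv s hs sE hsE, psi_congr _ _ hlap, sub_self]
  have hspec : ∀ (D : H.V → ℤ) (hD : c.nmDiv D = 0) (E : H.V → ℤ), IsEffRep c D E →
      (QuotientAddGroup.lift N eps0 hN)
        (QuotientAddGroup.mk (⟨D, c.mem_KDiv hD⟩ : c.KDiv)) = ((∑ w, E w : ℤ) : ZMod 2) := by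
    intro D hD E hE
    show phiFn s D - c.psi s sE (B ⟨D, c.mem_KDiv hD⟩) = _
    have hBD : G.lapDiv (B ⟨D, c.mem_KDiv hD⟩) = 0 := by
      rw [← hB ⟨D, c.mem_KDiv hD⟩]
      exact hD
    rw [c.psi_of_edge_const s sE (fun e => G.lapDiv_zero_edge hBD e), sub_zero]
    exact (c.parity_formula s hs D E hE.2.2).symm
  -- an odd element
  obtain ⟨v₀⟩ := hG.1
  have hιne : c.ιV (s v₀) ≠ s v₀ := c.ιV_ne (s v₀)
  set D₀ : H.V → ℤ := fun w => if w = s v₀ then 1 else if w = c.ιV (s v₀) then -1 else 0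
    with hD₀
  set E₀ : H.V → ℤ := fun w => if w = s v₀ then 1 else 0 with hE₀
  have hrep : IsEffRep c D₀ E₀ := by
    refine ⟨?_, ?_, ?_⟩
    · intro w
      simp only [hE₀]
      split_ifs <;> norm_num
    · intro w hw
      simp only [hE₀] at hw ⊢
      by_cases h : w = s v₀
      · subst h
        rw [if_neg hιne]
      · rw [if_neg h] at hw
        exact absurd rfl hw
    · intro w
      simp only [hD₀, hE₀]
      by_cases h1 : w = s v₀
      · subst h1
        simp [hιne]
      · by_cases h2 : w = c.ιV (s v₀)
        · subst h2
          simp [h1, c.ιV_inv]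
        · have h3 : c.ιV w ≠ s v₀ := by
            intro h
            apply h2
            rw [← c.ιV_inv w, h]
          simp [h1, h2, h3]
  have hnm0 : c.nmDiv D₀ = 0 := by
    funext v
    have h0 : c.nmDiv D₀ v = D₀ (s v) + D₀ (c.ιV (s v)) := by
      conv_lhs => rw [← hs v]
      exact c.nmDiv_apply D₀ (s v)
    rw [h0]
    show _ = (0 : ℤ)
    by_cases hv : v = v₀
    · subst hv
      simp [hD₀, hιne]
    · have h1 : s v ≠ s v₀ := fun h => hv (by rw [← hs v, h, hs])
      have h2 : s v ≠ c.ιV (s v₀) := fun h => hv (by rw [← hs v, h, c.pV_ι, hs])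
      have h3 : c.ιV (s v) ≠ s v₀ := fun h => hv (by rw [← hs v, ← c.pV_ι, h, hs])
      have h4 : c.ιV (s v) ≠ c.ιV (s v₀) := fun h => h1 (by rw [← c.ιV_inv (s v), h, c.ιV_inv])
      simp [hD₀, h1, h2, h3, h4]
  have hsum1 : (∑ w, E₀ w) = 1 := by
    simp only [hE₀]
    rw [Finset.sum_ite_eq' Finset.univ (s v₀) (fun _ => (1:ℤ))]
    simp
  have hone : (QuotientAddGroup.lift N eps0 hN)
      (QuotientAddGroup.mk (⟨D₀, c.mem_KDiv hnm0⟩ : c.KDiv)) = 1 := by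
    rw [hspec D₀ hnm0 E₀ hrep, hsum1]
    norm_num
  have hsurj : Function.Surjective (QuotientAddGroup.lift N eps0 hN) := by
    intro x
    have hx : x = 0 ∨ x = 1 := by revert x; decide
    rcases hx with rfl | rfl
    · exact ⟨0, map_zero _⟩
    · exact ⟨_, hone⟩
  refine ⟨part1, QuotientAddGroup.lift N eps0 hN, hsurj, hspec, ?_⟩
  calc (QuotientAddGroup.lift N eps0 hN).ker.index
      = Nat.card (c.KerNm ⧸ (QuotientAddGroup.lift N eps0 hN).ker) := rfl
    _ = Nat.card (ZMod 2) := Nat.card_congr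
        (QuotientAddGroup.quotientKerEquivOfSurjective _ hsurj).toEquiv
    _ = 2 := Nat.card_zmod 2
end

section
/- Let G be a connected finite graph with n vertices, m edges, genus g = m - n + 1, fix an orientation, and let S ⊆ E(G). Define the n×m S-twisted incidence matrix B_S(G) by: (B_S)_{ve} = 1 if t(e)=v and s(e)≠v, or if s(e)=v, t(e)≠v, and e∈S; (B_S)_{ve} = -1 if s(e)=v, t(e)≠v, e∉S; (B_S)_{ve} = 2 if e is a loop at v with e∈S; and 0 otherwise. If H is a connected graph of genus one whose unique cycle contains an odd number of edges of S, then det(B_S(H))^2 = 4; if the number is even, then det(B_S(H))^2 = 0. -/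
set_option maxHeartbeats 1000000

attribute [local instance 10] Classical.propDecidable

/-- The `S`-twisted incidence matrix of an oriented graph: the entry at `(v,e)`
is `1` if `t(e) = v ≠ s(e)`, or if `s(e) = v ≠ t(e)` and `e ∈ S`; it is `-1`
if `s(e) = v ≠ t(e)` and `e ∉ S`; it is `2` if `e` is a loop at `v` lying in
`S`; and `0` otherwise. -/
def twistedIncidence (G : Multigraph) (S : Finset G.E) : Matrix G.V G.E ℤ :=
  Matrix.of fun v e =>
    if G.s e = v ∧ G.t e = v then (if e ∈ S then 2 else 0)
    else if G.t e = v then 1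
    else if G.s e = v then (if e ∈ S then 1 else -1)
    else 0


section DetAux

open Finset

namespace Multigraph

variable (H : Multigraph) (S : Finset H.E)

/-- Sign of a parity class. -/
def sgn2 (a : ZMod 2) : ℤ := if a = 0 then 1 else -1

lemma sgn2_zero : sgn2 0 = 1 := rfl

lemma sgn2_one : sgn2 1 = -1 := rfl

lemma sgn2_add : ∀ a b : ZMod 2, sgn2 (a + b) = sgn2 a * sgn2 b := by decide

lemma sgn2_mul_self : ∀ a : ZMod 2, sgn2 a * sgn2 a = 1 := by decide

lemma zmod2_cases : ∀ a : ZMod 2, a = 0 ∨ a = 1 := by decide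

lemma zmod2_neg : ∀ a : ZMod 2, -a = a := by decide

lemma zmod2_add_one_ne : ∀ a : ZMod 2, a + 1 ≠ a := by decide

lemma zmod2_one_add_one : (1 : ZMod 2) + 1 = 0 := by decide

lemma zmod2_add_self : ∀ a : ZMod 2, a + a = 0 := by decide

lemma zmod2_sub_eq (a b : ZMod 2) : a - b = a + b := by
  rw [sub_eq_add_neg, zmod2_neg]

/-- The relation defining the double cover determined by `S`: a step along an
edge `e` (in either direction) changes the parity coordinate by `1` exactly
when `e ∈ S`. -/
def lifted : (H.V × ZMod 2) → (H.V × ZMod 2) → Prop := fun p q =>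
  ∃ e, ((H.s e = p.1 ∧ H.t e = q.1) ∨ (H.s e = q.1 ∧ H.t e = p.1)) ∧
    q.2 = p.2 + (if e ∈ S then 1 else 0)

/-- Reachability in the double cover. -/
def Rch (p q : H.V × ZMod 2) : Prop := Relation.EqvGen (H.lifted S) p q

variable {H S}

lemma Rch_shift {p q : H.V × ZMod 2} (h : H.Rch S p q) :
    H.Rch S (p.1, p.2 + 1) (q.1, q.2 + 1) := by
  induction h with
  | rel x y hxy =>
      obtain ⟨e, ho, he⟩ := hxy
      exact .rel _ _ ⟨e, ho, by simp only [he]; ring⟩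
  | refl x => exact .refl _
  | symm x y h ih => exact .symm _ _ ih
  | trans x y z h1 h2 ih1 ih2 => exact .trans _ _ _ ih1 ih2

lemma Rch_of_adj {v w : H.V} (h : Relation.EqvGen (H.adjOn Set.univ) v w)
    (a : ZMod 2) : ∃ b, H.Rch S (v, a) (w, b) := by
  induction h generalizing a with
  | rel x y hxy =>
      obtain ⟨e, -, hs, ht⟩ := hxy
      exact ⟨a + (if e ∈ S then 1 else 0), .rel _ _ ⟨e, Or.inl ⟨hs, ht⟩, rfl⟩⟩
  | refl x => exact ⟨a, .refl _⟩
  | symm x y h ih =>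
      obtain ⟨b, hb⟩ := ih a
      rcases zmod2_cases (b - a) with h0 | h1
      · have hba : b = a := by
          rw [← zero_add a, ← h0]; ring
        rw [hba] at hb
        exact ⟨a, .symm _ _ hb⟩
      · have hba : b = a + 1 := by
          rw [← h1]; ring
        rw [hba] at hb
        have h2 := Rch_shift hb
        simp only at h2
        rw [show a + 1 + 1 = a by rw [add_assoc, zmod2_one_add_one, add_zero]] at h2
        exact ⟨a + 1, .symm _ _ h2⟩
  | trans x y z h1 h2 ih1 ih2 =>
      obtain ⟨b, hb⟩ := ih1 a
      obtain ⟨c, hc⟩ := ih2 b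
      exact ⟨c, .trans _ _ _ hb hc⟩

/-! ### Boundary computations -/

lemma bdry_addf (γ₁ γ₂ : H.E → ℤ) (u : H.V) :
    H.bdry (fun e => γ₁ e + γ₂ e) u = H.bdry γ₁ u + H.bdry γ₂ u := by
  unfold Multigraph.bdry
  rw [← Finset.sum_add_distrib]
  exact Finset.sum_congr rfl fun e _ => by ring

lemma bdry_negf (γ : H.E → ℤ) (u : H.V) :
    H.bdry (fun e => -γ e) u = -H.bdry γ u := by
  unfold Multigraph.bdry
  rw [← Finset.sum_neg_distrib]
  exact Finset.sum_congr rfl fun e _ => by ring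

lemma bdry_zerof (u : H.V) : H.bdry (fun _ => 0) u = 0 := by
  unfold Multigraph.bdry
  exact Finset.sum_eq_zero fun e _ => by ring

lemma bdry_single (e : H.E) (z : ℤ) (u : H.V) :
    H.bdry (fun e' => if e' = e then z else 0) u =
      z * ((if H.t e = u then 1 else 0) - (if H.s e = u then 1 else 0)) := by
  unfold Multigraph.bdry
  rw [Finset.sum_eq_single e]
  · simp
  · intro e' _ hne; simp [hne]
  · intro h; exact absurd (Finset.mem_univ e) h

lemma sum_single_S (e : H.E) (z : ℤ) :
    (∑ e' ∈ S, (if e' = e then z else 0)) = if e ∈ S then z else 0 := by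
  rw [Finset.sum_ite_eq' S e fun _ => z]

/-- From a walk in the double cover, produce a 1-chain whose boundary is the
difference of endpoints and whose `S`-weight has parity the covering shift. -/
lemma exists_chain {p q : H.V × ZMod 2} (h : H.Rch S p q) :
    ∃ γ : H.E → ℤ,
      (∀ u, H.bdry γ u = (if q.1 = u then 1 else 0) - (if p.1 = u then 1 else 0)) ∧
      ((∑ e ∈ S, γ e : ℤ) : ZMod 2) = q.2 - p.2 := by
  induction h with
  | rel x y hxy =>
      obtain ⟨e, ho, he⟩ := hxy
      rcases ho with ⟨hs, ht⟩ | ⟨hs, ht⟩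
      · refine ⟨fun e' => if e' = e then 1 else 0, fun u => ?_, ?_⟩
        · rw [bdry_single, hs, ht]; ring
        · rw [sum_single_S, he, zmod2_sub_eq]
          rw [show x.2 + (if e ∈ S then 1 else 0) + x.2
              = (if e ∈ S then (1 : ZMod 2) else 0) by
            rw [add_comm, ← add_assoc, zmod2_add_self, zero_add]]
          split <;> simp
      · refine ⟨fun e' => if e' = e then -1 else 0, fun u => ?_, ?_⟩
        · rw [bdry_single, hs, ht]; ring
        · rw [sum_single_S, he, zmod2_sub_eq]
          rw [show x.2 + (if e ∈ S then 1 else 0) + x.2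
              = (if e ∈ S then (1 : ZMod 2) else 0) by
            rw [add_comm, ← add_assoc, zmod2_add_self, zero_add]]
          split <;> simp [zmod2_neg]
  | refl x =>
      exact ⟨fun _ => 0, fun u => by rw [bdry_zerof]; ring, by simp⟩
  | symm x y h ih =>
      obtain ⟨γ, hb, hp⟩ := ih
      refine ⟨fun e => -γ e, fun u => by rw [bdry_negf, hb]; ring, ?_⟩
      rw [show (∑ e ∈ S, -γ e) = -(∑ e ∈ S, γ e) by rw [Finset.sum_neg_distrib]]
      rw [Int.cast_neg, hp, neg_sub]
  | trans x y z h1 h2 ih1 ih2 =>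
      obtain ⟨γ₁, hb1, hp1⟩ := ih1
      obtain ⟨γ₂, hb2, hp2⟩ := ih2
      refine ⟨fun e => γ₁ e + γ₂ e, fun u => by rw [bdry_addf, hb1, hb2]; ring, ?_⟩
      rw [show (∑ e ∈ S, (γ₁ e + γ₂ e)) = (∑ e ∈ S, γ₁ e) + (∑ e ∈ S, γ₂ e) from
        Finset.sum_add_distrib]
      rw [Int.cast_add, hp1, hp2]; ring

/-! ### Column computations for the twisted incidence matrix -/

lemma entry_nonloop (e : H.E) (hne : H.s e ≠ H.t e) (v : H.V) :
    twistedIncidence H S v e =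
      (if H.t e = v then 1 else 0) + (if e ∈ S then 1 else -1) * (if H.s e = v then 1 else 0) := by
  simp only [twistedIncidence, Matrix.of_apply]
  by_cases hs : H.s e = v <;> by_cases ht : H.t e = v
  · exact absurd (hs.trans ht.symm) hne
  · simp [hs, ht]
  · simp [hs, ht]
  · simp [hs, ht]

lemma colsum (y : H.V → ℤ) (e : H.E) :
    ∑ v, y v * twistedIncidence H S v e =
      if H.s e = H.t e then (if e ∈ S then 2 else 0) * y (H.s e)
      else y (H.t e) + (if e ∈ S then 1 else -1) * y (H.s e) := by
  by_cases hl : H.s e = H.t e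
  · rw [if_pos hl, Finset.sum_eq_single (H.s e)]
    · have h1 : twistedIncidence H S (H.s e) e = (if e ∈ S then 2 else 0) := by
        simp [twistedIncidence, hl.symm]
      rw [h1]; ring
    · intro v _ hvne
      have hsv : ¬ H.s e = v := fun h => hvne (h ▸ rfl)
      have htv : ¬ H.t e = v := by rw [← hl]; exact hsv
      simp [twistedIncidence, hsv, htv]
    · intro h; exact absurd (Finset.mem_univ _) h
  · rw [if_neg hl]
    have key : ∀ v, y v * twistedIncidence H S v e
        = (if H.t e = v then y v else 0)
          + (if H.s e = v then (if e ∈ S then 1 else -1) * y v else 0) := by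
      intro v
      rw [entry_nonloop (hne := hl)]
      split_ifs <;> ring
    rw [Finset.sum_congr rfl fun v _ => key v, Finset.sum_add_distrib,
        Finset.sum_ite_eq Finset.univ (H.t e) (fun v => y v),
        Finset.sum_ite_eq Finset.univ (H.s e) (fun v => (if e ∈ S then 1 else -1) * y v)]
    simp

lemma col_eq (e : H.E) (u : H.V) :
    twistedIncidence H S u e =
      (if u = H.t e then 1 else 0) + (if e ∈ S then 1 else -1) * (if u = H.s e then 1 else 0) := by
  by_cases hs : H.s e = u <;> by_cases ht : H.t e = u
  · have h1 : twistedIncidence H S u e = (if e ∈ S then 2 else 0) := by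
      simp [twistedIncidence, hs, ht]
    rw [h1, if_pos ht.symm, if_pos hs.symm]; split_ifs <;> ring
  · have h1 : twistedIncidence H S u e = (if e ∈ S then 1 else -1) := by
      simp [twistedIncidence, hs, ht]
    rw [h1, if_neg (show ¬ u = H.t e from fun h => ht h.symm), if_pos hs.symm]; split_ifs <;> ring
  · have h1 : twistedIncidence H S u e = 1 := by
      simp [twistedIncidence, hs, ht]
    rw [h1, if_pos ht.symm, if_neg (show ¬ u = H.s e from fun h => hs h.symm)]; split_ifs <;> ring
  · have h1 : twistedIncidence H S u e = 0 := by
      simp [twistedIncidence, hs, ht]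
    rw [h1, if_neg (show ¬ u = H.t e from fun h => ht h.symm), if_neg (show ¬ u = H.s e from fun h => hs h.symm)]; ring

lemma mulVec_single (e : H.E) (z : ℤ) :
    (twistedIncidence H S).mulVec (fun e' => if e' = e then z else 0)
      = fun u => twistedIncidence H S u e * z := by
  funext u
  show ∑ e', twistedIncidence H S u e' * (if e' = e then z else 0) = _
  rw [Finset.sum_eq_single e]
  · simp
  · intro e' _ h; simp [h]
  · intro h; exact absurd (Finset.mem_univ _) h

lemma mulVec_zerof :
    (twistedIncidence H S).mulVec (fun _ => (0 : ℤ)) = fun _ => 0 := by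
  funext u
  show ∑ e', twistedIncidence H S u e' * 0 = 0
  simp

lemma mulVec_addf (c₁ c₂ : H.E → ℤ) :
    (twistedIncidence H S).mulVec (fun e => c₁ e + c₂ e)
      = fun u => (twistedIncidence H S).mulVec c₁ u + (twistedIncidence H S).mulVec c₂ u := by
  funext u
  show ∑ e, twistedIncidence H S u e * (c₁ e + c₂ e) = _
  rw [show ((twistedIncidence H S).mulVec c₁ u + (twistedIncidence H S).mulVec c₂ u)
      = ∑ e, (twistedIncidence H S u e * c₁ e + twistedIncidence H S u e * c₂ e) from
    (Finset.sum_add_distrib).symm]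
  exact Finset.sum_congr rfl fun e _ => by ring

lemma mulVec_smulf (z : ℤ) (c : H.E → ℤ) :
    (twistedIncidence H S).mulVec (fun e => z * c e)
      = fun u => z * (twistedIncidence H S).mulVec c u := by
  funext u
  show ∑ e, twistedIncidence H S u e * (z * c e) = z * ∑ e, twistedIncidence H S u e * c e
  rw [Finset.mul_sum]
  exact Finset.sum_congr rfl fun e _ => by ring

/-- From a walk in the double cover, produce an explicit preimage of
`δ_{q} - sgn · δ_{p}` under the twisted incidence matrix. -/
lemma exists_pre {p q : H.V × ZMod 2} (h : H.Rch S p q) :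
    ∃ c : H.E → ℤ, (twistedIncidence H S).mulVec c
      = fun u => (if u = q.1 then 1 else 0) - sgn2 (q.2 - p.2) * (if u = p.1 then 1 else 0) := by
  induction h with
  | rel x y hxy =>
      obtain ⟨e, ho, he⟩ := hxy
      have hd : y.2 - x.2 = if e ∈ S then 1 else 0 := by rw [he]; ring
      rcases ho with ⟨hs, ht⟩ | ⟨hs, ht⟩
      · refine ⟨fun e' => if e' = e then 1 else 0, ?_⟩
        rw [mulVec_single]
        funext u
        rw [mul_one, col_eq, hs, ht, hd]
        by_cases hS : e ∈ S <;> simp [hS, sgn2_zero, sgn2_one] <;> split_ifs <;> ring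
      · refine ⟨fun e' => if e' = e then (if e ∈ S then 1 else -1) else 0, ?_⟩
        rw [mulVec_single]
        funext u
        rw [col_eq, hs, ht, hd]
        by_cases hS : e ∈ S <;> simp [hS, sgn2_zero, sgn2_one] <;> split_ifs <;> ring
  | refl x =>
      refine ⟨fun _ => 0, ?_⟩
      rw [mulVec_zerof]
      funext u
      rw [show x.2 - x.2 = 0 from sub_self _, sgn2_zero]
      ring
  | symm x y h ih =>
      obtain ⟨c, hc⟩ := ih
      refine ⟨fun e => (-sgn2 (y.2 - x.2)) * c e, ?_⟩
      rw [mulVec_smulf, hc]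
      funext u
      have hss : sgn2 (x.2 - y.2) = sgn2 (y.2 - x.2) := by
        rw [zmod2_sub_eq, zmod2_sub_eq, add_comm]
      rw [hss]
      have hmul := sgn2_mul_self (y.2 - x.2)
      linear_combination (if u = x.1 then (1 : ℤ) else 0) * hmul
  | trans x y z h1 h2 ih1 ih2 =>
      obtain ⟨c₁, hc1⟩ := ih1
      obtain ⟨c₂, hc2⟩ := ih2
      refine ⟨fun e => c₂ e + sgn2 (z.2 - y.2) * c₁ e, ?_⟩
      rw [mulVec_addf, mulVec_smulf, hc1, hc2]
      funext u
      have hsplit : sgn2 (z.2 - x.2) = sgn2 (z.2 - y.2) * sgn2 (y.2 - x.2) := by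
        rw [← sgn2_add]
        congr 1
        rw [zmod2_sub_eq, zmod2_sub_eq, zmod2_sub_eq]
        linear_combination -zmod2_add_self y.2
      rw [hsplit]
      ring

/-- A nonzero left-kernel vector forces the determinant to vanish. -/
lemma det_eq_zero_of_vecMul_eq_zero {n : Type*} [Fintype n] [DecidableEq n]
    {R : Type*} [CommRing R] [NoZeroDivisors R] (M : Matrix n n R) (x : n → R)
    (v : n) (hv : x v ≠ 0) (h : Matrix.vecMul x M = 0) : M.det = 0 := by
  have h2 : Matrix.vecMul x (M * M.adjugate) = 0 := by
    rw [← Matrix.vecMul_vecMul, h, Matrix.zero_vecMul]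
  rw [Matrix.mul_adjugate] at h2
  have h3 : M.det * x v = 0 := by
    have h4 := congrFun h2 v
    have h5 : Matrix.vecMul x (M.det • (1 : Matrix n n R)) v = M.det * x v := by
      show ∑ u, x u * (M.det • (1 : Matrix n n R)) u v = _
      rw [Finset.sum_eq_single v]
      · simp [Matrix.smul_apply, Matrix.one_apply]; ring
      · intro u _ hu; simp [Matrix.smul_apply, Matrix.one_apply, hu]
      · intro hm; exact absurd (Finset.mem_univ _) hm
    rw [h5] at h4
    simpa using h4
  rcases mul_eq_zero.mp h3 with hz | hz
  · exact hz
  · exact absurd hz hv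

end Multigraph

end DetAux

/-- Let `H` be a connected graph of genus one (so
`|E(H)| = |V(H)|`, and the twisted incidence matrix is square) and
`S ⊆ E(H)`.  If `H` contains a cycle meeting `S` in an odd number of edges
(equivalently, the unique cycle of `H` carries an odd number of `S`-edges)
then `det(B_S(H))² = 4`; otherwise `det(B_S(H))² = 0`.  (The determinant is
computed after identifying the column index set with the row index set by an
arbitrary bijection; its square does not depend on this choice.) -/
theorem det_sq_twistedIncidence_genus_one
    (H : Multigraph) (hconn : H.Connected)
    (hgenus : Fintype.card H.E = Fintype.card H.V)
    (S : Finset H.E) (σ : H.E ≃ H.V) :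
    ((∃ γ : H.E → ℤ, (∀ v, H.bdry γ v = 0) ∧ Odd (∑ e ∈ S, γ e)) →
      (Matrix.det (Matrix.of fun v w : H.V => twistedIncidence H S v (σ.symm w))) ^ 2 = 4) ∧
    ((¬ ∃ γ : H.E → ℤ, (∀ v, H.bdry γ v = 0) ∧ Odd (∑ e ∈ S, γ e)) →
      (Matrix.det (Matrix.of fun v w : H.V => twistedIncidence H S v (σ.symm w))) ^ 2 = 0) := by
  classical
  obtain ⟨hne, hconn2⟩ := hconn
  obtain ⟨v0⟩ := hne
  set A : Matrix H.V H.V ℤ := Matrix.of fun v w : H.V => twistedIncidence H S v (σ.symm w)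
    with hA
  have hAapp : ∀ v w, A v w = twistedIncidence H S v (σ.symm w) := fun v w => rfl
  have hAmul : ∀ c : H.E → ℤ, A.mulVec (fun u => c (σ.symm u))
      = (twistedIncidence H S).mulVec c := by
    intro c
    funext v
    show ∑ u, A v u * c (σ.symm u) = ∑ e, twistedIncidence H S v e * c e
    rw [← Equiv.sum_comp σ (fun u => A v u * c (σ.symm u))]
    refine Finset.sum_congr rfl fun e _ => ?_
    rw [hAapp, Equiv.symm_apply_apply]
  by_cases hodd : H.Rch S (v0, (0 : ZMod 2)) (v0, 1)
  · -- odd case: determinant is ±2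
    obtain ⟨γ, hγb, hγp⟩ := Multigraph.exists_chain hodd
    have hγ0 : ∀ v, H.bdry γ v = 0 := fun v => by rw [hγb v]; simp
    have hγodd : Odd (∑ e ∈ S, γ e) := by
      rcases Int.even_or_odd (∑ e ∈ S, γ e) with he | ho
      · exfalso
        obtain ⟨k, hk⟩ := he
        rw [hk] at hγp
        have hz : ((k + k : ℤ) : ZMod 2) = 0 := by
          push_cast
          exact Multigraph.zmod2_add_self _
        rw [hz] at hγp
        norm_num at hγp
      · exact ho
    have heven : (2 : ℤ) ∣ A.det := by
      have hM : Matrix.vecMul (fun _ => (1 : ZMod 2)) (A.map (Int.cast : ℤ → ZMod 2)) = 0 := by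
        funext w
        show ∑ v, (1 : ZMod 2) * (((A v w : ℤ) : ZMod 2)) = 0
        have h3 : ∑ v, (1 : ZMod 2) * (((A v w : ℤ) : ZMod 2)) = ((∑ v, A v w : ℤ) : ZMod 2) := by
          rw [Int.cast_sum]
          exact Finset.sum_congr rfl fun v _ => one_mul _
        have h2 := Multigraph.colsum (H := H) (S := S) (fun _ => (1:ℤ)) (σ.symm w)
        have h4 : (∑ v, A v w : ℤ) = ∑ v, (fun _ => (1:ℤ)) v * twistedIncidence H S v (σ.symm w) :=
          Finset.sum_congr rfl fun v _ => by rw [hAapp]; ring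
        rw [h3, h4, h2]
        split_ifs <;> norm_num <;> decide
      have hdet0 : (A.map (Int.cast : ℤ → ZMod 2)).det = 0 :=
        Multigraph.det_eq_zero_of_vecMul_eq_zero _ _ v0 one_ne_zero hM
      have hcast : ((A.det : ℤ) : ZMod 2) = 0 := by
        have := RingHom.map_det (Int.castRingHom (ZMod 2)) A
        rw [show ((A.det : ℤ) : ZMod 2) = (Int.castRingHom (ZMod 2)) A.det from rfl, this,
          RingHom.mapMatrix_apply]
        exact hdet0
      have := (ZMod.intCast_zmod_eq_zero_iff_dvd A.det 2).mp hcast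
      exact_mod_cast this
    have hpre : ∀ w : H.V, ∃ c : H.V → ℤ, A.mulVec c
        = fun u => (if u = w then (1:ℤ) else 0) + (if u = v0 then 1 else 0) := by
      intro w
      obtain ⟨b, hb⟩ := Multigraph.Rch_of_adj (hconn2 v0 w) (0 : ZMod 2)
      obtain ⟨c0, hc0⟩ := Multigraph.exists_pre hodd
      rcases Multigraph.zmod2_cases b with h0 | h1
      · rw [h0] at hb
        obtain ⟨c1, hc1⟩ := Multigraph.exists_pre hb
        refine ⟨fun u => c1 (σ.symm u) + c0 (σ.symm u), ?_⟩
        rw [show (fun u => c1 (σ.symm u) + c0 (σ.symm u))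
            = (fun u => (fun e => c1 e + c0 e) (σ.symm u)) from rfl,
          hAmul (fun e => c1 e + c0 e), Multigraph.mulVec_addf, hc1, hc0]
        funext u
        simp only
        rw [show ((0:ZMod 2) - 0) = 0 by ring, show ((1:ZMod 2) - 0) = 1 by ring,
          Multigraph.sgn2_zero, Multigraph.sgn2_one]
        ring
      · rw [h1] at hb
        obtain ⟨c1, hc1⟩ := Multigraph.exists_pre hb
        refine ⟨fun u => c1 (σ.symm u), ?_⟩
        rw [hAmul c1, hc1]
        funext u
        simp only
        rw [show ((1:ZMod 2) - 0) = 1 by ring, Multigraph.sgn2_one]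
        ring
    choose Cc hCc using hpre
    have hACP : A * (Matrix.of fun u w => Cc w u) =
        Matrix.of fun v w => ((if v = w then (1:ℤ) else 0) + (if v = v0 then 1 else 0)) := by
      ext v w
      rw [Matrix.mul_apply]
      have h5 := congrFun (hCc w) v
      exact h5
    have hdetP : (Matrix.of fun v w : H.V =>
        ((if v = w then (1:ℤ) else 0) + (if v = v0 then 1 else 0))).det = 2 := by
      have hrw : (Matrix.of fun v w : H.V => ((if v = w then (1:ℤ) else 0) + (if v = v0 then 1 else 0)))
          = 1 + Matrix.replicateCol Unit (fun v => if v = v0 then (1:ℤ) else 0) * Matrix.replicateRow Unit (fun _ => (1:ℤ)) := by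
        ext v w
        rw [Matrix.add_apply, Matrix.one_apply, Matrix.mul_apply]
        simp [Matrix.replicateCol_apply, Matrix.replicateRow_apply]
      rw [hrw, Matrix.det_one_add_replicateCol_mul_replicateRow]
      rw [show (dotProduct (fun _ : H.V => (1:ℤ)) (fun v => if v = v0 then (1:ℤ) else 0))
          = ∑ v, (if v = v0 then (1:ℤ) else 0) from
        Finset.sum_congr rfl fun v _ => one_mul _]
      rw [Finset.sum_ite_eq' Finset.univ v0 (fun _ => (1:ℤ))]
      norm_num
    have hdvd : A.det ∣ 2 :=
      ⟨(Matrix.of fun u w => Cc w u).det, by rw [← hdetP, ← hACP, Matrix.det_mul]⟩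
    have hnat : A.det.natAbs = 2 := by
      have h1 : A.det.natAbs ∣ 2 := by
        have := Int.natAbs_dvd_natAbs.mpr hdvd
        simpa using this
      have h2 : 2 ∣ A.det.natAbs := by
        have := Int.natAbs_dvd_natAbs.mpr heven
        simpa using this
      exact Nat.dvd_antisymm h1 h2
    have hsq : A.det ^ 2 = 4 := by
      rcases Int.natAbs_eq A.det with h | h <;> rw [h, hnat] <;> norm_num
    exact ⟨fun _ => hsq, fun hno => absurd ⟨γ, hγ0, hγodd⟩ hno⟩
  · -- even case: determinant vanishes
    have hprop : ∀ v : H.V, H.Rch S (v, 0) (v, 1) → False := by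
      intro v hv
      obtain ⟨b, hb⟩ := Multigraph.Rch_of_adj (hconn2 v0 v) (0 : ZMod 2)
      rcases Multigraph.zmod2_cases b with h0 | h1
      · rw [h0] at hb
        have h2 := Multigraph.Rch_shift hb
        simp only at h2
        rw [show (0:ZMod 2) + 1 = 1 from zero_add 1] at h2
        exact hodd (Relation.EqvGen.trans _ _ _ (Relation.EqvGen.trans _ _ _ hb hv)
          (Relation.EqvGen.symm _ _ h2))
      · rw [h1] at hb
        have h2 := Multigraph.Rch_shift hb
        simp only at h2
        rw [show (0:ZMod 2) + 1 = 1 from zero_add 1, Multigraph.zmod2_one_add_one] at h2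
        exact hodd (Relation.EqvGen.trans _ _ _ hb (Relation.EqvGen.trans _ _ _
          (Relation.EqvGen.symm _ _ hv) (Relation.EqvGen.symm _ _ h2)))
    have hreach : ∀ v, H.Rch S (v0,0) (v,0) ∨ H.Rch S (v0,0) (v,1) := by
      intro v
      obtain ⟨b, hb⟩ := Multigraph.Rch_of_adj (hconn2 v0 v) (0 : ZMod 2)
      rcases Multigraph.zmod2_cases b with h0 | h1
      · left; rwa [h0] at hb
      · right; rwa [h1] at hb
    have hnotboth : ∀ v, ¬(H.Rch S (v0,0) (v,0) ∧ H.Rch S (v0,0) (v,1)) := by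
      rintro v ⟨h0, h1⟩
      exact hprop v (Relation.EqvGen.trans _ _ _ (Relation.EqvGen.symm _ _ h0) h1)
    set f : H.V → ZMod 2 := fun v => if H.Rch S (v0,0) (v,0) then 0 else 1 with hf
    have hfr : ∀ v, H.Rch S (v0,0) (v, f v) := by
      intro v
      by_cases h : H.Rch S (v0,0) (v,0)
      · have h9 : f v = 0 := by rw [hf]; simp [h]
        rw [h9]; exact h
      · have h9 : f v = 1 := by rw [hf]; simp [h]
        rw [h9]
        rcases hreach v with h0 | h1
        · exact absurd h0 h
        · exact h1
    have hfu : ∀ (v : H.V) (b : ZMod 2), H.Rch S (v0,0) (v, b) → f v = b := by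
      intro v b hvb
      by_contra hnefb
      rcases Multigraph.zmod2_cases b with h | h <;> rcases Multigraph.zmod2_cases (f v) with h' | h'
      · exact hnefb (h'.trans h.symm)
      · exact hnotboth v ⟨h ▸ hvb, h' ▸ hfr v⟩
      · exact hnotboth v ⟨h' ▸ hfr v, h ▸ hvb⟩
      · exact hnefb (h'.trans h.symm)
    have hstep : ∀ e : H.E, f (H.t e) = f (H.s e) + (if e ∈ S then 1 else 0) := by
      intro e
      exact hfu _ _ (Relation.EqvGen.trans _ _ _ (hfr (H.s e))
        (Relation.EqvGen.rel _ _ ⟨e, Or.inl ⟨rfl, rfl⟩, rfl⟩))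
    set x : H.V → ℤ := fun v => Multigraph.sgn2 (f v) with hx
    have hxapp : ∀ v, x v = Multigraph.sgn2 (f v) := fun v => rfl
    have hker : Matrix.vecMul x A = 0 := by
      funext w
      show ∑ v, x v * A v w = (0 : H.V → ℤ) w
      have h4 : (∑ v, x v * A v w : ℤ) = ∑ v, x v * twistedIncidence H S v (σ.symm w) :=
        Finset.sum_congr rfl fun v _ => by rw [hAapp]
      rw [h4, Multigraph.colsum (H := H) (S := S) x (σ.symm w)]
      by_cases hl : H.s (σ.symm w) = H.t (σ.symm w)
      · rw [if_pos hl]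
        by_cases hS : σ.symm w ∈ S
        · exfalso
          have h6 := hstep (σ.symm w)
          rw [hl, if_pos hS] at h6
          exact Multigraph.zmod2_add_one_ne _ h6.symm
        · rw [if_neg hS]
          show (0 : ℤ) * x (H.s (σ.symm w)) = 0
          ring
      · rw [if_neg hl]
        have h6 := hstep (σ.symm w)
        rw [hxapp, hxapp, h6, Multigraph.sgn2_add]
        show Multigraph.sgn2 (f (H.s (σ.symm w))) * Multigraph.sgn2 (if σ.symm w ∈ S then 1 else 0)
            + (if σ.symm w ∈ S then 1 else -1) * Multigraph.sgn2 (f (H.s (σ.symm w))) = (0 : H.V → ℤ) w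
        by_cases hS : σ.symm w ∈ S
        · rw [if_pos hS, if_pos hS, Multigraph.sgn2_one]
          show _ = (0:ℤ)
          ring
        · rw [if_neg hS, if_neg hS, Multigraph.sgn2_zero]
          show _ = (0:ℤ)
          ring
    have hx0 : x v0 ≠ 0 := by
      have hf0 : f v0 = 0 := by
        rw [hf]
        simp [show H.Rch S (v0, (0:ZMod 2)) (v0, 0) from Relation.EqvGen.refl _]
      rw [hxapp, hf0, Multigraph.sgn2_zero]
      norm_num
    have hdet0 : A.det = 0 := Multigraph.det_eq_zero_of_vecMul_eq_zero A x v0 hx0 hker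
    refine ⟨?_, fun _ => by rw [hdet0]; norm_num⟩
    rintro ⟨γ, hγ0, hγodd⟩
    exfalso
    have hcast : ∀ v : H.V, ((H.bdry γ v : ℤ) : ZMod 2)
        = ∑ e, (γ e : ZMod 2) * ((if H.t e = v then 1 else 0) - (if H.s e = v then 1 else 0)) := by
      intro v
      rw [Multigraph.bdry, Int.cast_sum]
      refine Finset.sum_congr rfl fun e _ => ?_
      split_ifs <;> push_cast <;> ring
    have key : ((∑ e ∈ S, γ e : ℤ) : ZMod 2) = 0 := by
      calc ((∑ e ∈ S, γ e : ℤ) : ZMod 2)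
          = ∑ e ∈ S, ((γ e : ℤ) : ZMod 2) := by rw [Int.cast_sum]
        _ = ∑ e : H.E, (if e ∈ S then ((γ e : ZMod 2)) else 0) := by
              rw [Finset.sum_ite_mem, Finset.univ_inter]
        _ = ∑ e : H.E, (γ e : ZMod 2) * (f (H.t e) - f (H.s e)) := by
              refine Finset.sum_congr rfl fun e _ => ?_
              have h7 : f (H.t e) - f (H.s e) = (if e ∈ S then 1 else 0) := by
                rw [hstep e]; ring
              rw [h7]
              split_ifs <;> ring
        _ = ∑ e : H.E, ∑ v, f v * ((γ e : ZMod 2)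
              * ((if H.t e = v then 1 else 0) - (if H.s e = v then 1 else 0))) := by
              refine Finset.sum_congr rfl fun e _ => ?_
              rw [eq_comm]
              have h8 : ∀ v, f v * ((γ e : ZMod 2)
                    * ((if H.t e = v then 1 else 0) - (if H.s e = v then 1 else 0)))
                  = (if H.t e = v then f v * (γ e : ZMod 2) else 0)
                    - (if H.s e = v then f v * (γ e : ZMod 2) else 0) := by
                intro v; split_ifs <;> ring
              rw [Finset.sum_congr rfl fun v _ => h8 v, Finset.sum_sub_distrib,
                  Finset.sum_ite_eq Finset.univ (H.t e) (fun v => f v * (γ e : ZMod 2)),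
                  Finset.sum_ite_eq Finset.univ (H.s e) (fun v => f v * (γ e : ZMod 2))]
              simp only [Finset.mem_univ, if_true]
              ring
        _ = ∑ v, f v * ∑ e, (γ e : ZMod 2)
              * ((if H.t e = v then 1 else 0) - (if H.s e = v then 1 else 0)) := by
              rw [Finset.sum_comm]
              exact Finset.sum_congr rfl fun v _ => (Finset.mul_sum _ _ _).symm
        _ = ∑ v, f v * ((H.bdry γ v : ℤ) : ZMod 2) :=
              Finset.sum_congr rfl fun v _ => by rw [hcast v]
        _ = 0 := by
              refine Finset.sum_eq_zero fun v _ => ?_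
              rw [hγ0 v]
              norm_num
    obtain ⟨k, hk⟩ := hγodd
    rw [hk] at key
    have h10 : ((2 * k + 1 : ℤ) : ZMod 2) = 1 := by
      push_cast
      rw [show ((2:ZMod 2)) = 0 from by decide]
      ring
    rw [h10] at key
    exact one_ne_zero key
end

section
/- Let p: G̃ → G be a connected free double cover of finite graphs, described by a spanning tree T ⊆ G and nonempty S ⊆ E(G)\E(T) with a distinguished edge e_0 ∈ S. For the fundamental cycle basis γ̃_0, γ̃_i^± (i=1,...,g-1) of H_1(G̃,Z) with respect to the spanning tree T̃ = T̃^+ ∪ T̃^- ∪ {ẽ_0^+}, the pushforward p_* satisfies: p_*(γ̃_0) = 2γ_0; p_*(γ̃_i^±) = γ_i ∓ σ_i γ_0 for e_i ∈ S\{e_0}; and p_*(γ̃_i^±) = γ_i for e_i ∉ S, where γ_0,...,γ_{g-1} is the fundamental cycle basis of H_1(G,Z) with respect to T and σ_i ∈ {±1} records which sheet contains s(ẽ_i^+). -/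
set_option maxHeartbeats 1000000

attribute [local instance 10] Classical.propDecidable

/-- `γ` is the fundamental cycle of the spanning tree `T` and the
complementary edge `e₀`: the unique `1`-cycle supported on `T ∪ {e₀}` with
coefficient `1` on `e₀`. -/
def IsFundCycle (G : Multigraph) (T : Set G.E) (e₀ : G.E) (γ : G.E → ℤ) : Prop :=
  (∀ v, G.bdry γ v = 0) ∧ (∀ f, f ∉ T → f ≠ e₀ → γ f = 0) ∧ γ e₀ = 1

/-- The sign `σ_i ∈ {±1}` recording the sheet containing the source of the
chosen lift of an edge. -/
def liftSgn {H G : Multigraph} (σ : H.V → Bool) (liftP : G.E → H.E) (e : G.E) : ℤ :=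
  if σ (H.s (liftP e)) = true then 1 else -1

section AuxLemmas

lemma bdry_pairing (G : Multigraph) (γ : G.E → ℤ) (χ : G.V → ℤ) :
    ∑ e, γ e * (χ (G.t e) - χ (G.s e)) = ∑ v, χ v * G.bdry γ v := by
  unfold Multigraph.bdry
  simp only [Finset.mul_sum]
  rw [Finset.sum_comm]
  refine Finset.sum_congr rfl fun e _ => ?_
  symm
  have h2 : ∀ v₀ : G.V, ∑ v, χ v * (if v₀ = v then (1:ℤ) else 0) = χ v₀ := by
    intro v₀; simp [mul_ite]
  calc ∑ v, χ v * (γ e * ((if G.t e = v then (1:ℤ) else 0) - (if G.s e = v then 1 else 0)))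
      = ∑ v, (γ e * (χ v * (if G.t e = v then (1:ℤ) else 0))
          - γ e * (χ v * (if G.s e = v then (1:ℤ) else 0))) :=
        Finset.sum_congr rfl fun v _ => by ring
    _ = γ e * (∑ v, χ v * (if G.t e = v then (1:ℤ) else 0))
          - γ e * (∑ v, χ v * (if G.s e = v then (1:ℤ) else 0)) := by
        rw [Finset.sum_sub_distrib, Finset.mul_sum, Finset.mul_sum]
    _ = γ e * (χ (G.t e) - χ (G.s e)) := by rw [h2, h2]; ring


lemma eqvGen_of_empty {α} {r : α → α → Prop} (h : ∀ a b, ¬ r a b) {x y}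
    (hxy : Relation.EqvGen r x y) : x = y := by
  induction hxy with
  | rel a b h' => exact absurd h' (h a b)
  | refl => rfl
  | symm a b _ ih => exact ih.symm
  | trans a b c _ _ ih1 ih2 => exact ih1.trans ih2

lemma card_le_quot_add (G : Multigraph) (F : Finset G.E) :
    Fintype.card G.V ≤ Fintype.card (Quotient (Relation.EqvGen.setoid (G.adjOn ↑F))) + F.card := by
  induction F using Finset.induction_on with
  | empty =>
      simp only [Finset.card_empty, add_zero]
      refine Fintype.card_le_of_injective (fun v => (Quotient.mk _ v)) ?_
      intro a b hab
      exact eqvGen_of_empty (fun a b h => by rcases h with ⟨e, he, -⟩; simp at he)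
        (Quotient.exact hab)
  | @insert a F' ha ih =>
      refine le_trans ih ?_
      rw [Finset.card_insert_of_notMem ha]
      have key : Fintype.card (Quotient (Relation.EqvGen.setoid (G.adjOn ↑F'))) ≤
          Fintype.card (Quotient (Relation.EqvGen.setoid (G.adjOn ↑(insert a F')))) + 1 := by
        set s₁ := Relation.EqvGen.setoid (G.adjOn ↑F')
        set s₂ := Relation.EqvGen.setoid (G.adjOn ↑(insert a F'))
        set g : Quotient s₁ → Quotient s₁ :=
          fun q => if q = Quotient.mk s₁ (G.t a) then Quotient.mk s₁ (G.s a) else q with hg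
        have hinj : ∀ x y : G.V, Relation.EqvGen (G.adjOn ↑(insert a F')) x y →
            g (Quotient.mk s₁ x) = g (Quotient.mk s₁ y) := by
          intro x y h
          induction h with
          | rel u v h' =>
              rcases h' with ⟨e, he, hs, ht⟩
              rw [Finset.coe_insert, Set.mem_insert_iff] at he
              rcases he with rfl | he
              · subst hs; subst ht
                simp [hg]
              · have : Quotient.mk s₁ u = Quotient.mk s₁ v :=
                  Quotient.sound (Relation.EqvGen.rel _ _ ⟨e, he, hs, ht⟩)
                rw [this]
          | refl => rfl
          | symm _ _ _ ih' => exact ih'.symm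
          | trans _ _ _ _ _ ih1 ih2 => exact ih1.trans ih2
        have hmono : ∀ x y : G.V, Relation.EqvGen (G.adjOn ↑F') x y →
            Relation.EqvGen (G.adjOn ↑(insert a F')) x y := by
          intro x y h
          refine Relation.EqvGen.mono ?_ x y h
          rintro u v ⟨e, he, hs, ht⟩
          exact ⟨e, by simp [Finset.mem_coe.1 he], hs, ht⟩
        set π : Quotient s₁ → Quotient s₂ := Quotient.map' id (fun x y h => hmono x y h) with hπ
        have hπmk : ∀ x : G.V, π (Quotient.mk s₁ x) = Quotient.mk s₂ x := fun x => rfl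
        have hj : Function.Injective
            (fun q : {q : Quotient s₁ // q ≠ Quotient.mk s₁ (G.t a)} => π q.1) := by
          rintro ⟨q, hq⟩ ⟨q', hq'⟩ h
          obtain ⟨x, rfl⟩ := q.exists_rep
          obtain ⟨y, rfl⟩ := q'.exists_rep
          simp only [hπmk] at h
          have h2 : Relation.EqvGen (G.adjOn ↑(insert a F')) x y := Quotient.exact h
          have h3 := hinj x y h2
          simp only [hg, if_neg hq, if_neg hq'] at h3
          exact Subtype.ext h3
        have hcard := Fintype.card_le_of_injective _ hj
        have hcs : Fintype.card {q : Quotient s₁ // q ≠ Quotient.mk s₁ (G.t a)}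
            = Fintype.card (Quotient s₁) - 1 := by
          rw [Fintype.card_subtype_compl]
          simp
        omega
      omega

lemma spanning_bound (G : Multigraph) (F : Finset G.E)
    (hconn : ∀ v w : G.V, Relation.EqvGen (G.adjOn ↑F) v w) :
    Fintype.card G.V ≤ F.card + 1 := by
  have h := card_le_quot_add G F
  have h1 : Fintype.card (Quotient (Relation.EqvGen.setoid (G.adjOn ↑F))) ≤ 1 := by
    rw [Fintype.card_le_one_iff]
    intro a b
    obtain ⟨x, rfl⟩ := a.exists_rep
    obtain ⟨y, rfl⟩ := b.exists_rep
    exact Quotient.sound (hconn x y)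
  omega

lemma bridge (G : Multigraph) (T : Finset G.E)
    (hT : (∀ v w : G.V, Relation.EqvGen (G.adjOn ↑T) v w) ∧ T.card + 1 = Fintype.card G.V)
    (f : G.E) (hf : f ∈ T) :
    ¬ Relation.EqvGen (G.adjOn ↑(T.erase f)) (G.s f) (G.t f) := by
  intro hbad
  have hspan : ∀ v w : G.V, Relation.EqvGen (G.adjOn ↑(T.erase f)) v w := by
    intro v w
    have h := hT.1 v w
    induction h with
    | rel x y h' =>
        rcases h' with ⟨e, he, hs, ht⟩
        by_cases heq : e = f
        · subst heq; subst hs; subst ht; exact hbad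
        · exact Relation.EqvGen.rel _ _
            ⟨e, by simp [Finset.mem_erase, heq, Finset.mem_coe.1 he], hs, ht⟩
    | refl x => exact Relation.EqvGen.refl x
    | symm _ _ _ ih => exact ih.symm _ _
    | trans _ _ _ _ _ ih1 ih2 => exact ih1.trans _ _ _ ih2
  have hb := spanning_bound G (T.erase f) hspan
  have hc : (T.erase f).card = T.card - 1 := Finset.card_erase_of_mem hf
  have hpos : 0 < T.card := Finset.card_pos.2 ⟨f, hf⟩
  omega

lemma cycle_supported_tree (G : Multigraph) (T : Finset G.E)
    (hT : (∀ v w : G.V, Relation.EqvGen (G.adjOn ↑T) v w) ∧ T.card + 1 = Fintype.card G.V)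
    (γ : G.E → ℤ) (hc : ∀ v, G.bdry γ v = 0) (hs : ∀ f, f ∉ T → γ f = 0) :
    ∀ f, γ f = 0 := by
  intro f
  by_cases hf : f ∈ T
  swap
  · exact hs f hf
  set χ : G.V → ℤ :=
    fun v => if Relation.EqvGen (G.adjOn ↑(T.erase f)) (G.s f) v then 1 else 0 with hχ
  have h0 : ∑ e, γ e * (χ (G.t e) - χ (G.s e)) = 0 := by
    rw [bdry_pairing]
    simp [hc]
  have h1 : ∑ e, γ e * (χ (G.t e) - χ (G.s e)) = ∑ e, (if e = f then -γ f else 0) := by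
    refine Finset.sum_congr rfl fun e _ => ?_
    by_cases hef : e = f
    · subst hef
      rw [if_pos rfl]
      have hA : χ (G.s e) = 1 := if_pos (Relation.EqvGen.refl _)
      have hB : χ (G.t e) = 0 := if_neg (bridge G T hT e hf)
      rw [hA, hB]; ring
    · rw [if_neg hef]
      by_cases hg : γ e = 0
      · simp [hg]
      have heT : e ∈ T := by
        by_contra h
        exact hg (hs e h)
      have hrel : G.adjOn ↑(T.erase f) (G.s e) (G.t e) :=
        ⟨e, by simp [Finset.mem_erase, hef, heT], rfl, rfl⟩
      have hst : χ (G.t e) = χ (G.s e) := by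
        simp only [hχ]
        by_cases h : Relation.EqvGen (G.adjOn ↑(T.erase f)) (G.s f) (G.s e)
        · rw [if_pos (h.trans _ _ _ (Relation.EqvGen.rel _ _ hrel)), if_pos h]
        · rw [if_neg, if_neg h]
          intro hcon
          exact h (hcon.trans _ _ _ ((Relation.EqvGen.rel _ _ hrel).symm _ _))
      rw [hst]; ring
  rw [h1] at h0
  simp only [Finset.sum_ite_eq', Finset.mem_univ, if_pos] at h0
  omega

lemma bdry_sub (G : Multigraph) (γ₁ γ₂ : G.E → ℤ) (v : G.V) :
    G.bdry (fun e => γ₁ e - γ₂ e) v = G.bdry γ₁ v - G.bdry γ₂ v := by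
  unfold Multigraph.bdry
  rw [← Finset.sum_sub_distrib]
  exact Finset.sum_congr rfl fun e _ => by ring

lemma cycles_eq_of_agree (G : Multigraph) (T : Finset G.E)
    (hT : (∀ v w : G.V, Relation.EqvGen (G.adjOn ↑T) v w) ∧ T.card + 1 = Fintype.card G.V)
    (δ δ' : G.E → ℤ) (hδ : ∀ v, G.bdry δ v = 0) (hδ' : ∀ v, G.bdry δ' v = 0)
    (hagree : ∀ f, f ∉ T → δ f = δ' f) : δ = δ' := by
  funext f
  have hz : ∀ v, G.bdry (fun e => δ e - δ' e) v = 0 := by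
    intro v; rw [bdry_sub, hδ, hδ']; ring
  have := cycle_supported_tree G T hT _ hz (fun f hf => by rw [hagree f hf]; ring) f
  omega

lemma bdry_linear (G : Multigraph) (a b : ℤ) (γ₁ γ₂ : G.E → ℤ) (v : G.V) :
    G.bdry (fun e => a * γ₁ e + b * γ₂ e) v = a * G.bdry γ₁ v + b * G.bdry γ₂ v := by
  unfold Multigraph.bdry
  rw [Finset.mul_sum, Finset.mul_sum, ← Finset.sum_add_distrib]
  exact Finset.sum_congr rfl fun e _ => by ring

lemma bdry_zero_of_comb (G : Multigraph) (γ₁ γ₂ δ : G.E → ℤ) (a b : ℤ)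
    (h₁ : ∀ v, G.bdry γ₁ v = 0) (h₂ : ∀ v, G.bdry γ₂ v = 0)
    (h : ∀ e, δ e = a * γ₁ e + b * γ₂ e) : ∀ v, G.bdry δ v = 0 := by
  intro v
  have hδ : G.bdry δ v = G.bdry (fun e => a * γ₁ e + b * γ₂ e) v := by
    congr 1
    funext e
    exact h e
  rw [hδ, bdry_linear, h₁, h₂]
  ring

end AuxLemmas

/-- For a connected free double cover `p : G̃ → G` described
by a spanning tree `T` and a nonempty set `S` of complementary edges with a
distinguished edge `e₀ ∈ S`, the pushforward of the fundamental cycle basis of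
`H₁(G̃, ℤ)` with respect to `T̃ = T̃⁺ ∪ T̃⁻ ∪ {ẽ₀⁺}` is:
`p_*(γ̃₀) = 2γ₀`; `p_*(γ̃ᵢ^±) = γᵢ ∓ σᵢ γ₀` for `eᵢ ∈ S \ {e₀}`; and
`p_*(γ̃ᵢ^±) = γᵢ` for `eᵢ ∉ S`. -/
theorem pushforward_fundamental_cycles
    (G H : Multigraph) (hG : G.Connected) (hH : H.Connected)
    (c : FreeDoubleCover H G)
    (T : Finset G.E)
    (hT : (∀ v w : G.V, Relation.EqvGen (G.adjOn ↑T) v w) ∧ T.card + 1 = Fintype.card G.V)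
    (S : Finset G.E) (hST : Disjoint S T)
    (σ : H.V → Bool) (hσ : IsCoverWithSign c σ S)
    (e₀ : G.E) (he₀ : e₀ ∈ S)
    -- a chosen lift `ẽ⁺` for every edge `e` of `G`
    (liftP : G.E → H.E) (hlift : ∀ e, c.pE (liftP e) = e)
    -- edges not in `S` have their chosen lift in the sheet `T̃⁺`
    (hsheet : ∀ e, e ∉ S → σ (H.s (liftP e)) = true)
    -- `ẽ₀⁺` is oriented from the sheet `T̃⁺` to the sheet `T̃⁻`
    (he₀s : σ (H.s (liftP e₀)) = true) (he₀t : σ (H.t (liftP e₀)) = false)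
    -- fundamental cycles of `G` with respect to `T`
    (γbase : G.E → (G.E → ℤ)) (hbase : ∀ e, e ∉ T → IsFundCycle G ↑T e (γbase e))
    -- fundamental cycles of `G̃` with respect to `T̃ = p⁻¹(T) ∪ {ẽ₀⁺}`
    (γ₀t : H.E → ℤ)
    (h₀t : IsFundCycle H {f | c.pE f ∈ T ∨ f = liftP e₀} (c.ιE (liftP e₀)) γ₀t)
    (γP γM : G.E → (H.E → ℤ))
    (hP : ∀ e, e ∉ T → e ≠ e₀ →
      IsFundCycle H {f | c.pE f ∈ T ∨ f = liftP e₀} (liftP e) (γP e))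
    (hM : ∀ e, e ∉ T → e ≠ e₀ →
      IsFundCycle H {f | c.pE f ∈ T ∨ f = liftP e₀} (c.ιE (liftP e)) (γM e)) :
    (c.pushCh γ₀t = fun e' => 2 * γbase e₀ e') ∧
    (∀ e, e ∉ T → e ≠ e₀ → e ∈ S →
      c.pushCh (γP e) = (fun e' => γbase e e' - liftSgn σ liftP e * γbase e₀ e') ∧
      c.pushCh (γM e) = (fun e' => γbase e e' + liftSgn σ liftP e * γbase e₀ e')) ∧
    (∀ e, e ∉ T → e ∉ S →
      c.pushCh (γP e) = γbase e ∧ c.pushCh (γM e) = γbase e) := by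
  classical
  obtain ⟨hσι, hσS⟩ := hσ
  have he₀T : e₀ ∉ T := fun h => Finset.disjoint_left.1 hST he₀ h
  have hlinj : ∀ e e' : G.E, liftP e = liftP e' → e = e' := fun e e' h => by
    rw [← hlift e, h, hlift]
  have hpEl : ∀ e : G.E, c.pE (c.ιE (liftP e)) = e := fun e => by rw [c.pE_ι, hlift]
  -- the fiber of pE over e
  have hfib : ∀ e : G.E, Finset.univ.filter (fun f => c.pE f = e)
      = {liftP e, c.ιE (liftP e)} := by
    intro e
    ext f
    simp only [Finset.mem_filter, Finset.mem_univ, true_and, Finset.mem_insert,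
      Finset.mem_singleton]
    constructor
    · intro h
      exact c.fiberE (liftP e) f (by rw [hlift, h])
    · rintro (rfl | rfl)
      · exact hlift e
      · exact hpEl e
  have hfiber : ∀ (γ : H.E → ℤ) (e : G.E),
      c.pushCh γ e = γ (liftP e) + γ (c.ιE (liftP e)) := by
    intro γ e
    rw [FreeDoubleCover.pushCh]
    rw [hfib e, Finset.sum_pair (Ne.symm (c.ιE_ne (liftP e)))]
  -- pushforward of a cycle is a cycle
  have hpush_cycle : ∀ γ : H.E → ℤ, (∀ w, H.bdry γ w = 0) →
      ∀ v, G.bdry (c.pushCh γ) v = 0 := by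
    intro γ hγ v
    have h0 := bdry_pairing H γ (fun x => if c.pV x = v then (1:ℤ) else 0)
    simp only [hγ, mul_zero, Finset.sum_const_zero] at h0
    unfold Multigraph.bdry
    have hc1 : ∑ e, c.pushCh γ e * ((if G.t e = v then (1:ℤ) else 0)
          - (if G.s e = v then 1 else 0))
        = ∑ f, γ f * ((if G.t (c.pE f) = v then (1:ℤ) else 0)
          - (if G.s (c.pE f) = v then 1 else 0)) := by
      rw [← Finset.sum_fiberwise_of_maps_to (g := c.pE)
        (fun f _ => Finset.mem_univ (c.pE f))
        (fun f => γ f * ((if G.t (c.pE f) = v then (1:ℤ) else 0)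
          - (if G.s (c.pE f) = v then 1 else 0)))]
      refine Finset.sum_congr rfl fun e _ => ?_
      have hinner : ∑ f ∈ Finset.univ.filter (fun f => c.pE f = e),
          γ f * ((if G.t (c.pE f) = v then (1:ℤ) else 0)
            - (if G.s (c.pE f) = v then 1 else 0))
          = ∑ f ∈ Finset.univ.filter (fun f => c.pE f = e),
          γ f * ((if G.t e = v then (1:ℤ) else 0)
            - (if G.s e = v then 1 else 0)) := by
        refine Finset.sum_congr rfl fun f hf => ?_
        rw [(Finset.mem_filter.1 hf).2]
      rw [hinner, ← Finset.sum_mul]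
      rfl
    rw [hc1]
    calc ∑ f, γ f * ((if G.t (c.pE f) = v then (1:ℤ) else 0)
          - (if G.s (c.pE f) = v then 1 else 0))
        = ∑ f, γ f * ((if c.pV (H.t f) = v then (1:ℤ) else 0)
          - (if c.pV (H.s f) = v then 1 else 0)) := by
          refine Finset.sum_congr rfl fun f _ => ?_
          rw [c.s_comm, c.t_comm]
      _ = 0 := h0
  -- the crossing weight
  set Φ : H.E → ℤ := fun f => (if σ (H.t f) = true then (1:ℤ) else 0)
    - (if σ (H.s f) = true then 1 else 0) with hΦdef
  have hcross : ∀ γ : H.E → ℤ, (∀ w, H.bdry γ w = 0) → ∑ f, γ f * Φ f = 0 := by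
    intro γ hγ
    have h := bdry_pairing H γ (fun x => if σ x = true then (1:ℤ) else 0)
    simpa [hγ] using h
  have hTnotS : ∀ f : H.E, c.pE f ∈ T → Φ f = 0 := by
    intro f hfT
    have hfS : c.pE f ∉ S := fun h => Finset.disjoint_left.1 hST h hfT
    have heq : σ (H.s f) = σ (H.t f) := by
      by_contra hne
      exact hfS ((hσS f).2 hne)
    simp [hΦdef, heq]
  have hΦι : ∀ f : H.E, Φ (c.ιE f) = - Φ f := by
    intro f
    simp only [hΦdef, c.ιV_s, c.ιV_t, hσι]
    cases hs' : σ (H.s f) <;> cases ht' : σ (H.t f) <;> simp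
  have hΦl₀ : Φ (liftP e₀) = -1 := by simp [hΦdef, he₀s, he₀t]
  have hΦι₀ : Φ (c.ιE (liftP e₀)) = 1 := by rw [hΦι, hΦl₀]; ring
  have hΦS : ∀ e, e ∈ S → Φ (liftP e) = - liftSgn σ liftP e := by
    intro e he
    have hne : σ (H.s (liftP e)) ≠ σ (H.t (liftP e)) :=
      (hσS (liftP e)).1 (by rw [hlift]; exact he)
    revert hne
    simp only [hΦdef, liftSgn]
    cases hs' : σ (H.s (liftP e)) <;> cases ht' : σ (H.t (liftP e)) <;> simp
  have hΦnS : ∀ e, e ∉ S → Φ (liftP e) = 0 := by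
    intro e he
    have heq : σ (H.s (liftP e)) = σ (H.t (liftP e)) := by
      by_contra hne
      exact he (by rw [← hlift e]; exact (hσS (liftP e)).2 hne)
    simp [hΦdef, heq]
  -- extracting support information
  have hsupp' : ∀ (γ : H.E → ℤ) (d : H.E),
      (∀ f, f ∉ {f | c.pE f ∈ T ∨ f = liftP e₀} → f ≠ d → γ f = 0) →
      ∀ f, c.pE f ∉ T → f ≠ liftP e₀ → f ≠ d → γ f = 0 := by
    intro γ d hsupp f h1 h2 h3
    refine hsupp f ?_ h3
    intro hmem
    rcases hmem with h | h
    · exact h1 h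
    · exact h2 h
  -- the pushforward vanishes away from T, e₀ and the image of d
  have hoff : ∀ (γ : H.E → ℤ) (d : H.E),
      (∀ f, f ∉ {f | c.pE f ∈ T ∨ f = liftP e₀} → f ≠ d → γ f = 0) →
      ∀ e', e' ∉ T → e' ≠ e₀ → e' ≠ c.pE d → c.pushCh γ e' = 0 := by
    intro γ d hsupp e' h1 h2 h3
    rw [hfiber]
    have z : ∀ f, c.pE f = e' → γ f = 0 := by
      intro f hf
      refine hsupp' γ d hsupp f (by rw [hf]; exact h1) ?_ ?_
      · intro h; exact h2 (by rw [← hf, h, hlift])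
      · intro h; exact h3 (by rw [← hf, h])
    rw [z _ (hlift e'), z _ (hpEl e')]
    ring
  have hreduce : ∀ (γ : H.E → ℤ) (K : Finset H.E),
      (∀ f, f ∉ K → γ f * Φ f = 0) → (∀ w, H.bdry γ w = 0) →
      ∑ f ∈ K, γ f * Φ f = 0 := by
    intro γ K hz hγ
    rw [Finset.sum_subset (Finset.subset_univ K) (fun f _ hf => hz f hf)]
    exact hcross γ hγ
  have hcoe : ∀ f : G.E, f ∉ T → f ∉ (↑T : Set G.E) := fun f hf h => hf h
  -- Part 1 : the cycle γ̃₀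
  obtain ⟨h₀c, h₀supp, h₀e⟩ := h₀t
  have hK0 : ∑ f ∈ ({liftP e₀, c.ιE (liftP e₀)} : Finset H.E), γ₀t f * Φ f = 0 := by
    refine hreduce γ₀t _ ?_ h₀c
    intro f hf
    simp only [Finset.mem_insert, Finset.mem_singleton, not_or] at hf
    by_cases hT' : c.pE f ∈ T
    · rw [hTnotS f hT']; ring
    · rw [hsupp' γ₀t _ h₀supp f hT' hf.1 hf.2]; ring
  have hA0 : γ₀t (liftP e₀) = 1 := by
    rw [Finset.sum_pair (Ne.symm (c.ιE_ne _)), hΦl₀, hΦι₀, h₀e] at hK0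
    linarith
  have part1 : c.pushCh γ₀t = fun e' => 2 * γbase e₀ e' := by
    refine cycles_eq_of_agree G T hT _ _ (hpush_cycle _ h₀c) ?_ ?_
    · exact bdry_zero_of_comb G (γbase e₀) (γbase e₀) _ 1 1 (hbase e₀ he₀T).1
        (hbase e₀ he₀T).1 (fun x => by ring)
    · intro f hf
      by_cases hfe : f = e₀
      · subst hfe
        rw [hfiber, hA0, h₀e, (hbase f he₀T).2.2]
        ring
      · have hz1 : γ₀t (liftP f) = 0 := by
          refine hsupp' γ₀t _ h₀supp (liftP f) (by rw [hlift]; exact hf) ?_ ?_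
          · intro h; exact hfe (hlinj _ _ h)
          · intro h; exact hfe (by rw [← hlift f, h, hpEl])
        have hz2 : γ₀t (c.ιE (liftP f)) = 0 := by
          refine hsupp' γ₀t _ h₀supp _ (by rw [hpEl]; exact hf) ?_ ?_
          · intro h; exact hfe (by rw [← hpEl f, h, hlift])
          · intro h
            exact hfe (hlinj _ _ (by rw [← c.ιE_inv (liftP f), h, c.ιE_inv]))
        rw [hfiber, hz1, hz2, (hbase e₀ he₀T).2.1 f (hcoe f hf) hfe]
        ring
  -- Parts 2 and 3: the cycles γ̃ᵢ^±
  have hmain : ∀ e, e ∉ T → e ≠ e₀ →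
      c.pushCh (γP e) = (fun e' => γbase e e' + Φ (liftP e) * γbase e₀ e') ∧
      c.pushCh (γM e) = (fun e' => γbase e e' - Φ (liftP e) * γbase e₀ e') := by
    intro e heT hee₀
    obtain ⟨hPc, hPsupp, hPe⟩ := hP e heT hee₀
    obtain ⟨hMc, hMsupp, hMe⟩ := hM e heT hee₀
    have nePl₀ : liftP e ≠ liftP e₀ := fun h => hee₀ (hlinj _ _ h)
    have nePι₀ : liftP e ≠ c.ιE (liftP e₀) := fun h => hee₀ (by rw [← hlift e, h, hpEl])
    have neιl₀ : c.ιE (liftP e) ≠ liftP e₀ := fun h => hee₀ (by rw [← hpEl e, h, hlift])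
    have neιι₀ : c.ιE (liftP e) ≠ c.ιE (liftP e₀) := fun h =>
      hee₀ (hlinj _ _ (by rw [← c.ιE_inv (liftP e), h, c.ιE_inv]))
    have neselfP : liftP e ≠ c.ιE (liftP e) := Ne.symm (c.ιE_ne _)
    have nel₀ι₀ : liftP e₀ ≠ c.ιE (liftP e₀) := Ne.symm (c.ιE_ne _)
    have hPz1 : γP e (c.ιE (liftP e)) = 0 :=
      hsupp' _ _ hPsupp _ (by rw [hpEl]; exact heT) neιl₀ (Ne.symm neselfP)
    have hPz2 : γP e (c.ιE (liftP e₀)) = 0 :=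
      hsupp' _ _ hPsupp _ (by rw [hpEl]; exact he₀T) (Ne.symm nel₀ι₀) (Ne.symm nePι₀)
    have hMz1 : γM e (liftP e) = 0 :=
      hsupp' _ _ hMsupp _ (by rw [hlift]; exact heT) nePl₀ neselfP
    have hMz2 : γM e (c.ιE (liftP e₀)) = 0 :=
      hsupp' _ _ hMsupp _ (by rw [hpEl]; exact he₀T) (Ne.symm nel₀ι₀) (Ne.symm neιι₀)
    set K : Finset H.E := {liftP e₀, c.ιE (liftP e₀), liftP e, c.ιE (liftP e)} with hKdef
    have hKexp : ∀ γ : H.E → ℤ, ∑ f ∈ K, γ f * Φ f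
        = γ (liftP e₀) * Φ (liftP e₀) + (γ (c.ιE (liftP e₀)) * Φ (c.ιE (liftP e₀))
          + (γ (liftP e) * Φ (liftP e) + γ (c.ιE (liftP e)) * Φ (c.ιE (liftP e)))) := by
      intro γ
      rw [hKdef]
      rw [Finset.sum_insert (by
        simp only [Finset.mem_insert, Finset.mem_singleton, not_or]
        exact ⟨nel₀ι₀, Ne.symm nePl₀, Ne.symm neιl₀⟩)]
      rw [Finset.sum_insert (by
        simp only [Finset.mem_insert, Finset.mem_singleton, not_or]
        exact ⟨Ne.symm nePι₀, Ne.symm neιι₀⟩)]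
      rw [Finset.sum_pair neselfP]
    have hKzero : ∀ (γ : H.E → ℤ) (d : H.E), d ∈ K → (∀ w, H.bdry γ w = 0) →
        (∀ f, f ∉ {f | c.pE f ∈ T ∨ f = liftP e₀} → f ≠ d → γ f = 0) →
        ∑ f ∈ K, γ f * Φ f = 0 := by
      intro γ d hd hc' hsupp
      refine hreduce γ _ ?_ hc'
      intro f hf
      by_cases hT' : c.pE f ∈ T
      · rw [hTnotS f hT']; ring
      · rw [hsupp' γ _ hsupp f hT' ?_ ?_]
        · ring
        · intro h; rw [h] at hf; exact hf (by simp [hKdef])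
        · intro h; rw [h] at hf; exact hf hd
    have hAP : γP e (liftP e₀) = Φ (liftP e) := by
      have h := hKzero (γP e) (liftP e) (by simp [hKdef]) hPc hPsupp
      rw [hKexp, hΦl₀, hΦι₀, hPz1, hPz2, hPe] at h
      linarith
    have hAM : γM e (liftP e₀) = - Φ (liftP e) := by
      have h := hKzero (γM e) (c.ιE (liftP e)) (by simp [hKdef]) hMc hMsupp
      rw [hKexp, hΦl₀, hΦι₀, hMz1, hMz2, hMe, hΦι] at h
      linarith
    constructor
    · refine cycles_eq_of_agree G T hT _ _ (hpush_cycle _ hPc) ?_ ?_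
      · exact bdry_zero_of_comb G (γbase e) (γbase e₀) _ 1 (Φ (liftP e)) (hbase e heT).1
          (hbase e₀ he₀T).1 (fun x => by ring)
      · intro f hf
        by_cases hfe : f = e
        · subst hfe
          rw [hfiber, hPe, hPz1, (hbase f heT).2.2,
            (hbase e₀ he₀T).2.1 f (hcoe f hf) hee₀]
          ring
        · by_cases hfe₀ : f = e₀
          · subst hfe₀
            rw [hfiber, hAP, hPz2, (hbase f he₀T).2.2,
              (hbase e heT).2.1 f (hcoe f hf) hfe]
            ring
          · rw [hoff (γP e) (liftP e) hPsupp f hf hfe₀ (by rw [hlift]; exact hfe),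
              (hbase e heT).2.1 f (hcoe f hf) hfe,
              (hbase e₀ he₀T).2.1 f (hcoe f hf) hfe₀]
            ring
    · refine cycles_eq_of_agree G T hT _ _ (hpush_cycle _ hMc) ?_ ?_
      · exact bdry_zero_of_comb G (γbase e) (γbase e₀) _ 1 (- Φ (liftP e)) (hbase e heT).1
          (hbase e₀ he₀T).1 (fun x => by ring)
      · intro f hf
        by_cases hfe : f = e
        · subst hfe
          rw [hfiber, hMe, hMz1, (hbase f heT).2.2,
            (hbase e₀ he₀T).2.1 f (hcoe f hf) hee₀]
          ring
        · by_cases hfe₀ : f = e₀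
          · subst hfe₀
            rw [hfiber, hAM, hMz2, (hbase f he₀T).2.2,
              (hbase e heT).2.1 f (hcoe f hf) hfe]
            ring
          · rw [hoff (γM e) (c.ιE (liftP e)) hMsupp f hf hfe₀ (by rw [hpEl]; exact hfe),
              (hbase e heT).2.1 f (hcoe f hf) hfe,
              (hbase e₀ he₀T).2.1 f (hcoe f hf) hfe₀]
            ring
  refine ⟨part1, ?_, ?_⟩
  · intro e heT hee₀ heS
    obtain ⟨h1, h2⟩ := hmain e heT hee₀
    constructor
    · rw [h1]; funext e'; rw [hΦS e heS]; ring
    · rw [h2]; funext e'; rw [hΦS e heS]; ring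
  · intro e heT heS
    have hee₀ : e ≠ e₀ := fun h => heS (h ▸ he₀)
    obtain ⟨h1, h2⟩ := hmain e heT hee₀
    constructor
    · rw [h1]; funext e'; rw [hΦnS e heS]; ring
    · rw [h2]; funext e'; rw [hΦnS e heS]; ring
end

section
/- Let p: G̃ → G be a connected free double cover of finite graphs determined by spanning tree T and nonempty S ∋ e_0 with involution ι. With the fundamental cycle basis as above, the g-1 cycles γ̃_j := γ̃_j^+ - ι_*(γ̃_j^+) (j = 1,...,g-1), which equal γ̃_j^+ - γ̃_j^- + σ_j γ̃_0 for e_j ∈ S\{e_0} and γ̃_j^+ - γ̃_j^- for e_j ∉ S, form a Z-basis of the kernel of p_*: H_1(G̃,Z) → H_1(G,Z). -/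
set_option maxHeartbeats 1000000

attribute [local instance 10] Classical.propDecidable

-- counting lemmas
section Counting
variable {K : Multigraph}

lemma eqvGen_mono' {r r' : K.V → K.V → Prop} (h : ∀ v w, r v w → r' v w)
    {v w} (hvw : Relation.EqvGen r v w) : Relation.EqvGen r' v w := by
  induction hvw with
  | rel x y hxy => exact Relation.EqvGen.rel _ _ (h _ _ hxy)
  | refl x => exact Relation.EqvGen.refl x
  | symm x y _ ih => exact Relation.EqvGen.symm _ _ ih
  | trans x y z _ _ ih1 ih2 => exact Relation.EqvGen.trans _ _ _ ih1 ih2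

lemma adjOn_mono {F F' : Set K.E} (h : F ⊆ F') {v w} (hvw : K.adjOn F v w) :
    K.adjOn F' v w := by
  obtain ⟨e, he, hs⟩ := hvw; exact ⟨e, h he, hs⟩

lemma eqvGen_empty {v w : K.V}
    (h : Relation.EqvGen (K.adjOn ↑(∅ : Finset K.E)) v w) : v = w := by
  induction h with
  | rel x y hxy => obtain ⟨e, he, -⟩ := hxy; simp at he
  | refl x => rfl
  | symm x y _ ih => exact ih.symm
  | trans x y z _ _ ih1 ih2 => exact ih1.trans ih2

/-- number of classes drops by at most one when inserting an edge -/
lemma card_classes_insert (F : Finset K.E) (e : K.E) :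
    Fintype.card (Quotient (Relation.EqvGen.setoid (K.adjOn ↑F))) ≤
    Fintype.card (Quotient (Relation.EqvGen.setoid (K.adjOn ↑(insert e F)))) + 1 := by
  set s₁ := Relation.EqvGen.setoid (K.adjOn ↑F) with hs₁
  set s₂ := Relation.EqvGen.setoid (K.adjOn ↑(insert e F)) with hs₂
  set a := K.s e
  set b := K.t e
  -- the reduction relation
  have key : ∀ x y, Relation.EqvGen (K.adjOn ↑(insert e F)) x y →
      (Relation.EqvGen (K.adjOn ↑F) x y ∨
       ((Relation.EqvGen (K.adjOn ↑F) x a ∨ Relation.EqvGen (K.adjOn ↑F) x b) ∧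
        (Relation.EqvGen (K.adjOn ↑F) y a ∨ Relation.EqvGen (K.adjOn ↑F) y b))) := by
    intro x y h
    induction h with
    | rel u v huv =>
      obtain ⟨f, hf, hsf, htf⟩ := huv
      rw [Finset.coe_insert] at hf
      rcases hf with hf | hf
      · subst hf
        right
        constructor
        · left; rw [← hsf]; exact Relation.EqvGen.refl _
        · right; rw [← htf]; exact Relation.EqvGen.refl _
      · left; exact Relation.EqvGen.rel _ _ ⟨f, hf, hsf, htf⟩
    | refl u => left; exact Relation.EqvGen.refl u
    | symm u v _ ih =>
      rcases ih with h | ⟨h1, h2⟩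
      · left; exact Relation.EqvGen.symm _ _ h
      · right; exact ⟨h2, h1⟩
    | trans u v w _ _ ih1 ih2 =>
      rcases ih1 with h1 | ⟨h1a, h1b⟩
      · rcases ih2 with h2 | ⟨h2a, h2b⟩
        · left; exact Relation.EqvGen.trans _ _ _ h1 h2
        · right
          refine ⟨?_, h2b⟩
          rcases h2a with h | h
          · left; exact Relation.EqvGen.trans _ _ _ h1 h
          · right; exact Relation.EqvGen.trans _ _ _ h1 h
      · rcases ih2 with h2 | ⟨h2a, h2b⟩
        · right
          refine ⟨h1a, ?_⟩
          rcases h1b with h | h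
          · left; exact Relation.EqvGen.trans _ _ _ (Relation.EqvGen.symm _ _ h2) h
          · right; exact Relation.EqvGen.trans _ _ _ (Relation.EqvGen.symm _ _ h2) h
        · right; exact ⟨h1a, h2b⟩
  -- the projection map
  have hmono : ∀ x y, s₁.r x y → s₂.r x y := by
    intro x y h
    exact eqvGen_mono' (fun v w hvw => adjOn_mono (by intro x hx; simp only [Finset.coe_insert, Set.mem_insert_iff]; right; exact hx) hvw) h
  let m : Quotient s₁ → Quotient s₂ :=
    Quotient.lift (fun x => (Quotient.mk s₂ x)) (fun x y hxy => Quotient.sound (hmono x y hxy))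
  -- m is injective away from ⟦b⟧
  have hinj : Set.InjOn m ↑(Finset.univ.erase (Quotient.mk s₁ b)) := by
    intro q1 hq1 q2 hq2 hm
    obtain ⟨x, rfl⟩ := Quotient.exists_rep q1
    obtain ⟨y, rfl⟩ := Quotient.exists_rep q2
    simp only [Finset.coe_erase, Set.mem_diff, Finset.mem_coe, Finset.mem_erase,
      Set.mem_singleton_iff, Finset.mem_univ, true_and] at hq1 hq2
    have hxy : s₂.r x y := Quotient.exact hm
    rcases key x y hxy with h | ⟨hx, hy⟩
    · exact Quotient.sound (s := s₁) h
    · have hxb : ¬ Relation.EqvGen (K.adjOn ↑F) x b := by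
        intro h; exact hq1 (Quotient.sound (s := s₁) h)
      have hyb : ¬ Relation.EqvGen (K.adjOn ↑F) y b := by
        intro h; exact hq2 (Quotient.sound (s := s₁) h)
      have hxa := hx.resolve_right hxb
      have hya := hy.resolve_right hyb
      exact Quotient.sound (s := s₁) (Relation.EqvGen.trans _ _ _ hxa (Relation.EqvGen.symm _ _ hya))
  have hcard := Finset.card_le_card_of_injOn m (fun q _ => Finset.mem_univ (m q)) hinj
  rw [Finset.card_erase_of_mem (Finset.mem_univ _)] at hcard
  simp only [Finset.card_univ] at hcard
  omega

lemma card_le_card_classes (F : Finset K.E) :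
    Fintype.card K.V ≤ F.card +
      Fintype.card (Quotient (Relation.EqvGen.setoid (K.adjOn ↑F))) := by
  induction F using Finset.induction_on with
  | empty =>
    simp only [Finset.card_empty, zero_add]
    have : Function.Injective (Quotient.mk (Relation.EqvGen.setoid (K.adjOn ↑(∅ : Finset K.E)))) := by
      intro x y h
      exact eqvGen_empty (Quotient.exact h)
    exact Fintype.card_le_of_injective _ this
  | @insert e F hx ih =>
    calc Fintype.card K.V ≤ F.card +
        Fintype.card (Quotient (Relation.EqvGen.setoid (K.adjOn ↑F))) := ih
      _ ≤ F.card + (Fintype.card (Quotient (Relation.EqvGen.setoid (K.adjOn ↑(insert e F)))) + 1) := by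
          exact Nat.add_le_add_left (card_classes_insert F e) _
      _ = (insert e F).card + Fintype.card (Quotient (Relation.EqvGen.setoid (K.adjOn ↑(insert e F)))) := by
          rw [Finset.card_insert_of_notMem hx]; ring

lemma conn_card_le (F : Finset K.E) (h : ∀ v w, Relation.EqvGen (K.adjOn ↑F) v w) :
    Fintype.card K.V ≤ F.card + 1 := by
  have h1 := card_le_card_classes (K := K) F
  have h2 : Fintype.card (Quotient (Relation.EqvGen.setoid (K.adjOn ↑F))) ≤ 1 := by
    apply Fintype.card_le_one_iff.mpr
    intro q1 q2
    obtain ⟨x, rfl⟩ := Quotient.exists_rep q1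
    obtain ⟨y, rfl⟩ := Quotient.exists_rep q2
    exact Quotient.sound (h x y)
  omega

end Counting
section Tree
variable {K : Multigraph}

lemma eqvGen_le {α : Type*} {r s : α → α → Prop} (hs : Equivalence s)
    (h : ∀ v w, r v w → s v w) {v w : α} (hvw : Relation.EqvGen r v w) : s v w := by
  induction hvw with
  | rel x y hxy => exact h _ _ hxy
  | refl x => exact hs.refl x
  | symm x y _ ih => exact hs.symm ih
  | trans x y z _ _ ih1 ih2 => exact hs.trans ih1 ih2

lemma sum_bdry (γ : K.E → ℤ) (A : Finset K.V) :
    ∑ v ∈ A, K.bdry γ v =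
    ∑ e : K.E, γ e * ((if K.t e ∈ A then 1 else 0) - (if K.s e ∈ A then 1 else 0)) := by
  unfold Multigraph.bdry
  rw [Finset.sum_comm]
  refine Finset.sum_congr rfl (fun e _ => ?_)
  rw [← Finset.mul_sum, Finset.sum_sub_distrib, Finset.sum_ite_eq, Finset.sum_ite_eq]

lemma tree_cycle_zero (T : Finset K.E)
    (hconn : ∀ v w, Relation.EqvGen (K.adjOn ↑T) v w)
    (hcard : T.card + 1 = Fintype.card K.V)
    (γ : K.E → ℤ) (hb : ∀ v, K.bdry γ v = 0)
    (hs : ∀ e, e ∉ T → γ e = 0) : ∀ e, γ e = 0 := by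
  intro e'
  by_cases he' : e' ∈ T
  swap
  · exact hs e' he'
  set r := Relation.EqvGen (K.adjOn ↑(T.erase e')) with hr
  have hreq : Equivalence r := Relation.EqvGen.is_equivalence _
  have hnotrel : ¬ r (K.s e') (K.t e') := by
    intro hrel
    have hconn' : ∀ v w, r v w := by
      intro v w
      refine eqvGen_le hreq ?_ (hconn v w)
      rintro x y ⟨f, hf, hsf, htf⟩
      by_cases hfe : f = e'
      · subst hfe; rw [← hsf, ← htf]; exact hrel
      · exact Relation.EqvGen.rel _ _ ⟨f, by simp [Finset.mem_erase, hfe, hf], hsf, htf⟩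
    have hle := conn_card_le (T.erase e') hconn'
    rw [Finset.card_erase_of_mem he'] at hle
    have hT1 : 1 ≤ T.card := Finset.card_pos.mpr ⟨e', he'⟩
    omega
  set A : Finset K.V := Finset.univ.filter (fun v => r (K.t e') v) with hA
  have hmemA : ∀ v, v ∈ A ↔ r (K.t e') v := by
    intro v; simp [hA]
  have hsum : ∑ v ∈ A, K.bdry γ v = 0 := Finset.sum_eq_zero (fun v _ => hb v)
  rw [sum_bdry] at hsum
  have hsingle : ∑ e : K.E, γ e * ((if K.t e ∈ A then 1 else 0) - (if K.s e ∈ A then 1 else 0))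
      = γ e' * ((if K.t e' ∈ A then 1 else 0) - (if K.s e' ∈ A then 1 else 0)) := by
    refine Finset.sum_eq_single e' ?_ (fun h => absurd (Finset.mem_univ e') h)
    intro e _ hee'
    by_cases heT : e ∈ T
    · have hrel : r (K.s e) (K.t e) :=
        Relation.EqvGen.rel _ _ ⟨e, by simp [Finset.mem_erase, hee', heT], rfl, rfl⟩
      have : (K.t e ∈ A) ↔ (K.s e ∈ A) := by
        rw [hmemA, hmemA]
        exact ⟨fun h => hreq.trans h (hreq.symm hrel), fun h => hreq.trans h hrel⟩
      by_cases ht : K.t e ∈ A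
      · rw [if_pos ht, if_pos (this.mp ht)]; ring
      · rw [if_neg ht, if_neg (fun h => ht (this.mpr h))]; ring
    · rw [hs e heT]; ring
  rw [hsingle] at hsum
  have ht' : K.t e' ∈ A := (hmemA _).mpr (hreq.refl _)
  have hs' : K.s e' ∉ A := by
    rw [hmemA]
    intro h
    exact hnotrel (hreq.symm h)
  rw [if_pos ht', if_neg hs'] at hsum
  simpa using hsum

end Tree
section Cover
variable {H G : Multigraph} (c : FreeDoubleCover H G)

lemma bdry_sub' {K : Multigraph} (γ₁ γ₂ : K.E → ℤ) (v : K.V) :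
    K.bdry (fun f => γ₁ f - γ₂ f) v = K.bdry γ₁ v - K.bdry γ₂ v := by
  unfold Multigraph.bdry
  rw [← Finset.sum_sub_distrib]
  exact Finset.sum_congr rfl (fun f _ => by ring)

lemma bdry_sum' {K : Multigraph} {ι : Type*} (s : Finset ι) (g : ι → K.E → ℤ) (v : K.V) :
    K.bdry (fun f => ∑ i ∈ s, g i f) v = ∑ i ∈ s, K.bdry (g i) v := by
  unfold Multigraph.bdry
  rw [Finset.sum_comm]
  exact Finset.sum_congr rfl (fun f _ => by rw [Finset.sum_mul])

lemma bdry_smul' {K : Multigraph} (n : ℤ) (γ : K.E → ℤ) (v : K.V) :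
    K.bdry (fun f => n * γ f) v = n * K.bdry γ v := by
  unfold Multigraph.bdry
  rw [Finset.mul_sum]
  exact Finset.sum_congr rfl (fun f _ => by ring)

lemma bdry_comp_ι (γ : H.E → ℤ) (v : H.V) :
    H.bdry (fun f => γ (c.ιE f)) v = H.bdry γ (c.ιV v) := by
  unfold Multigraph.bdry
  refine Fintype.sum_bijective c.ιE (Function.Involutive.bijective c.ιE_inv) _ _ ?_
  intro f
  have ht : (H.t f = v) ↔ (H.t (c.ιE f) = c.ιV v) := by
    rw [c.ιV_t]
    constructor
    · intro h; rw [h]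
    · intro h
      have := congrArg c.ιV h
      rwa [c.ιV_inv, c.ιV_inv] at this
  have hs : (H.s f = v) ↔ (H.s (c.ιE f) = c.ιV v) := by
    rw [c.ιV_s]
    constructor
    · intro h; rw [h]
    · intro h
      have := congrArg c.ιV h
      rwa [c.ιV_inv, c.ιV_inv] at this
  simp only [ht, hs]

lemma fiber_eq (liftP : G.E → H.E) (hlift : ∀ e, c.pE (liftP e) = e) (e : G.E) :
    Finset.univ.filter (fun f => c.pE f = e) = {liftP e, c.ιE (liftP e)} := by
  ext f
  simp only [Finset.mem_filter, Finset.mem_univ, true_and, Finset.mem_insert,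
    Finset.mem_singleton]
  constructor
  · intro h
    exact c.fiberE (liftP e) f (by rw [hlift, h])
  · rintro (rfl | rfl)
    · exact hlift e
    · rw [c.pE_ι, hlift]

lemma pushCh_eval (liftP : G.E → H.E) (hlift : ∀ e, c.pE (liftP e) = e)
    (γ : H.E → ℤ) (e : G.E) :
    c.pushCh γ e = γ (liftP e) + γ (c.ιE (liftP e)) := by
  unfold FreeDoubleCover.pushCh
  rw [fiber_eq c liftP hlift e, Finset.sum_pair (Ne.symm (c.ιE_ne (liftP e)))]

end Cover

/-- With notation as in the standard construction (spanning
tree `T`, nonempty `S ∋ e₀`, fundamental cycles `γ̃ⱼ⁺` with respect to the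
spanning tree `T̃ = T̃⁺ ∪ T̃⁻ ∪ {ẽ₀⁺}`, deck involution `ι`), the `g - 1`
cycles `γ̃ⱼ := γ̃ⱼ⁺ - ι_*(γ̃ⱼ⁺)`, for `eⱼ` ranging over the complementary
edges other than `e₀`, form a `ℤ`-basis of the kernel of
`p_* : H₁(G̃, ℤ) → H₁(G, ℤ)`. -/
theorem basis_of_kernel_of_pushforward
    (G H : Multigraph) (hG : G.Connected) (hH : H.Connected)
    (c : FreeDoubleCover H G)
    (T : Finset G.E)
    (hT : (∀ v w : G.V, Relation.EqvGen (G.adjOn ↑T) v w) ∧ T.card + 1 = Fintype.card G.V)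
    (S : Finset G.E) (hST : Disjoint S T)
    (σ : H.V → Bool) (hσ : IsCoverWithSign c σ S)
    (e₀ : G.E) (he₀ : e₀ ∈ S)
    (liftP : G.E → H.E) (hlift : ∀ e, c.pE (liftP e) = e)
    (hsheet : ∀ e, e ∉ S → σ (H.s (liftP e)) = true)
    (he₀s : σ (H.s (liftP e₀)) = true) (he₀t : σ (H.t (liftP e₀)) = false)
    (γP : G.E → (H.E → ℤ))
    (hP : ∀ e, e ∉ T → e ≠ e₀ →
      IsFundCycle H {f | c.pE f ∈ T ∨ f = liftP e₀} (liftP e) (γP e)) :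
    (∀ e, e ∉ T → e ≠ e₀ →
      (∀ v, H.bdry (fun f => γP e f - γP e (c.ιE f)) v = 0) ∧
      c.pushCh (fun f => γP e f - γP e (c.ιE f)) = 0) ∧
    (∀ δ : H.E → ℤ, (∀ v, H.bdry δ v = 0) → c.pushCh δ = 0 →
      ∃! a : {e : G.E // e ∉ T ∧ e ≠ e₀} → ℤ,
        ∀ f, δ f = ∑ e : {e : G.E // e ∉ T ∧ e ≠ e₀},
          a e * (γP e.1 f - γP e.1 (c.ιE f))) := by
  classical
  have hfiber : ∀ f, f = liftP (c.pE f) ∨ f = c.ιE (liftP (c.pE f)) := by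
    intro f
    rcases c.fiberE (liftP (c.pE f)) f (by rw [hlift]) with h | h
    · exact Or.inl h
    · exact Or.inr h
  have hγ1 : ∀ (e : G.E) (_ : e ∉ T) (_ : e ≠ e₀), γP e (liftP e) = 1 :=
    fun e h1 h2 => (hP e h1 h2).2.2
  have hvanish : ∀ (e e' : G.E), e ∉ T → e ≠ e₀ → e' ∉ T → e' ≠ e₀ →
      (e ≠ e' → γP e (liftP e') = 0) ∧ γP e (c.ιE (liftP e')) = 0 := by
    intro e e' heT hee₀ he'T he'e₀
    constructor
    · intro hne
      apply (hP e heT hee₀).2.1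
      · intro hmem
        simp only [Set.mem_setOf_eq] at hmem
        rcases hmem with hmem | hmem
        · rw [hlift] at hmem; exact he'T hmem
        · have h := congrArg c.pE hmem; rw [hlift, hlift] at h; exact he'e₀ h
      · intro heq
        have h := congrArg c.pE heq; rw [hlift, hlift] at h; exact hne h.symm
    · apply (hP e heT hee₀).2.1
      · intro hmem
        simp only [Set.mem_setOf_eq] at hmem
        rcases hmem with hmem | hmem
        · rw [c.pE_ι, hlift] at hmem; exact he'T hmem
        · have h := congrArg c.pE hmem; rw [c.pE_ι, hlift, hlift] at h; exact he'e₀ h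
      · intro heq
        have h := congrArg c.pE heq; rw [c.pE_ι, hlift, hlift] at h
        rw [← h] at heq
        exact c.ιE_ne _ heq
  have heval : ∀ (a : {e : G.E // e ∉ T ∧ e ≠ e₀} → ℤ) (e' : {e : G.E // e ∉ T ∧ e ≠ e₀}),
      (∑ e : {e : G.E // e ∉ T ∧ e ≠ e₀},
        a e * (γP e.1 (liftP e'.1) - γP e.1 (c.ιE (liftP e'.1)))) = a e' := by
    intro a e'
    rw [Finset.sum_eq_single e']
    · rw [hγ1 e'.1 e'.2.1 e'.2.2, (hvanish e'.1 e'.1 e'.2.1 e'.2.2 e'.2.1 e'.2.2).2]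
      ring
    · intro e _ hne
      rw [(hvanish e.1 e'.1 e.2.1 e.2.2 e'.2.1 e'.2.2).1 (fun h => hne (Subtype.ext h)),
          (hvanish e.1 e'.1 e.2.1 e.2.2 e'.2.1 e'.2.2).2]
      ring
    · intro h; exact absurd (Finset.mem_univ e') h
  constructor
  · -- part 1
    intro e heT hee₀
    obtain ⟨hcyc, hsupp, hone⟩ := hP e heT hee₀
    constructor
    · intro v
      rw [bdry_sub' (γP e) (fun f => γP e (c.ιE f)) v, bdry_comp_ι c (γP e) v,
        hcyc v, hcyc (c.ιV v), sub_zero]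
    · funext e'
      simp only [pushCh_eval c liftP hlift, c.ιE_inv, Pi.zero_apply]
      ring
  · -- part 2
    intro δ hδcyc hδpush
    have hpush0 : ∀ e, δ (liftP e) + δ (c.ιE (liftP e)) = 0 := by
      intro e
      have h := congrFun hδpush e
      rwa [pushCh_eval c liftP hlift, Pi.zero_apply] at h
    have hδanti : ∀ f, δ (c.ιE f) = -δ f := by
      intro f
      rcases hfiber f with h | h
      · rw [h]; linarith [hpush0 (c.pE f)]
      · rw [h, c.ιE_inv]; linarith [hpush0 (c.pE f)]
    set a : {e : G.E // e ∉ T ∧ e ≠ e₀} → ℤ := fun e => δ (liftP e.1) with ha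
    set δ' : H.E → ℤ := fun f => δ f - ∑ e : {e : G.E // e ∉ T ∧ e ≠ e₀},
      a e * (γP e.1 f - γP e.1 (c.ιE f)) with hδ'def
    have hδ'anti : ∀ f, δ' (c.ιE f) = -δ' f := by
      intro f
      rw [hδ'def]
      simp only
      have h1 : ∑ e : {e : G.E // e ∉ T ∧ e ≠ e₀},
          a e * (γP e.1 (c.ιE f) - γP e.1 (c.ιE (c.ιE f)))
          = -∑ e : {e : G.E // e ∉ T ∧ e ≠ e₀}, a e * (γP e.1 f - γP e.1 (c.ιE f)) := by
        rw [← Finset.sum_neg_distrib]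
        refine Finset.sum_congr rfl fun e _ => ?_
        rw [c.ιE_inv]; ring
      rw [h1, hδanti f]; ring
    have hδ'cyc : ∀ v, H.bdry δ' v = 0 := by
      intro v
      rw [hδ'def, bdry_sub' δ (fun f => ∑ e : {e : G.E // e ∉ T ∧ e ≠ e₀},
        a e * (γP e.1 f - γP e.1 (c.ιE f))) v, hδcyc v,
        bdry_sum' Finset.univ (fun (e : {e : G.E // e ∉ T ∧ e ≠ e₀}) f =>
          a e * (γP e.1 f - γP e.1 (c.ιE f))) v]
      rw [Finset.sum_eq_zero]
      · ring
      intro e _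
      rw [bdry_smul' (a e) (fun f => γP e.1 f - γP e.1 (c.ιE f)) v,
        bdry_sub' (γP e.1) (fun f => γP e.1 (c.ιE f)) v, bdry_comp_ι c (γP e.1) v,
        (hP e.1 e.2.1 e.2.2).1 v, (hP e.1 e.2.1 e.2.2).1 (c.ιV v)]
      ring
    have hδ'lift : ∀ e' : {e : G.E // e ∉ T ∧ e ≠ e₀}, δ' (liftP e'.1) = 0 := by
      intro e'
      rw [hδ'def]
      simp only
      rw [heval a e', ha]
      simp
    have hδ'off : ∀ f, c.pE f ∉ T → c.pE f ≠ e₀ → δ' f = 0 := by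
      intro f h1 h2
      rcases hfiber f with h | h
      · rw [h]; exact hδ'lift ⟨c.pE f, h1, h2⟩
      · rw [h, hδ'anti, hδ'lift ⟨c.pE f, h1, h2⟩]; ring
    have hr : δ' (liftP e₀) = 0 := by
      set A : Finset H.V := Finset.univ.filter (fun x => σ x = true) with hA
      have hmemA : ∀ x, (x ∈ A) ↔ σ x = true := by intro x; simp [hA]
      have h0 : ∑ v ∈ A, H.bdry δ' v = 0 := Finset.sum_eq_zero (fun v _ => hδ'cyc v)
      rw [sum_bdry δ' A, ← Finset.sum_fiberwise Finset.univ c.pE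
        (fun f => δ' f * ((if H.t f ∈ A then (1:ℤ) else 0) - (if H.s f ∈ A then 1 else 0)))]
        at h0
      rw [Finset.sum_eq_single e₀] at h0
      · rw [fiber_eq c liftP hlift e₀, Finset.sum_pair (Ne.symm (c.ιE_ne (liftP e₀)))] at h0
        have ht1 : H.t (liftP e₀) ∉ A := by rw [hmemA, he₀t]; simp
        have hs1 : H.s (liftP e₀) ∈ A := (hmemA _).mpr he₀s
        have ht2 : H.t (c.ιE (liftP e₀)) ∈ A := by
          rw [hmemA, c.ιV_t, hσ.1, he₀t]; rfl
        have hs2 : H.s (c.ιE (liftP e₀)) ∉ A := by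
          rw [hmemA, c.ιV_s, hσ.1, he₀s]; simp
        rw [if_neg ht1, if_pos hs1, if_pos ht2, if_neg hs2, hδ'anti] at h0
        linarith
      · intro e _ hne
        rw [fiber_eq c liftP hlift e, Finset.sum_pair (Ne.symm (c.ιE_ne (liftP e)))]
        by_cases heT : e ∈ T
        · have heS : e ∉ S := Finset.disjoint_right.mp hST heT
          have hiff1 := hσ.2 (liftP e)
          rw [hlift] at hiff1
          have hiff2 := hσ.2 (c.ιE (liftP e))
          rw [c.pE_ι, hlift] at hiff2
          have h1 : σ (H.t (liftP e)) = σ (H.s (liftP e)) := by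
            by_contra h'
            exact heS (hiff1.mpr (fun hc => h' hc.symm))
          have h2 : σ (H.t (c.ιE (liftP e))) = σ (H.s (c.ιE (liftP e))) := by
            by_contra h'
            exact heS (hiff2.mpr (fun hc => h' hc.symm))
          have hA1 : (H.t (liftP e) ∈ A) ↔ (H.s (liftP e) ∈ A) := by
            rw [hmemA, hmemA, h1]
          have hA2 : (H.t (c.ιE (liftP e)) ∈ A) ↔ (H.s (c.ιE (liftP e)) ∈ A) := by
            rw [hmemA, hmemA, h2]
          have hi1 : (if H.t (liftP e) ∈ A then (1:ℤ) else 0)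
              = (if H.s (liftP e) ∈ A then (1:ℤ) else 0) := by
            by_cases hc : H.t (liftP e) ∈ A
            · rw [if_pos hc, if_pos (hA1.mp hc)]
            · rw [if_neg hc, if_neg (fun h => hc (hA1.mpr h))]
          have hi2 : (if H.t (c.ιE (liftP e)) ∈ A then (1:ℤ) else 0)
              = (if H.s (c.ιE (liftP e)) ∈ A then (1:ℤ) else 0) := by
            by_cases hc : H.t (c.ιE (liftP e)) ∈ A
            · rw [if_pos hc, if_pos (hA2.mp hc)]
            · rw [if_neg hc, if_neg (fun h => hc (hA2.mpr h))]
          rw [hi1, hi2]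
          ring
        · have hz1 : δ' (liftP e) = 0 :=
            hδ'off (liftP e) (by rw [hlift]; exact heT) (by rw [hlift]; exact hne)
          have hz2 : δ' (c.ιE (liftP e)) = 0 := by rw [hδ'anti, hz1]; ring
          rw [hz1, hz2]
          ring
      · intro h; exact absurd (Finset.mem_univ e₀) h
    -- the descended cycle on G
    set ε : G.E → ℤ := fun e => δ' (liftP e) with hεdef
    have hεsupp : ∀ e, e ∉ T → ε e = 0 := by
      intro e heT
      rw [hεdef]
      simp only
      by_cases he : e = e₀
      · rw [he]; exact hr
      · exact hδ'off (liftP e) (by rw [hlift]; exact heT) (by rw [hlift]; exact he)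
    have hεcyc : ∀ v, G.bdry ε v = 0 := by
      intro v
      obtain ⟨x₀, hx₀⟩ := c.pV_surj v
      obtain ⟨x, hxv, hxσ⟩ : ∃ x, c.pV x = v ∧ σ x = true := by
        cases hσx : σ x₀
        · exact ⟨c.ιV x₀, by rw [c.pV_ι, hx₀], by rw [hσ.1, hσx]; rfl⟩
        · exact ⟨x₀, hx₀, hσx⟩
      suffices hsuf : G.bdry ε v = H.bdry δ' x by rw [hsuf]; exact hδ'cyc x
      unfold Multigraph.bdry
      rw [← Finset.sum_fiberwise Finset.univ c.pE
        (fun f => δ' f * ((if H.t f = x then (1:ℤ) else 0) - (if H.s f = x then 1 else 0)))]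
      refine Finset.sum_congr rfl fun e _ => ?_
      rw [fiber_eq c liftP hlift e, Finset.sum_pair (Ne.symm (c.ιE_ne (liftP e)))]
      by_cases heT : e ∈ T
      · have heS : e ∉ S := Finset.disjoint_right.mp hST heT
        have hiff1 := hσ.2 (liftP e)
        rw [hlift] at hiff1
        have hσs : σ (H.s (liftP e)) = true := hsheet e heS
        have hσt : σ (H.t (liftP e)) = true := by
          by_contra h'
          exact heS (hiff1.mpr (by rw [hσs]; exact fun hc => h' hc.symm))
        have h1 : (G.t e = v) ↔ (H.t (liftP e) = x) := by
          constructor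
          · intro h
            rcases c.fiberV x (H.t (liftP e))
              (by rw [← c.t_comm, hlift, h, hxv]) with h' | h'
            · exact h'
            · exfalso
              have hb : σ (H.t (liftP e)) = !σ x := by rw [h', hσ.1]
              rw [hσt, hxσ] at hb
              simp at hb
          · intro h; rw [← hxv, ← h, ← c.t_comm, hlift]
        have h2 : (G.s e = v) ↔ (H.s (liftP e) = x) := by
          constructor
          · intro h
            rcases c.fiberV x (H.s (liftP e))
              (by rw [← c.s_comm, hlift, h, hxv]) with h' | h'
            · exact h'
            · exfalso
              have hb : σ (H.s (liftP e)) = !σ x := by rw [h', hσ.1]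
              rw [hσs, hxσ] at hb
              simp at hb
          · intro h; rw [← hxv, ← h, ← c.s_comm, hlift]
        have h3 : H.t (c.ιE (liftP e)) ≠ x := by
          intro h
          have hb : σ (H.t (c.ιE (liftP e))) = true := by rw [h, hxσ]
          rw [c.ιV_t, hσ.1, hσt] at hb
          simp at hb
        have h4 : H.s (c.ιE (liftP e)) ≠ x := by
          intro h
          have hb : σ (H.s (c.ιE (liftP e))) = true := by rw [h, hxσ]
          rw [c.ιV_s, hσ.1, hσs] at hb
          simp at hb
        rw [if_neg h3, if_neg h4]
        simp only [h1, h2, hεdef]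
        ring
      · have hz0 : ε e = 0 := hεsupp e heT
        have hz1 : δ' (liftP e) = 0 := hz0
        have hz2 : δ' (c.ιE (liftP e)) = 0 := by rw [hδ'anti, hz1]; ring
        rw [hz0, hz1, hz2]
        ring
    have hε0 : ∀ e, ε e = 0 := tree_cycle_zero T hT.1 hT.2 ε hεcyc hεsupp
    have hδ'0 : ∀ f, δ' f = 0 := by
      intro f
      have hl : δ' (liftP (c.pE f)) = 0 := hε0 (c.pE f)
      rcases hfiber f with h | h
      · rw [h]; exact hl
      · rw [h, hδ'anti, hl]; ring
    refine ⟨a, ?_, ?_⟩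
    · intro f
      have h := hδ'0 f
      rw [hδ'def] at h
      simp only at h
      linarith
    · intro a' ha'
      funext e'
      have h1 := ha' (liftP e'.1)
      rw [heval a' e'] at h1
      rw [ha]
      exact h1.symm
end

section
/- Let π: Γ̃ → Γ be a connected free double cover of metric graphs of genera 2g-1 and g. Then the volumes of the Jacobians and the Prym variety (each computed with its intrinsic principal polarization; the Prym's principal polarization being half the restriction of the one on Jac(Γ̃)) satisfy Vol²(Prym(Γ̃/Γ)) = Vol²(Jac(Γ̃)) / (2 · Vol²(Jac(Γ))). -/
set_option maxHeartbeats 1000000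

attribute [local instance 10] Classical.propDecidable

/-- A family of integral `1`-cycles that is a `ℤ`-basis of `H₁(G, ℤ)`. -/
def IsCycleBasis (G : Multigraph) (n : ℕ) (b : Fin n → (G.E → ℤ)) : Prop :=
  (∀ i, ∀ v, G.bdry (b i) v = 0) ∧
  ∀ γ : G.E → ℤ, (∀ v, G.bdry γ v = 0) →
    ∃! a : Fin n → ℤ, ∀ e, γ e = ∑ i, a i * b i e

/-- A family of integral `1`-cycles on the source of a double cover that is a
`ℤ`-basis of the kernel of the pushforward `π_* : H₁(Γ̃, ℤ) → H₁(Γ, ℤ)`. -/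
def IsPrymBasis {H G : Multigraph} (c : FreeDoubleCover H G) (n : ℕ)
    (b : Fin n → (H.E → ℤ)) : Prop :=
  (∀ i, (∀ v, H.bdry (b i) v = 0) ∧ c.pushCh (b i) = 0) ∧
  ∀ γ : H.E → ℤ, (∀ v, H.bdry γ v = 0) → c.pushCh γ = 0 →
    ∃! a : Fin n → ℤ, ∀ f, γ f = ∑ i, a i * b i f

/- ====================  AUXILIARY DEVELOPMENT ==================== -/
namespace PrymVolAux

open Finset Matrix

variable {H G : Multigraph}

/-- A 1-chain is a cycle. -/
def IsCyc (G : Multigraph) (γ : G.E → ℤ) : Prop := ∀ v, G.bdry γ v = 0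

/-- Pullback of 1-chains along the cover. -/
def pull (c : FreeDoubleCover H G) (β : G.E → ℤ) : H.E → ℤ := fun f => β (c.pE f)

section basic

variable (c : FreeDoubleCover H G)

lemma fiber_eq (f₀ : H.E) :
    Finset.univ.filter (fun f => c.pE f = c.pE f₀) = {f₀, c.ιE f₀} := by
  ext f
  simp only [mem_filter, mem_univ, true_and, mem_insert, mem_singleton]
  constructor
  · intro h
    exact c.fiberE f₀ f h.symm
  · rintro (rfl | rfl)
    · rfl
    · exact c.pE_ι f₀

lemma pushCh_pE (γ : H.E → ℤ) (f₀ : H.E) :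
    c.pushCh γ (c.pE f₀) = γ f₀ + γ (c.ιE f₀) := by
  unfold FreeDoubleCover.pushCh
  rw [fiber_eq c f₀, Finset.sum_pair (Ne.symm (c.ιE_ne f₀))]

lemma vfiber_eq (x₀ : H.V) :
    Finset.univ.filter (fun x => c.pV x = c.pV x₀) = {x₀, c.ιV x₀} := by
  ext x
  simp only [mem_filter, mem_univ, true_and, mem_insert, mem_singleton]
  constructor
  · intro h
    exact c.fiberV x₀ x h.symm
  · rintro (rfl | rfl)
    · rfl
    · exact c.pV_ι x₀

/-- Summation over the edges of the cover, fiber by fiber. -/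
lemma fiber_sum {M : Type*} [AddCommMonoid M] (sec : G.E → H.E)
    (hsec : ∀ e, c.pE (sec e) = e) (ψ : H.E → M) :
    ∑ f : H.E, ψ f = ∑ e : G.E, (ψ (sec e) + ψ (c.ιE (sec e))) := by
  classical
  rw [← Finset.sum_fiberwise_of_maps_to (g := c.pE) (t := Finset.univ)
      (fun i _ => Finset.mem_univ _) ψ]
  refine Finset.sum_congr rfl (fun e _ => ?_)
  have key : (Finset.univ.filter (fun f => c.pE f = e)) = {sec e, c.ιE (sec e)} := by
    have := fiber_eq c (sec e)
    rwa [hsec e] at this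
  rw [show ({f ∈ univ | c.pE f = e} : Finset H.E)
      = Finset.univ.filter (fun f => c.pE f = e) from rfl, key,
    Finset.sum_pair (Ne.symm (c.ιE_ne _))]

lemma sum_pull {M : Type*} [AddCommMonoid M] (φ : G.E → M) :
    ∑ f : H.E, φ (c.pE f) = ∑ e : G.E, (φ e + φ e) := by
  rw [fiber_sum c (Function.surjInv c.pE_surj) (Function.surjInv_eq c.pE_surj)
      (fun f => φ (c.pE f))]
  refine Finset.sum_congr rfl (fun e _ => ?_)
  rw [c.pE_ι, Function.surjInv_eq c.pE_surj e]

lemma sum_pull_mul (φ : G.E → ℝ) (γ : H.E → ℤ) :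
    ∑ f : H.E, φ (c.pE f) * (γ f : ℝ) = ∑ e : G.E, φ e * (c.pushCh γ e : ℝ) := by
  rw [fiber_sum c (Function.surjInv c.pE_surj) (Function.surjInv_eq c.pE_surj)
      (fun f => φ (c.pE f) * (γ f : ℝ))]
  refine Finset.sum_congr rfl (fun e _ => ?_)
  have h₀ : c.pE (Function.surjInv c.pE_surj e) = e := Function.surjInv_eq c.pE_surj e
  rw [c.pE_ι, h₀, ← h₀, pushCh_pE]
  rw [h₀]
  push_cast
  ring

end basic

section bdry

variable (c : FreeDoubleCover H G)

lemma bdry_sum {ι : Type*} (s : Finset ι) (h : ι → G.E → ℤ) (v : G.V) :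
    G.bdry (fun e => ∑ i ∈ s, h i e) v = ∑ i ∈ s, G.bdry (h i) v := by
  unfold Multigraph.bdry
  rw [Finset.sum_comm]
  exact Finset.sum_congr rfl (fun e _ => Finset.sum_mul ..)

lemma bdry_mul (a : ℤ) (γ : G.E → ℤ) (v : G.V) :
    G.bdry (fun e => a * γ e) v = a * G.bdry γ v := by
  unfold Multigraph.bdry
  rw [Finset.mul_sum]
  exact Finset.sum_congr rfl (fun e _ => by ring)

lemma bdry_sub (γ δ : G.E → ℤ) (v : G.V) :
    G.bdry (fun e => γ e - δ e) v = G.bdry γ v - G.bdry δ v := by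
  unfold Multigraph.bdry
  rw [← Finset.sum_sub_distrib]
  exact Finset.sum_congr rfl (fun e _ => by ring)

lemma bdry_add (γ δ : G.E → ℤ) (v : G.V) :
    G.bdry (fun e => γ e + δ e) v = G.bdry γ v + G.bdry δ v := by
  unfold Multigraph.bdry
  rw [← Finset.sum_add_distrib]
  exact Finset.sum_congr rfl (fun e _ => by ring)

lemma bdry_congr {γ δ : G.E → ℤ} (h : ∀ e, γ e = δ e) (v : G.V) :
    G.bdry γ v = G.bdry δ v := by
  unfold Multigraph.bdry
  exact Finset.sum_congr rfl (fun e _ => by rw [h e])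

/-- total degree of a boundary is zero -/
lemma sum_bdry (b : H.E → ℤ) : ∑ v : H.V, H.bdry b v = 0 := by
  unfold Multigraph.bdry
  rw [Finset.sum_comm]
  refine Finset.sum_eq_zero (fun e _ => ?_)
  rw [← Finset.mul_sum]
  rw [Finset.sum_sub_distrib]
  simp

lemma bdry_sig (γ : H.E → ℤ) (x : H.V) :
    H.bdry (fun f => γ (c.ιE f)) x = H.bdry γ (c.ιV x) := by
  unfold Multigraph.bdry
  have hinj : Function.Injective c.ιV := Function.Involutive.injective c.ιV_inv
  have hιE : Function.Involutive c.ιE := c.ιE_inv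
  refine Fintype.sum_equiv (Function.Involutive.toPerm c.ιE hιE) _ _ (fun f => ?_)
  have h1 : (H.t (c.ιE f) = c.ιV x) ↔ (H.t f = x) := by
    rw [c.ιV_t]; exact hinj.eq_iff
  have h2 : (H.s (c.ιE f) = c.ιV x) ↔ (H.s f = x) := by
    rw [c.ιV_s]; exact hinj.eq_iff
  simp only [Function.Involutive.coe_toPerm]
  congr 1
  simp only [h1, h2]

lemma pair_indicator (y x : H.V) :
    ((if y = x then (1 : ℤ) else 0) + (if c.ιV y = x then 1 else 0))
      = (if c.pV y = c.pV x then 1 else 0) := by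
  by_cases h : c.pV y = c.pV x
  · rcases c.fiberV y x h with rfl | rfl
    · simp [c.ιV_ne]
    · have hy : y ≠ c.ιV y := fun hy => c.ιV_ne y hy.symm
      simp [c.pV_ι, hy]
  · have h1 : y ≠ x := fun hy => h (hy ▸ rfl)
    have h2 : c.ιV y ≠ x := fun hy => h (by rw [← hy, c.pV_ι])
    simp [h, h1, h2]

lemma bdry_pull (β : G.E → ℤ) (x : H.V) :
    H.bdry (pull c β) x = G.bdry β (c.pV x) := by
  unfold Multigraph.bdry pull
  rw [fiber_sum c (Function.surjInv c.pE_surj) (Function.surjInv_eq c.pE_surj)]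
  refine Finset.sum_congr rfl (fun e _ => ?_)
  set f₀ := Function.surjInv c.pE_surj e with hf₀
  have h₀ : c.pE f₀ = e := Function.surjInv_eq c.pE_surj e
  rw [c.pE_ι, h₀]
  have ht : G.t e = c.pV (H.t f₀) := by rw [← h₀]; exact c.t_comm f₀
  have hs : G.s e = c.pV (H.s f₀) := by rw [← h₀]; exact c.s_comm f₀
  rw [ht, hs, ← pair_indicator c (H.t f₀) x, ← pair_indicator c (H.s f₀) x,
    c.ιV_t, c.ιV_s]
  ring

lemma pushCh_one_sub_sig (γ : H.E → ℤ) :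
    c.pushCh (fun f => γ f - γ (c.ιE f)) = 0 := by
  funext e
  obtain ⟨f₀, rfl⟩ := c.pE_surj e
  rw [pushCh_pE]
  simp [c.ιE_inv]

lemma anti_of_pushCh_zero {γ : H.E → ℤ} (h : c.pushCh γ = 0) (f : H.E) :
    γ (c.ιE f) = - γ f := by
  have := congrFun h (c.pE f)
  rw [pushCh_pE] at this
  simp only [Pi.zero_apply] at this
  linarith

/-- A symmetric cycle is the pullback of a cycle downstairs. -/
lemma sym_cycle_pull {γ : H.E → ℤ} (hsym : ∀ f, γ (c.ιE f) = γ f)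
    (hcyc : IsCyc H γ) : ∃ β : G.E → ℤ, IsCyc G β ∧ ∀ f, γ f = β (c.pE f) := by
  set sec := Function.surjInv c.pE_surj with hsecdef
  have hsec : ∀ e, c.pE (sec e) = e := Function.surjInv_eq c.pE_surj
  have hval : ∀ f, pull c (fun e => γ (sec e)) f = γ f := by
    intro f
    show γ (sec (c.pE f)) = γ f
    have hmem : sec (c.pE f) = f ∨ sec (c.pE f) = c.ιE f :=
      c.fiberE f (sec (c.pE f)) (hsec (c.pE f)).symm
    rcases hmem with h | h
    · rw [h]
    · rw [h, hsym f]
  refine ⟨fun e => γ (sec e), ?_, fun f => (hval f).symm⟩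
  intro v
  obtain ⟨x, rfl⟩ := c.pV_surj v
  rw [← bdry_pull c (fun e => γ (sec e)) x, bdry_congr hval x]
  exact hcyc x

end bdry

section conn

variable (c : FreeDoubleCover H G)

/-- In a connected graph, any two vertices are joined by an integral path chain. -/
lemma exists_path_chain (hH : H.Connected) (x y : H.V) :
    ∃ b : H.E → ℤ, ∀ v, H.bdry b v
      = (if y = v then 1 else 0) - (if x = v then 1 else 0) := by
  have h := hH.2 x y
  induction h with
  | rel a b' hab =>
      obtain ⟨e, -, hs, ht⟩ := hab
      refine ⟨fun f => if f = e then 1 else 0, fun v => ?_⟩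
      have : H.bdry (fun f => if f = e then 1 else 0) v
          = ∑ f : H.E, (if f = e then (1:ℤ) else 0)
              * ((if H.t f = v then 1 else 0) - (if H.s f = v then 1 else 0)) := rfl
      rw [this, Finset.sum_eq_single e]
      · rw [if_pos rfl, hs, ht, one_mul]
      · intro f _ hf
        rw [if_neg hf, zero_mul]
      · intro h; exact absurd (Finset.mem_univ e) h
  | refl a => exact ⟨0, fun v => by simp [Multigraph.bdry]⟩
  | symm a b' _ ih =>
      obtain ⟨b, hb⟩ := ih
      exact ⟨fun f => (-1) * b f, fun v => by
        rw [bdry_mul, hb v]; ring⟩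
  | trans a b' c' _ _ ih1 ih2 =>
      obtain ⟨b1, hb1⟩ := ih1
      obtain ⟨b2, hb2⟩ := ih2
      exact ⟨fun f => b1 f + b2 f, fun v => by
        rw [bdry_add, hb1 v, hb2 v]; ring⟩

lemma exists_chain_bdry (hH : H.Connected) (D : H.V → ℤ) (hD : ∑ v, D v = 0) :
    ∃ b : H.E → ℤ, ∀ v, H.bdry b v = D v := by
  obtain ⟨x₀⟩ := hH.1
  choose pb hpb using fun y => exists_path_chain hH x₀ y
  refine ⟨fun f => ∑ y, D y * pb y f, fun v => ?_⟩
  rw [bdry_sum]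
  calc ∑ y, H.bdry (fun f => D y * pb y f) v
      = ∑ y, (D y * (if y = v then 1 else 0) - D y * (if x₀ = v then 1 else 0)) := by
        refine Finset.sum_congr rfl (fun y _ => ?_)
        rw [bdry_mul, hpb y v]; ring
    _ = (∑ y, D y * (if y = v then 1 else 0))
        - (∑ y, D y) * (if x₀ = v then 1 else 0) := by
        rw [Finset.sum_sub_distrib, Finset.sum_mul]
    _ = D v := by
        rw [hD, zero_mul, sub_zero]
        simp [mul_ite]

/-- Antisymmetric edge functions are of the form `b - b ∘ ι`. -/
lemma antisym_edge {γ : H.E → ℤ} (h : ∀ f, γ (c.ιE f) = - γ f) :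
    ∃ b : H.E → ℤ, ∀ f, γ f = b f - b (c.ιE f) := by
  set sec := Function.surjInv c.pE_surj with hsecdef
  have hsec : ∀ e, c.pE (sec e) = e := Function.surjInv_eq c.pE_surj
  have hchoice : ∀ f, sec (c.pE f) = f ∨ sec (c.pE f) = c.ιE f := fun f =>
    c.fiberE f (sec (c.pE f)) (hsec (c.pE f)).symm
  refine ⟨fun f => if sec (c.pE f) = f then γ f else 0, fun f => ?_⟩
  show γ f = (if sec (c.pE f) = f then γ f else 0)
    - (if sec (c.pE (c.ιE f)) = c.ιE f then γ (c.ιE f) else 0)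
  have hne : f ≠ c.ιE f := fun hf => c.ιE_ne f hf.symm
  rcases hchoice f with hc | hc
  · have h2 : ¬ (sec (c.pE (c.ιE f)) = c.ιE f) := by
      rw [c.pE_ι, hc]
      exact hne
    rw [if_pos hc, if_neg h2, sub_zero]
  · have h1 : ¬ (sec (c.pE f) = f) := by
      rw [hc]
      exact Ne.symm hne
    have h2 : sec (c.pE (c.ιE f)) = c.ιE f := by rw [c.pE_ι, hc]
    rw [if_neg h1, if_pos h2, h f]
    ring

/-- Symmetric vertex functions are of the form `cc + cc ∘ ι`. -/
lemma sym_vertex {d : H.V → ℤ} (h : ∀ x, d (c.ιV x) = d x) :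
    ∃ cc : H.V → ℤ, (∀ x, d x = cc x + cc (c.ιV x))
      ∧ 2 * (∑ x, cc x) = ∑ x, d x := by
  set sec := Function.surjInv c.pV_surj with hsecdef
  have hsec : ∀ v, c.pV (sec v) = v := Function.surjInv_eq c.pV_surj
  have hchoice : ∀ x, sec (c.pV x) = x ∨ sec (c.pV x) = c.ιV x := fun x =>
    c.fiberV x (sec (c.pV x)) (hsec (c.pV x)).symm
  set cc : H.V → ℤ := fun x => if sec (c.pV x) = x then d x else 0 with hccdef
  have key : ∀ x, d x = cc x + cc (c.ιV x) := by
    intro x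
    show d x = (if sec (c.pV x) = x then d x else 0)
      + (if sec (c.pV (c.ιV x)) = c.ιV x then d (c.ιV x) else 0)
    have hne : x ≠ c.ιV x := fun hx => c.ιV_ne x hx.symm
    rcases hchoice x with hc | hc
    · have h2 : ¬ (sec (c.pV (c.ιV x)) = c.ιV x) := by
        rw [c.pV_ι, hc]
        exact hne
      rw [if_pos hc, if_neg h2, add_zero]
    · have h1 : ¬ (sec (c.pV x) = x) := by
        rw [hc]
        exact Ne.symm hne
      have h2 : sec (c.pV (c.ιV x)) = c.ιV x := by rw [c.pV_ι, hc]
      rw [if_neg h1, if_pos h2, h x, zero_add]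
  refine ⟨cc, key, ?_⟩
  have hιV : Function.Involutive c.ιV := c.ιV_inv
  have hre : ∑ x, cc (c.ιV x) = ∑ x, cc x :=
    Fintype.sum_equiv (Function.Involutive.toPerm c.ιV hιV) _ _
      (fun x => by simp [Function.Involutive.coe_toPerm])
  calc 2 * (∑ x, cc x) = (∑ x, cc x) + (∑ x, cc (c.ιV x)) := by rw [hre]; ring
  _ = ∑ x, (cc x + cc (c.ιV x)) := (Finset.sum_add_distrib).symm
  _ = ∑ x, d x := Finset.sum_congr rfl (fun x _ => (key x).symm)

end conn

section crown

variable (c : FreeDoubleCover H G)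

/-- `Ĥ¹(ℤ/2, H₁(Γ̃;ℤ)) = 0`: every antisymmetric cycle on the cover is of the
form `δ - δ ∘ ι` for some cycle `δ`. -/
lemma antisym_cycle_split (hH : H.Connected) {γ : H.E → ℤ}
    (hcyc : IsCyc H γ) (hanti : ∀ f, γ (c.ιE f) = - γ f) :
    ∃ δ : H.E → ℤ, IsCyc H δ ∧ ∀ f, γ f = δ f - δ (c.ιE f) := by
  obtain ⟨b, hb⟩ := antisym_edge c hanti
  set d : H.V → ℤ := fun x => H.bdry b x with hd
  have hdsym : ∀ x, d (c.ιV x) = d x := by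
    intro x
    have h1 : H.bdry (fun f => b f - b (c.ιE f)) x = 0 := by
      rw [← bdry_congr hb x]
      exact hcyc x
    rw [bdry_sub, bdry_sig] at h1
    simp only [hd]
    omega
  obtain ⟨cc, hcc, hccsum⟩ := sym_vertex c hdsym
  have hdsum : ∑ x, d x = 0 := sum_bdry b
  have hccsum0 : ∑ x, cc x = 0 := by omega
  obtain ⟨h', hh'⟩ := exists_chain_bdry hH cc hccsum0
  refine ⟨fun f => b f - (h' f + h' (c.ιE f)), ?_, ?_⟩
  · intro x
    rw [bdry_sub, bdry_add, bdry_sig, hh', hh']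
    have hbx : H.bdry b x = d x := rfl
    rw [hbx, hcc x]
    ring
  · intro f
    have e1 : c.ιE (c.ιE f) = f := c.ιE_inv f
    rw [hb f]
    simp only [e1]
    ring

end crown

section repr

/-- Uniqueness of coordinates with respect to a cycle basis. -/
lemma repr_unique {n : ℕ} {b : Fin n → (H.E → ℤ)} (hb : IsCycleBasis H n b)
    (a a' : Fin n → ℤ) (h : ∀ f, ∑ i, a i * b i f = ∑ i, a' i * b i f) : a = a' := by
  have hcyc : ∀ v, H.bdry (fun f => ∑ i, a i * b i f) v = 0 := by
    intro v
    rw [bdry_sum]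
    refine Finset.sum_eq_zero (fun i _ => ?_)
    rw [bdry_mul, hb.1 i v, mul_zero]
  obtain ⟨a₀, ha₀, hu⟩ := hb.2 (fun f => ∑ i, a i * b i f) hcyc
  exact (hu a fun f => rfl).trans (hu a' fun f => h f).symm

end repr

section gram

/-- Transformation of Gram matrices under a change of spanning family. -/
lemma gram_transform {α β E : Type} [Fintype α] [Fintype β] [Fintype E]
    (wv : α → E → ℝ) (bv : β → E → ℝ) (A : Matrix α β ℝ) (wt : E → ℝ)
    (h : ∀ k f, wv k f = ∑ i, A k i * bv i f) :
    Matrix.of (fun k l => ∑ f, wv k f * wv l f * wt f)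
      = A * Matrix.of (fun i j => ∑ f, bv i f * bv j f * wt f) * Aᵀ := by
  ext k l
  rw [Matrix.mul_apply]
  calc (Matrix.of (fun k l => ∑ f, wv k f * wv l f * wt f)) k l
      = ∑ f, (∑ i, A k i * bv i f) * (∑ j, A l j * bv j f) * wt f := by
        refine Finset.sum_congr rfl (fun f _ => ?_)
        rw [← h k f, ← h l f]
    _ = ∑ f, ∑ i, ∑ j, A k i * A l j * (bv i f * bv j f * wt f) := by
        refine Finset.sum_congr rfl (fun f _ => ?_)
        rw [Finset.sum_mul_sum, Finset.sum_mul]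
        refine Finset.sum_congr rfl (fun i _ => ?_)
        rw [Finset.sum_mul]
        exact Finset.sum_congr rfl (fun j _ => by ring)
    _ = ∑ i, ∑ j, A k i * A l j * ∑ f, bv i f * bv j f * wt f := by
        rw [Finset.sum_comm]
        refine Finset.sum_congr rfl (fun i _ => ?_)
        rw [Finset.sum_comm]
        refine Finset.sum_congr rfl (fun j _ => ?_)
        rw [Finset.mul_sum]
    _ = ∑ j, (∑ i, A k i * (Matrix.of fun i j => ∑ f, bv i f * bv j f * wt f) i j)
          * Aᵀ j l := by
        rw [Finset.sum_comm]
        refine Finset.sum_congr rfl (fun j _ => ?_)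
        rw [Finset.sum_mul]
        refine Finset.sum_congr rfl (fun i _ => ?_)
        simp only [Matrix.of_apply, Matrix.transpose_apply]
        ring
    _ = ∑ j, (A * Matrix.of fun i j => ∑ f, bv i f * bv j f * wt f) k j * Aᵀ j l := by
        refine Finset.sum_congr rfl (fun j _ => ?_)
        rw [Matrix.mul_apply]

end gram

/-- Core identity relating the three Gram determinants. -/
theorem main_aux {H G : Multigraph} (c : FreeDoubleCover H G)
    (hH : H.Connected) {g' m n : ℕ} (eqv : (Fin g' ⊕ Fin m) ≃ Fin n)
    (ℓ : G.E → ℝ)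
    (bG : Fin g' → (G.E → ℤ)) (hbG : IsCycleBasis G g' bG)
    (bH : Fin n → (H.E → ℤ)) (hbH : IsCycleBasis H n bH)
    (bP : Fin m → (H.E → ℤ)) (hbP : IsPrymBasis c m bP) :
    (2:ℝ)^(2*m) * Matrix.det (Matrix.of fun i j : Fin n =>
        ∑ f : H.E, ((bH i f * bH j f : ℤ) : ℝ) * ℓ (c.pE f))
      = ((2:ℝ)^g' * Matrix.det (Matrix.of fun i j : Fin g' =>
          ∑ e : G.E, ((bG i e * bG j e : ℤ) : ℝ) * ℓ e))
        * ((2:ℝ)^m * Matrix.det (Matrix.of fun i j : Fin m =>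
            (1/2:ℝ) * ∑ f : H.E, ((bP i f * bP j f : ℤ) : ℝ) * ℓ (c.pE f))) := by
  classical
  -- the symmetric cycles pulled back from downstairs
  set u : Fin g' → H.E → ℤ := fun i => pull c (bG i) with hudef
  have hufun : ∀ i f, u i f = bG i (c.pE f) := fun i f => rfl
  have hucyc : ∀ i, IsCyc H (u i) := by
    intro i x
    rw [hudef]
    rw [bdry_pull]
    exact hbG.1 i (c.pV x)
  have hPcyc : ∀ j, IsCyc H (bP j) := fun j => (hbP.1 j).1
  have hPanti : ∀ j f, bP j (c.ιE f) = - bP j f :=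
    fun j => anti_of_pushCh_zero c (hbP.1 j).2
  -- split each Prym basis vector using Ĥ¹ = 0
  choose δ hδcyc hδeq using fun j => antisym_cycle_split c hH (hPcyc j) (hPanti j)
  -- the family v = (u, δ) and the family w = (u, bP)
  have hvcyc : ∀ k : Fin g' ⊕ Fin m, IsCyc H (Sum.elim u δ k) := by
    rintro (i | j)
    · exact hucyc i
    · exact hδcyc j
  have hwcyc : ∀ k : Fin g' ⊕ Fin m, IsCyc H (Sum.elim u bP k) := by
    rintro (i | j)
    · exact hucyc i
    · exact hPcyc j
  have repH : ∀ γ, IsCyc H γ → ∃ a : Fin n → ℤ, ∀ f, γ f = ∑ i, a i * bH i f :=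
    fun γ h => (hbH.2 γ h).exists
  choose T hT using fun k => repH (Sum.elim u δ k) (hvcyc k)
  choose M hM using fun k => repH (Sum.elim u bP k) (hwcyc k)
  -- the family v spans the lattice of cycles upstairs
  have hspan : ∀ γ, IsCyc H γ → ∃ co : (Fin g' ⊕ Fin m) → ℤ,
      ∀ f, γ f = ∑ k, co k * Sum.elim u δ k f := by
    intro γ hγ
    -- the antisymmetrization of γ is a Prym cycle
    have hminus_cyc : IsCyc H (fun f => γ f - γ (c.ιE f)) := by
      intro x
      rw [bdry_sub, bdry_sig, hγ x, hγ (c.ιV x), sub_zero]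
    have hminus_push : c.pushCh (fun f => γ f - γ (c.ιE f)) = 0 :=
      pushCh_one_sub_sig c γ
    obtain ⟨a, ha⟩ := (hbP.2 (fun f => γ f - γ (c.ιE f)) hminus_cyc hminus_push).exists
    -- subtract the corresponding combination of the δ's
    set γ' : H.E → ℤ := fun f => γ f - ∑ j, a j * δ j f with hγ'def
    have hγ'sym : ∀ f, γ' (c.ιE f) = γ' f := by
      intro f
      have h1 := ha f
      have h2 : ∀ j, δ j (c.ιE f) = δ j f - bP j f := fun j => by
        have := hδeq j f
        omega
      simp only [hγ'def]
      have hcongr : ∑ j, a j * δ j (c.ιE f) = ∑ j, a j * (δ j f - bP j f) :=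
        Finset.sum_congr rfl (fun j _ => by rw [h2 j])
      rw [hcongr]
      have h3 : ∑ j, a j * (δ j f - bP j f) = ∑ j, a j * δ j f - ∑ j, a j * bP j f := by
        rw [← Finset.sum_sub_distrib]
        exact Finset.sum_congr rfl (fun j _ => by ring)
      rw [h3, ← h1]
      ring
    have hγ'cyc : IsCyc H γ' := by
      intro x
      simp only [hγ'def]
      rw [bdry_sub, bdry_sum, hγ x]
      have hcongr : ∑ j, H.bdry (fun f => a j * δ j f) x = ∑ j : Fin m, (0:ℤ) :=
        Finset.sum_congr rfl (fun j _ => by rw [bdry_mul, hδcyc j x, mul_zero])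
      rw [hcongr]
      simp
    obtain ⟨β, hβcyc, hβ⟩ := sym_cycle_pull c hγ'sym hγ'cyc
    obtain ⟨x, hx⟩ := (hbG.2 β hβcyc).exists
    refine ⟨Sum.elim x a, fun f => ?_⟩
    rw [Fintype.sum_sum_type]
    simp only [Sum.elim_inl, Sum.elim_inr]
    have h4 : γ f = γ' f + ∑ j, a j * δ j f := by simp only [hγ'def]; ring
    rw [h4, hβ f, hx (c.pE f)]
    rfl
  choose T' hT' using fun j => hspan (bH j) (fun v => hbH.1 j v)
  -- coordinates of the symmetrizations of the δ's
  have hXex : ∀ j, ∃ x : Fin g' → ℤ, ∀ f, δ j f + δ j (c.ιE f) = ∑ i, x i * u i f := by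
    intro j
    have hsym : ∀ f, (fun f => δ j f + δ j (c.ιE f)) (c.ιE f)
        = (fun f => δ j f + δ j (c.ιE f)) f := by
      intro f
      simp only []
      rw [c.ιE_inv]
      ring
    have hcyc : IsCyc H (fun f => δ j f + δ j (c.ιE f)) := by
      intro x
      rw [bdry_add, bdry_sig, hδcyc j x, hδcyc j (c.ιV x), add_zero]
    obtain ⟨β, hβcyc, hβ⟩ := sym_cycle_pull c hsym hcyc
    obtain ⟨x, hx⟩ := (hbG.2 β hβcyc).exists
    refine ⟨x, fun f => ?_⟩
    have := hβ f
    rw [this, hx (c.pE f)]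
    rfl
  choose X hX using hXex
  -- matrices
  set Tm : Matrix (Fin g' ⊕ Fin m) (Fin n) ℤ := Matrix.of (fun k i => T k i) with hTm
  set T'm : Matrix (Fin n) (Fin g' ⊕ Fin m) ℤ := Matrix.of (fun j k => T' j k) with hT'm
  set Mm : Matrix (Fin g' ⊕ Fin m) (Fin n) ℤ := Matrix.of (fun k i => M k i) with hMm
  set W : Matrix (Fin g' ⊕ Fin m) (Fin g' ⊕ Fin m) ℤ :=
    Matrix.fromBlocks 1 0 (Matrix.of fun j i => - X j i) ((2:ℤ) • 1) with hW
  -- w in terms of v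
  have hwv : ∀ k f, Sum.elim u bP k f = ∑ l, W k l * Sum.elim u δ l f := by
    rintro (i | j) f
    · rw [Fintype.sum_sum_type]
      simp only [hW, Matrix.fromBlocks_apply₁₁, Matrix.fromBlocks_apply₁₂,
        Sum.elim_inl, Sum.elim_inr, Matrix.zero_apply, zero_mul,
        Finset.sum_const_zero, add_zero, Matrix.one_apply, ite_mul, one_mul, zero_mul]
      rw [Finset.sum_ite_eq]
      simp
    · rw [Fintype.sum_sum_type]
      simp only [hW, Matrix.fromBlocks_apply₂₁, Matrix.fromBlocks_apply₂₂,
        Sum.elim_inl, Sum.elim_inr, Matrix.of_apply, Matrix.smul_apply,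
        Matrix.one_apply, smul_ite, smul_eq_mul, mul_one, mul_zero, ite_mul, zero_mul]
      have h1 : ∑ i, -X j i * u i f = - (δ j f + δ j (c.ιE f)) := by
        have e1 : ∑ i, -X j i * u i f = -∑ i, X j i * u i f := by
          rw [← Finset.sum_neg_distrib]
          exact Finset.sum_congr rfl (fun i _ => by ring)
        rw [e1, ← hX j f]
      have h2 : ∑ x : Fin m, (2 * if j = x then (1:ℤ) else 0) * δ x f = 2 * δ j f := by
        have e2 : ∀ x : Fin m, (2 * if j = x then (1:ℤ) else 0) * δ x f
            = if j = x then 2 * δ x f else 0 := by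
          intro x
          by_cases h : j = x <;> simp [h]
        rw [Finset.sum_congr rfl (fun x _ => e2 x), Finset.sum_ite_eq]
        simp
      rw [h1, h2]
      have := hδeq j f
      omega

  -- a generic computation: substituting bH-coordinates into a v-expansion
  have hsubst : ∀ (a : (Fin g' ⊕ Fin m) → ℤ) (f : H.E),
      ∑ l, a l * Sum.elim u δ l f = ∑ i, (∑ l, a l * T l i) * bH i f := by
    intro a f
    calc ∑ l, a l * Sum.elim u δ l f
        = ∑ l, ∑ i, a l * T l i * bH i f := by
          refine Finset.sum_congr rfl (fun l _ => ?_)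
          rw [hT l f, Finset.mul_sum]
          exact Finset.sum_congr rfl (fun i _ => by ring)
      _ = ∑ i, ∑ l, a l * T l i * bH i f := Finset.sum_comm
      _ = ∑ i, (∑ l, a l * T l i) * bH i f := by
          refine Finset.sum_congr rfl (fun i _ => ?_)
          rw [Finset.sum_mul]
  have hMWT : Mm = W * Tm := by
    ext k i
    have hmul : ∀ i, (W * Tm) k i = ∑ l, W k l * T l i := fun i => Matrix.mul_apply
    have h1 : ∀ f, ∑ i, M k i * bH i f = ∑ i, (W * Tm) k i * bH i f := by
      intro f
      rw [← hM k f, hwv k f, hsubst (W k) f]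
      exact Finset.sum_congr rfl (fun i _ => by rw [hmul i])
    exact congrFun (repr_unique hbH (M k) ((W * Tm) k) h1) i
  have hT'T : T'm * Tm = 1 := by
    ext j i
    have hmul : ∀ i, (T'm * Tm) j i = ∑ l, T' j l * T l i := fun i => Matrix.mul_apply
    have h1 : ∀ f, ∑ i, (T'm * Tm) j i * bH i f
        = ∑ i, (fun i => if j = i then (1:ℤ) else 0) i * bH i f := by
      intro f
      have e1 : ∑ i, (fun i => if j = i then (1:ℤ) else 0) i * bH i f = bH j f := by
        simp only [ite_mul, one_mul, zero_mul]
        rw [Finset.sum_ite_eq]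
        simp
      rw [e1]
      have e3 : ∑ i, (T'm * Tm) j i * bH i f = ∑ l, T' j l * Sum.elim u δ l f := by
        rw [hsubst (T' j) f]
        exact Finset.sum_congr rfl (fun i _ => by rw [hmul i])
      rw [e3]
      exact (hT' j f).symm
    have h2 := repr_unique hbH ((T'm * Tm) j) (fun i => if j = i then (1:ℤ) else 0) h1
    rw [show ((T'm * Tm) j i) = ((T'm * Tm) j) i from rfl, h2]
    rw [Matrix.one_apply]
  -- determinant of M
  set Ts : Matrix (Fin g' ⊕ Fin m) (Fin g' ⊕ Fin m) ℤ := Tm.submatrix id eqv with hTs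
  set Ms : Matrix (Fin g' ⊕ Fin m) (Fin g' ⊕ Fin m) ℤ := Mm.submatrix id eqv with hMs
  have hdetM2 : (Ms.det)^2 = (2:ℤ)^(2*m) := by
    -- Ts is unimodular
    have hTsunit : IsUnit Ts.det := by
      have key : T'm.submatrix eqv (Equiv.refl _) * Tm.submatrix (Equiv.refl _) eqv
          = (T'm * Tm).submatrix eqv eqv :=
        Matrix.submatrix_mul_equiv T'm Tm eqv (Equiv.refl _) eqv
      rw [hT'T, Matrix.submatrix_one_equiv] at key
      have e1 : Tm.submatrix (⇑(Equiv.refl (Fin g' ⊕ Fin m))) ⇑eqv = Ts := by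
        rw [hTs]
        congr 1
      rw [e1] at key
      have := congrArg Matrix.det key
      rw [Matrix.det_mul, Matrix.det_one] at this
      exact IsUnit.of_mul_eq_one _ (mul_comm (Ts.det) _ ▸ this)
    -- Ms = W * Ts
    have hMsWT : Ms = W * Ts := by
      have key : W.submatrix id (⇑(Equiv.refl (Fin g' ⊕ Fin m)))
          * Tm.submatrix (⇑(Equiv.refl (Fin g' ⊕ Fin m))) eqv
          = (W * Tm).submatrix id eqv :=
        Matrix.submatrix_mul_equiv W Tm id (Equiv.refl _) eqv
      have e1 : Tm.submatrix (⇑(Equiv.refl (Fin g' ⊕ Fin m))) ⇑eqv = Ts := by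
        rw [hTs]; congr 1
      have e2 : W.submatrix id (⇑(Equiv.refl (Fin g' ⊕ Fin m))) = W := by
        have : (⇑(Equiv.refl (Fin g' ⊕ Fin m))) = id := rfl
        rw [this, Matrix.submatrix_id_id]
      rw [e1, e2] at key
      rw [hMs, hMWT, ← key]
    have hdetW : W.det = (2:ℤ)^m := by
      rw [hW, Matrix.det_fromBlocks_zero₁₂, Matrix.det_one, Matrix.det_smul,
        Matrix.det_one, Fintype.card_fin]
      simp
    have hsq : (Ts.det)^2 = 1 := by
      rcases Int.isUnit_iff.mp hTsunit with h | h <;> rw [h] <;> ring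
    rw [hMsWT, Matrix.det_mul, mul_pow, hdetW, hsq, mul_one, ← pow_mul, mul_comm m 2]
  -- Gram matrices
  have hGramA : (Matrix.of fun k l => ∑ f,
        ((Sum.elim u bP k f * Sum.elim u bP l f : ℤ) : ℝ) * ℓ (c.pE f))
      = (Ms.map (Int.cast : ℤ → ℝ))
          * ((Matrix.of fun i j : Fin n =>
              ∑ f : H.E, ((bH i f * bH j f : ℤ) : ℝ) * ℓ (c.pE f)).submatrix eqv eqv)
          * (Ms.map (Int.cast : ℤ → ℝ))ᵀ := by
    have hG := gram_transform (E := H.E)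
      (fun k f => ((Sum.elim u bP k f : ℤ) : ℝ))
      (fun k' f => ((bH (eqv k') f : ℤ) : ℝ))
      (Ms.map (Int.cast : ℤ → ℝ))
      (fun f => ℓ (c.pE f))
      (by
        intro k f
        show ((Sum.elim u bP k f : ℤ) : ℝ)
          = ∑ i, (Ms.map (Int.cast : ℤ → ℝ)) k i * ((bH (eqv i) f : ℤ) : ℝ)
        have h1 : ((Sum.elim u bP k f : ℤ) : ℝ) = ∑ i, (M k i : ℝ) * (bH i f : ℝ) := by
          have := congrArg (Int.cast : ℤ → ℝ) (hM k f)
          push_cast at this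
          exact this
        rw [h1]
        refine (Fintype.sum_equiv eqv _ _ (fun k' => ?_)).symm
        have e1 : (Ms.map (Int.cast : ℤ → ℝ)) k k' = ((M k (eqv k') : ℤ) : ℝ) := rfl
        rw [e1])
    have e2 : (Matrix.of fun k l => ∑ f,
        ((Sum.elim u bP k f * Sum.elim u bP l f : ℤ) : ℝ) * ℓ (c.pE f))
        = Matrix.of (fun k l => ∑ f, ((Sum.elim u bP k f : ℤ) : ℝ)
            * ((Sum.elim u bP l f : ℤ) : ℝ) * ℓ (c.pE f)) := by
      ext k l
      refine Finset.sum_congr rfl (fun f _ => ?_)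
      push_cast
      ring
    have e3 : (Matrix.of fun (k' l' : Fin g' ⊕ Fin m) =>
          ∑ f, ((bH (eqv k') f : ℤ) : ℝ) * ((bH (eqv l') f : ℤ) : ℝ) * ℓ (c.pE f))
        = ((Matrix.of fun i j : Fin n =>
              ∑ f : H.E, ((bH i f * bH j f : ℤ) : ℝ) * ℓ (c.pE f)).submatrix eqv eqv) := by
      ext k' l'
      simp only [Matrix.submatrix_apply, Matrix.of_apply]
      refine Finset.sum_congr rfl (fun f _ => ?_)
      push_cast
      ring
    rw [e2, hG, e3]
  have hGramB : (Matrix.of fun k l => ∑ f,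
        ((Sum.elim u bP k f * Sum.elim u bP l f : ℤ) : ℝ) * ℓ (c.pE f))
      = Matrix.fromBlocks
          ((2:ℝ) • Matrix.of fun i j : Fin g' =>
            ∑ e : G.E, ((bG i e * bG j e : ℤ) : ℝ) * ℓ e)
          0 0
          ((2:ℝ) • Matrix.of fun i j : Fin m =>
            (1/2:ℝ) * ∑ f : H.E, ((bP i f * bP j f : ℤ) : ℝ) * ℓ (c.pE f)) := by
    ext k l
    rcases k with i | j <;> rcases l with i' | j'
    · -- both pulled back: factor 2
      show ∑ f, ((u i f * u i' f : ℤ) : ℝ) * ℓ (c.pE f) = _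
      have e1 : ∀ f, ((u i f * u i' f : ℤ) : ℝ) * ℓ (c.pE f)
          = (fun e => ((bG i e * bG i' e : ℤ) : ℝ) * ℓ e) (c.pE f) := fun f => rfl
      rw [Finset.sum_congr rfl (fun f _ => e1 f),
        sum_pull c (fun e => ((bG i e * bG i' e : ℤ) : ℝ) * ℓ e)]
      simp only [Matrix.fromBlocks_apply₁₁, Matrix.smul_apply, Matrix.of_apply,
        smul_eq_mul]
      rw [Finset.sum_add_distrib]
      ring
    · -- cross terms vanish
      show ∑ f, ((u i f * bP j' f : ℤ) : ℝ) * ℓ (c.pE f) = _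
      have e1 : ∀ f, ((u i f * bP j' f : ℤ) : ℝ) * ℓ (c.pE f)
          = (fun e => ((bG i e : ℤ) : ℝ) * ℓ e) (c.pE f) * ((bP j' f : ℤ) : ℝ) := by
        intro f
        show ((bG i (c.pE f) * bP j' f : ℤ) : ℝ) * ℓ (c.pE f) = _
        push_cast
        ring
      rw [Finset.sum_congr rfl (fun f _ => e1 f),
        sum_pull_mul c (fun e => ((bG i e : ℤ) : ℝ) * ℓ e) (bP j'), (hbP.1 j').2]
      simp [Matrix.fromBlocks_apply₁₂]
    · -- cross terms vanish
      show ∑ f, ((bP j f * u i' f : ℤ) : ℝ) * ℓ (c.pE f) = _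
      have e1 : ∀ f, ((bP j f * u i' f : ℤ) : ℝ) * ℓ (c.pE f)
          = (fun e => ((bG i' e : ℤ) : ℝ) * ℓ e) (c.pE f) * ((bP j f : ℤ) : ℝ) := by
        intro f
        show ((bP j f * bG i' (c.pE f) : ℤ) : ℝ) * ℓ (c.pE f) = _
        push_cast
        ring
      rw [Finset.sum_congr rfl (fun f _ => e1 f),
        sum_pull_mul c (fun e => ((bG i' e : ℤ) : ℝ) * ℓ e) (bP j), (hbP.1 j).2]
      simp [Matrix.fromBlocks_apply₂₁]
    · -- Prym block
      show ∑ f, ((bP j f * bP j' f : ℤ) : ℝ) * ℓ (c.pE f) = _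
      simp only [Matrix.fromBlocks_apply₂₂, Matrix.smul_apply, Matrix.of_apply,
        smul_eq_mul]
      ring
  -- put it together
  have hdet := congrArg Matrix.det hGramA
  rw [hGramB] at hdet
  rw [Matrix.det_fromBlocks_zero₁₂, Matrix.det_mul, Matrix.det_mul,
    Matrix.det_transpose, Matrix.det_submatrix_equiv_self] at hdet
  have hsmulG : ((2:ℝ) • Matrix.of fun i j : Fin g' =>
      ∑ e : G.E, ((bG i e * bG j e : ℤ) : ℝ) * ℓ e).det
      = (2:ℝ)^g' * (Matrix.of fun i j : Fin g' =>
      ∑ e : G.E, ((bG i e * bG j e : ℤ) : ℝ) * ℓ e).det := by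
    rw [Matrix.det_smul, Fintype.card_fin]
  have hsmulP : ((2:ℝ) • Matrix.of fun i j : Fin m =>
      (1/2:ℝ) * ∑ f : H.E, ((bP i f * bP j f : ℤ) : ℝ) * ℓ (c.pE f)).det
      = (2:ℝ)^m * (Matrix.of fun i j : Fin m =>
      (1/2:ℝ) * ∑ f : H.E, ((bP i f * bP j f : ℤ) : ℝ) * ℓ (c.pE f)).det := by
    rw [Matrix.det_smul, Fintype.card_fin]
  have hmapdet : (Ms.map (Int.cast : ℤ → ℝ)).det = ((Ms.det : ℤ) : ℝ) :=
    (RingHom.map_det (Int.castRingHom ℝ) Ms).symm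
  rw [hsmulG, hsmulP, hmapdet] at hdet
  have hM2 : ((Ms.det : ℤ) : ℝ) * ((Ms.det : ℤ) : ℝ) = (2:ℝ)^(2*m) := by
    have := congrArg (Int.cast : ℤ → ℝ) hdetM2
    simp only [Int.cast_pow, Int.cast_ofNat] at this
    rw [← this]
    ring
  rw [hdet, ← hM2]
  ring

end PrymVolAux

/-- For a connected free double cover `π : Γ̃ → Γ` of metric
graphs of genera `2g - 1` and `g`, the volumes (squared Gram determinants with
respect to the intrinsic principal polarizations; the Prym pairing is half the
restriction of the pairing of `Jac(Γ̃)`) satisfy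
`Vol²(Prym(Γ̃/Γ)) = Vol²(Jac(Γ̃)) / (2 · Vol²(Jac(Γ)))`. -/
theorem vol_sq_Prym_eq_vol_sq_ratio
    (G H : Multigraph) (hG : G.Connected) (hH : H.Connected)
    (c : FreeDoubleCover H G)
    (g : ℕ) (hg1 : 1 ≤ g) (hg : G.genus = g)
    (ℓ : G.E → ℝ) (hℓ : ∀ e, 0 < ℓ e)
    (bG : Fin g → (G.E → ℤ)) (hbG : IsCycleBasis G g bG)
    (bH : Fin (2 * g - 1) → (H.E → ℤ)) (hbH : IsCycleBasis H (2 * g - 1) bH)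
    (bP : Fin (g - 1) → (H.E → ℤ)) (hbP : IsPrymBasis c (g - 1) bP) :
    Matrix.det (Matrix.of fun i j : Fin (g - 1) =>
        (1 / 2 : ℝ) * ∑ f : H.E, ((bP i f * bP j f : ℤ) : ℝ) * ℓ (c.pE f)) *
      (2 * Matrix.det (Matrix.of fun i j : Fin g =>
        ∑ e : G.E, ((bG i e * bG j e : ℤ) : ℝ) * ℓ e)) =
    Matrix.det (Matrix.of fun i j : Fin (2 * g - 1) =>
        ∑ f : H.E, ((bH i f * bH j f : ℤ) : ℝ) * ℓ (c.pE f)) := by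
  classical
  have hn : g + (g - 1) = 2 * g - 1 := by omega
  have key := PrymVolAux.main_aux c hH (finSumFinEquiv.trans (finCongr hn))
    ℓ bG hbG bH hbH bP hbP
  have h2 : ((2:ℝ)^(2*(g-1))) ≠ 0 := pow_ne_zero _ two_ne_zero
  apply mul_left_cancel₀ h2
  rw [key]
  have hpow : (2:ℝ)^g = 2 * (2:ℝ)^(g-1) := by
    have hg2 : g = (g-1) + 1 := by omega
    conv_lhs => rw [hg2]
    rw [pow_succ]
    ring
  have hpow2 : (2:ℝ)^(2*(g-1)) = (2:ℝ)^(g-1) * (2:ℝ)^(g-1) := by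
    rw [two_mul, pow_add]
  rw [hpow, hpow2]
  ring
end
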